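/- arXiv:1410.1504 — 13 statements merged into one kernel-verified Lean document; each statement's English description precedes it below -/
import Mathlib

section
/- Let X be a set equipped with two structures: a topological space structure t and a uniform space structure 𝓤 such that the topology induced by 𝓤 is coarser than t (i.e., every set open in the uniform topology is t-open; equivalently the identity map from (X,t) to X with the uniform topology is continuous). Then 𝓤 is normal with respect to t: for every subset A ⊆ X and every entourage U ∈ 𝓤, the t-closure of A is contained in the t-interior of the t-closure of the set B(A;U) = {y ∈ X : ∃ a ∈ A, (a,y) ∈ U}. -/
open Topology Uniformity

theorem interior_subset_interior_of_le {α : Type*} {t₁ t₂ : TopologicalSpace α} (h : t₁ ≤ t₂)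
    (s : Set α) : @interior α t₂ s ⊆ @interior α t₁ s :=
  @interior_maximal α t₁ _ _ (@interior_subset α t₂ s) (h _ (@isOpen_interior α t₂ s))

theorem UniformSpace.closure_subset_interior_image {α : Type*} [UniformSpace α]
    {U : SetRel α α} (hU : U ∈ 𝓤 α) (s : Set α) : closure s ⊆ interior (U.image s) := by
  obtain ⟨V, hV, hVU⟩ := comp_mem_uniformity_sets hU
  refine (closure_subset_image hV s).trans fun y ⟨a, ha, hay⟩ ↦ mem_interior_iff_mem_nhds.2 ?_
  exact Filter.mem_of_superset (ball_mem_nhds y hV)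
    fun z hz ↦ ⟨a, ha, hVU (SetRel.prodMk_mem_comp hay hz)⟩

/-- A continuous uniformity on a topological space is normal:
if every set open in the topology induced by the uniform structure `u` is open
in the topology `t`, then for every `A ⊆ X` and every entourage `U` of `u`,
the `t`-closure of `A` is contained in the `t`-interior of the `t`-closure of
the `U`-neighborhood `B(A;U) = {y | ∃ a ∈ A, (a,y) ∈ U}` of `A`. -/
theorem continuous_uniformity_is_normal {X : Type*} [t : TopologicalSpace X]
    (u : UniformSpace X)
    (hcont : ∀ s : Set X, IsOpen[u.toTopologicalSpace] s → IsOpen s)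
    (A : Set X) (U : Set (X × X)) (hU : U ∈ @uniformity X u) :
    closure A ⊆ interior (closure {y : X | ∃ a ∈ A, (a, y) ∈ U}) :=
  calc closure A
    _ ⊆ closure[u.toTopologicalSpace] A := closure.mono hcont
    _ ⊆ @interior X u.toTopologicalSpace (SetRel.image U A) :=
      @UniformSpace.closure_subset_interior_image X u U hU A
    _ ⊆ interior (SetRel.image U A) := interior_subset_interior_of_le hcont _
    _ ⊆ interior (closure (SetRel.image U A)) := interior_mono subset_closure
end

section
/- Let X be a topological space and let 𝓤 be a filter on X × X that is a quasi-uniformity (every U ∈ 𝓤 contains the diagonal, and for every U ∈ 𝓤 there exists V ∈ 𝓤 with V ∘ V ⊆ U) and is normal with respect to the topology of X. Then for every nonempty subset A ⊆ X and every entourage U ∈ 𝓤 there exists a continuous function f : X → ℝ with values in [0,1] such that A ⊆ f⁻¹({0}) and {x ∈ X : f x < 1} ⊆ interior(closure(B(A;U))), where B(A;U) = {y ∈ X : ∃ a ∈ A, (a,y) ∈ U}. -/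
/-!
Iterating the composition axiom from `U` gives entourages `V₀ = U` and `V (n+1) ○ V (n+1) ⊆ V n`.
To a dyadic `r = 2⁻¹ ^ i₁ + ⋯ + 2⁻¹ ^ iₘ ∈ [0, 1]` attach `G r = B(A; V i₁ ○ ⋯ ○ V iₘ)`, with
`G 0 = A`. Then `B(G (k / 2ⁿ); V n) ⊆ G ((k + 1) / 2ⁿ)`, so normality yields
`closure (G r) ⊆ interior (closure (G s))` for `r < s`: the open sets `interior (closure (G r))`
form a Urysohn scale, and `f x = inf ({1} ∪ {r | x ∈ interior (closure (G r))})` is continuous.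
It vanishes on `A = G 0`, which lies in `interior (closure (G 2⁻ⁿ))` for every `n`, and `f x < 1`
forces `x ∈ interior (closure (G 1))`, where `G 1 = B(A; U)`.
-/

open Topology

/-- `B(A;U)`, the `U`-neighborhood of a set `A`. -/
def setBall {X : Type*} (A : Set X) (U : Set (X × X)) : Set X :=
  {y : X | ∃ a ∈ A, (a, y) ∈ U}

/-- A quasi-uniformity on `X` is a filter on `X × X` all of whose members contain
the diagonal, such that every member `U` contains a composition `V ○ V ⊆ U` of
some member `V` with itself. -/
def IsQuasiUniformity {X : Type*} (𝓤 : Filter (X × X)) : Prop :=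
  (∀ U ∈ 𝓤, SetRel.id ⊆ U) ∧ (∀ U ∈ 𝓤, ∃ V ∈ 𝓤, SetRel.comp V V ⊆ U)

/-- A quasi-uniformity on a topological space is normal if
`closure A ⊆ interior (closure B(A;U))` for all `A` and all entourages `U`. -/
def IsNormalQuasiUniformity {X : Type*} [TopologicalSpace X]
    (𝓤 : Filter (X × X)) : Prop :=
  ∀ A : Set X, ∀ U ∈ 𝓤, closure A ⊆ interior (closure (setBall A U))

section UrysohnInf

variable {ι X : Type*}

/-- The `1` caps the value and avoids the junk value `sInf ∅ = 0` at points lying in no `O i`. -/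
noncomputable def urysohnInf (q : ι → ℝ) (O : ι → Set X) (x : X) : ℝ :=
  sInf (insert 1 (q '' {i | x ∈ O i}))

variable {q : ι → ℝ} {O : ι → Set X}

lemma bddBelow_insert_one_image (hq : ∀ i, 0 ≤ q i) (x : X) :
    BddBelow (insert (1 : ℝ) (q '' {i | x ∈ O i})) := by
  refine ⟨0, ?_⟩
  rintro _ (rfl | ⟨i, -, rfl⟩)
  exacts [zero_le_one, hq i]

lemma le_urysohnInf {x : X} {r : ℝ} (hr : r ≤ 1) (h : ∀ i, x ∈ O i → r ≤ q i) :
    r ≤ urysohnInf q O x := by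
  refine le_csInf (Set.insert_nonempty _ _) ?_
  rintro _ (rfl | ⟨i, hi, rfl⟩)
  exacts [hr, h i hi]

lemma urysohnInf_nonneg (hq : ∀ i, 0 ≤ q i) (x : X) : 0 ≤ urysohnInf q O x :=
  le_urysohnInf zero_le_one fun i _ => hq i

lemma urysohnInf_le_one (hq : ∀ i, 0 ≤ q i) (x : X) : urysohnInf q O x ≤ 1 :=
  csInf_le (bddBelow_insert_one_image hq x) (Set.mem_insert _ _)

lemma urysohnInf_le (hq : ∀ i, 0 ≤ q i) {x : X} {i : ι} (hx : x ∈ O i) :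
    urysohnInf q O x ≤ q i :=
  csInf_le (bddBelow_insert_one_image hq x) (Set.mem_insert_of_mem _ ⟨i, hx, rfl⟩)

lemma exists_mem_of_urysohnInf_lt {x : X} {b : ℝ} (h : urysohnInf q O x < b) :
    1 < b ∨ ∃ i, x ∈ O i ∧ q i < b := by
  obtain ⟨r, hr, hrb⟩ := exists_lt_of_csInf_lt (Set.insert_nonempty _ _) h
  rcases hr with rfl | ⟨i, hi, rfl⟩
  exacts [Or.inl hrb, Or.inr ⟨i, hi, hrb⟩]

variable [TopologicalSpace X]

lemma upperSemicontinuous_urysohnInf (hq : ∀ i, 0 ≤ q i) (hO : ∀ i, IsOpen (O i)) :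
    UpperSemicontinuous (urysohnInf q O) := by
  intro x b hb
  rcases exists_mem_of_urysohnInf_lt hb with h1 | ⟨i, hxi, hib⟩
  · exact .of_forall fun y => (urysohnInf_le_one hq y).trans_lt h1
  · filter_upwards [(hO i).mem_nhds hxi] with y hy using (urysohnInf_le hq hy).trans_lt hib

lemma lowerSemicontinuous_urysohnInf (hq : ∀ i, 0 ≤ q i)
    (hOq : ∀ i j, q i < q j → q j ≤ 1 → closure (O i) ⊆ O j)
    (hdense : ∀ a b, 0 ≤ a → a < b → ∃ i, a < q i ∧ q i < b) :
    LowerSemicontinuous (urysohnInf q O) := by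
  intro x a ha
  rcases lt_or_ge a 0 with ha0 | ha0
  · exact .of_forall fun y => ha0.trans_le (urysohnInf_nonneg hq y)
  obtain ⟨j, haj, hjx⟩ := hdense a _ ha0 ha
  obtain ⟨i, hai, hij⟩ := hdense a _ ha0 haj
  have hj1 : q j ≤ 1 := hjx.le.trans (urysohnInf_le_one hq x)
  have hxi : x ∉ closure (O i) := fun h =>
    (urysohnInf_le hq (hOq i j hij hj1 h)).not_gt hjx
  filter_upwards [isClosed_closure.isOpen_compl.mem_nhds hxi] with y hy
  refine hai.trans_le (le_urysohnInf (hij.le.trans hj1) fun t hyt => ?_)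
  by_contra! hti
  exact hy (subset_closure (hOq t i hti (hij.le.trans hj1) (subset_closure hyt)))

lemma continuous_urysohnInf (hq : ∀ i, 0 ≤ q i) (hO : ∀ i, IsOpen (O i))
    (hOq : ∀ i j, q i < q j → q j ≤ 1 → closure (O i) ⊆ O j)
    (hdense : ∀ a b, 0 ≤ a → a < b → ∃ i, a < q i ∧ q i < b) :
    Continuous (urysohnInf q O) :=
  continuous_iff_lower_upperSemicontinuous.2
    ⟨lowerSemicontinuous_urysohnInf hq hOq hdense, upperSemicontinuous_urysohnInf hq hO⟩

end UrysohnInf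

lemma exists_dyadic_btwn {a b : ℝ} (ha : 0 ≤ a) (hab : a < b) :
    ∃ n k : ℕ, a < k / 2 ^ n ∧ (k : ℝ) / 2 ^ n < b := by
  obtain ⟨n, hn⟩ := exists_pow_lt_of_lt_one (sub_pos.2 hab) (by norm_num : (1 / 2 : ℝ) < 1)
  have h2n : (0 : ℝ) < 2 ^ n := by positivity
  refine ⟨n, ⌊a * 2 ^ n⌋₊ + 1, ?_, ?_⟩
  · rw [lt_div_iff₀ h2n]
    exact_mod_cast Nat.lt_floor_add_one (a * 2 ^ n)
  · rw [div_lt_iff₀ h2n]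
    rw [div_pow, one_pow, div_lt_iff₀ h2n] at hn
    have := Nat.floor_le (show 0 ≤ a * 2 ^ n by positivity)
    push_cast
    linarith

section DyadicBall

variable {X : Type*}

lemma setBall_mono {A : Set X} {U V : Set (X × X)} (h : U ⊆ V) : setBall A U ⊆ setBall A V :=
  fun _ ⟨a, ha, hu⟩ => ⟨a, ha, h hu⟩

lemma setBall_setBall (A : Set X) (U V : Set (X × X)) :
    setBall (setBall A U) V = setBall A (SetRel.comp U V) := by
  ext y
  constructor
  · rintro ⟨b, ⟨a, ha, hab⟩, hby⟩
    exact ⟨a, ha, b, hab, hby⟩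
  · rintro ⟨a, ha, b, hab, hby⟩
    exact ⟨b, ⟨a, ha, hab⟩, hby⟩

lemma IsQuasiUniformity.exists_seq_comp_subset {𝓤 : Filter (X × X)} (hq : IsQuasiUniformity 𝓤)
    {U : Set (X × X)} (hU : U ∈ 𝓤) :
    ∃ V : ℕ → Set (X × X), V 0 = U ∧ (∀ n, V n ∈ 𝓤) ∧
      ∀ n, SetRel.comp (V (n + 1)) (V (n + 1)) ⊆ V n := by
  choose! W hW hWW using hq.2
  have hmem : ∀ n, W^[n] U ∈ 𝓤 := by
    intro n
    induction n with
    | zero => exact hU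
    | succ n ih => rw [Function.iterate_succ_apply']; exact hW _ ih
  refine ⟨fun n => W^[n] U, rfl, hmem, fun n => ?_⟩
  simpa only [Function.iterate_succ_apply'] using hWW _ (hmem n)

/-- For `k ≤ 2 ^ n`, `dyadicBall A V n k = B(A; V i₁ ○ ⋯ ○ V iₘ)` where
`k / 2 ^ n = 2⁻¹ ^ i₁ + ⋯ + 2⁻¹ ^ iₘ` with `i₁ < ⋯ < iₘ`. -/
def dyadicBall (A : Set X) (V : ℕ → Set (X × X)) : ℕ → ℕ → Set X
  | 0, k => if k = 0 then A else setBall A (V 0)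
  | n + 1, k =>
    if k % 2 = 0 then dyadicBall A V n (k / 2) else setBall (dyadicBall A V n (k / 2)) (V (n + 1))

variable (A : Set X) (V : ℕ → Set (X × X))

lemma dyadicBall_two_mul (n k : ℕ) : dyadicBall A V (n + 1) (2 * k) = dyadicBall A V n k := by
  simp [dyadicBall]

lemma dyadicBall_two_mul_add_one (n k : ℕ) :
    dyadicBall A V (n + 1) (2 * k + 1) = setBall (dyadicBall A V n k) (V (n + 1)) := by
  simp [dyadicBall, Nat.add_mod, Nat.mul_add_div]

lemma dyadicBall_add_mul_two_pow (n k p : ℕ) :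
    dyadicBall A V (n + p) (k * 2 ^ p) = dyadicBall A V n k := by
  induction p with
  | zero => simp
  | succ p ih => rw [← add_assoc, pow_succ', mul_left_comm, dyadicBall_two_mul, ih]

lemma dyadicBall_zero_right (n : ℕ) : dyadicBall A V n 0 = A := by
  simpa [dyadicBall] using dyadicBall_add_mul_two_pow A V 0 0 n

variable {A V}

lemma setBall_dyadicBall_subset (hV : ∀ n, SetRel.comp (V (n + 1)) (V (n + 1)) ⊆ V n) :
    ∀ {n k : ℕ}, k < 2 ^ n → setBall (dyadicBall A V n k) (V n) ⊆ dyadicBall A V n (k + 1)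
  | 0, 0, _ => by simp [dyadicBall]
  | n + 1, k, hk => by
    obtain ⟨j, rfl | rfl⟩ := Nat.even_or_odd' k
    · rw [dyadicBall_two_mul, dyadicBall_two_mul_add_one]
    · rw [dyadicBall_two_mul_add_one, show 2 * j + 1 + 1 = 2 * (j + 1) by ring,
        dyadicBall_two_mul, setBall_setBall]
      exact (setBall_mono (hV n)).trans (setBall_dyadicBall_subset hV (by omega))

end DyadicBall

section NormalQuasiUniformity

variable {X : Type*} [TopologicalSpace X] {𝓤 : Filter (X × X)} {A : Set X}
  {V : ℕ → Set (X × X)}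

lemma closure_dyadicBall_subset (hn : IsNormalQuasiUniformity 𝓤) (hV : ∀ n, V n ∈ 𝓤)
    (hVV : ∀ n, SetRel.comp (V (n + 1)) (V (n + 1)) ⊆ V n) {n a b : ℕ} (hab : a < b)
    (hb : b ≤ 2 ^ n) :
    closure (dyadicBall A V n a) ⊆ interior (closure (dyadicBall A V n b)) := by
  have step : ∀ c < 2 ^ n,
      closure (dyadicBall A V n c) ⊆ interior (closure (dyadicBall A V n (c + 1))) := fun c hc =>
    (hn _ _ (hV n)).trans (interior_mono (closure_mono (setBall_dyadicBall_subset hVV hc)))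
  induction b, hab using Nat.le_induction with
  | base => exact step a hb
  | succ b hab ih =>
    exact (ih (by omega)).trans (interior_subset.trans (step b hb))

lemma closure_interior_closure_dyadicBall_subset (hn : IsNormalQuasiUniformity 𝓤)
    (hV : ∀ n, V n ∈ 𝓤) (hVV : ∀ n, SetRel.comp (V (n + 1)) (V (n + 1)) ⊆ V n)
    {m j n k : ℕ} (hjk : (j : ℝ) / 2 ^ m < k / 2 ^ n) (hk : (k : ℝ) / 2 ^ n ≤ 1) :
    closure (interior (closure (dyadicBall A V m j))) ⊆
      interior (closure (dyadicBall A V n k)) := by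
  rw [div_lt_div_iff₀ (by positivity) (by positivity)] at hjk
  rw [div_le_one (by positivity)] at hk
  have hjk' : j * 2 ^ n < k * 2 ^ m := by exact_mod_cast hjk
  have hk' : k * 2 ^ m ≤ 2 ^ (m + n) := by
    rw [add_comm, pow_add]
    exact Nat.mul_le_mul_right _ (by exact_mod_cast hk)
  rw [← dyadicBall_add_mul_two_pow A V m j n, ← dyadicBall_add_mul_two_pow A V n k m, add_comm n]
  exact ((closure_mono interior_subset).trans_eq closure_closure).trans
    (closure_dyadicBall_subset hn hV hVV hjk' hk')

end NormalQuasiUniformity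

theorem exists_urysohn_function_of_normal_quasiUniformity_general {X : Type*}
    [TopologicalSpace X] (𝓤 : Filter (X × X)) (hq : IsQuasiUniformity 𝓤)
    (hn : IsNormalQuasiUniformity 𝓤) (A : Set X)
    (U : Set (X × X)) (hU : U ∈ 𝓤) :
    ∃ f : X → ℝ, Continuous f ∧ (∀ x, f x ∈ Set.Icc (0 : ℝ) 1) ∧
      A ⊆ f ⁻¹' {0} ∧ {x : X | f x < 1} ⊆ interior (closure (setBall A U)) := by
  obtain ⟨V, rfl, hV, hVV⟩ := hq.exists_seq_comp_subset hU
  set q : ℕ × ℕ → ℝ := fun p => p.2 / 2 ^ p.1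
  set O : ℕ × ℕ → Set X := fun p => interior (closure (dyadicBall A V p.1 p.2))
  have hq0 : ∀ i, 0 ≤ q i := fun _ => by positivity
  have hOq : ∀ i j, q i < q j → q j ≤ 1 → closure (O i) ⊆ O j := fun _ _ =>
    closure_interior_closure_dyadicBall_subset hn hV hVV
  have hdense : ∀ a b, 0 ≤ a → a < b → ∃ i, a < q i ∧ q i < b := fun _ _ ha hab => by
    obtain ⟨n, k, h⟩ := exists_dyadic_btwn ha hab
    exact ⟨(n, k), h⟩
  refine ⟨urysohnInf q O, continuous_urysohnInf hq0 (fun _ => isOpen_interior) hOq hdense,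
    fun x => ⟨urysohnInf_nonneg hq0 x, urysohnInf_le_one hq0 x⟩, fun x hx => ?_, fun x hx => ?_⟩
  · have hxO : ∀ n, x ∈ O (n, 1) := fun n =>
      closure_dyadicBall_subset hn hV hVV zero_lt_one Nat.one_le_two_pow
        (subset_closure ((dyadicBall_zero_right A V n).symm ▸ hx))
    have hsmall : ∀ n, urysohnInf q O x ≤ (1 / 2) ^ n := fun n => by
      simpa [q] using urysohnInf_le hq0 (hxO n)
    exact le_antisymm
      (ge_of_tendsto' (tendsto_pow_atTop_nhds_zero_of_lt_one (by norm_num) (by norm_num)) hsmall)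
      (urysohnInf_nonneg hq0 x)
  · rcases exists_mem_of_urysohnInf_lt hx with h | ⟨i, hxi, hi⟩
    · exact absurd h (lt_irrefl 1)
    · simpa [O, dyadicBall] using hOq i (0, 1) (by simpa [q] using hi) (by simp [q])
        (subset_closure hxi)

/-- Theorem `main`. If `𝓤` is a normal quasi-uniformity on a
topological space `X`, then for every nonempty `A ⊆ X` and every entourage
`U ∈ 𝓤` there is a continuous `f : X → [0,1] ⊆ ℝ` with `A ⊆ f⁻¹(0)` and
`{f < 1} ⊆ interior (closure B(A;U))`. -/
theorem exists_urysohn_function_of_normal_quasiUniformity {X : Type*}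
    [TopologicalSpace X] (𝓤 : Filter (X × X)) (hq : IsQuasiUniformity 𝓤)
    (hn : IsNormalQuasiUniformity 𝓤) (A : Set X) (hA : A.Nonempty)
    (U : Set (X × X)) (hU : U ∈ 𝓤) :
    ∃ f : X → ℝ, Continuous f ∧ (∀ x, f x ∈ Set.Icc (0 : ℝ) 1) ∧
      A ⊆ f ⁻¹' {0} ∧ {x : X | f x < 1} ⊆ interior (closure (setBall A U)) :=
  exists_urysohn_function_of_normal_quasiUniformity_general 𝓤 hq hn A U hU
end

section
/- Let X be a topological space whose topology is generated by a normal quasi-uniformity (i.e., there exists a quasi-uniformity 𝓤 on X which is normal and such that for every x ∈ X the sets B(x;U) = {y : (x,y) ∈ U}, U ∈ 𝓤, form a neighborhood base at x). If X is semi-Hausdorff, then X is functionally Hausdorff. -/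
open Topology

/-- A quasi-uniformity generates the topology of `X` if for every `x` the
neighborhood filter of `x` is the filter generated by the balls
`B(x;U) = {y | (x,y) ∈ U}`, `U ∈ 𝓤`. -/
def GeneratesTopology {X : Type*} [TopologicalSpace X]
    (𝓤 : Filter (X × X)) : Prop :=
  ∀ x : X, 𝓝 x = 𝓤.lift' (fun U => {y : X | (x, y) ∈ U})

/-!
Urysohn's lemma, with normality of the quasi-uniformity doing the work of normality of the
space: if `W ○ W ⊆ V` then `closure B(A;W) ⊆ interior (closure B(A;V))`, so pairs of the form
`closure A ⊆ interior (closure B(A;V))` can be interpolated again and again, and Mathlib's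
construction `Urysohns.CU` yields a continuous function that is `0` on `closure A` and `1`
off `interior (closure B(A;V))`. For `x ≠ y`, semi-Hausdorffness provides a ball `B(x;V)`
with `y ∉ interior (closure B(x;V))`.
-/

section setBall

variable {X : Type*}

theorem setBall_singleton (x : X) (U : Set (X × X)) : setBall {x} U = {y | (x, y) ∈ U} := by
  ext y
  simp [setBall]

theorem subset_setBall {A : Set X} {U : Set (X × X)} (h : SetRel.id ⊆ U) : A ⊆ setBall A U :=
  fun a ha => ⟨a, ha, h rfl⟩

theorem setBall_setBall_subset {A : Set X} {U V W : Set (X × X)} (h : SetRel.comp V W ⊆ U) :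
    setBall (setBall A V) W ⊆ setBall A U := by
  rintro z ⟨b, ⟨a, ha, hab⟩, hbz⟩
  exact ⟨a, ha, h ⟨b, hab, hbz⟩⟩

end setBall

namespace IsNormalQuasiUniformity

variable {X : Type*} [TopologicalSpace X] {𝓤 : Filter (X × X)}

theorem closure_setBall_subset (hnorm : IsNormalQuasiUniformity 𝓤) (A : Set X)
    {V W : Set (X × X)} (hW : W ∈ 𝓤) (hWV : SetRel.comp W W ⊆ V) :
    closure (setBall A W) ⊆ interior (closure (setBall A V)) :=
  (hnorm _ W hW).trans (interior_mono (closure_mono (setBall_setBall_subset hWV)))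

/-- The pairs `c ⊆ u` fed to `Urysohns.CU`. The set `A` is kept apart from `c ⊇ closure A`
because, the entourages not being symmetric, balls around a closure are not controlled. -/
def IsThickening (𝓤 : Filter (X × X)) (c u : Set X) : Prop :=
  ∃ A : Set X, ∃ V ∈ 𝓤, c ⊆ closure A ∧ closure (setBall A V) ⊆ u

/-- With `W ○ W ⊆ V`, the open set `v = interior (closure B(A;W))` splits `c ⊆ u`: the inner
pair is witnessed by `A` and a square root of `W`, the outer one by `B(A;W)` and `W`. -/
theorem IsThickening.exists_between (hnorm : IsNormalQuasiUniformity 𝓤)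
    (h𝓤 : IsQuasiUniformity 𝓤) {c u : Set X} (h : IsThickening 𝓤 c u) :
    ∃ v, IsOpen v ∧ c ⊆ v ∧ closure v ⊆ u ∧ IsThickening 𝓤 c v ∧
      IsThickening 𝓤 (closure v) u := by
  obtain ⟨A, V, hV, hcA, hAu⟩ := h
  obtain ⟨W, hW, hWV⟩ := h𝓤.2 V hV
  obtain ⟨W', hW', hW'W⟩ := h𝓤.2 W hW
  have hBBV : setBall (setBall A W) W ⊆ setBall A V := setBall_setBall_subset hWV
  have hBV : setBall A W ⊆ setBall A V := (subset_setBall (h𝓤.1 W hW)).trans hBBV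
  have hclosure_v : closure (interior (closure (setBall A W))) ⊆ closure (setBall A W) :=
    isClosed_closure.closure_interior_subset
  exact ⟨interior (closure (setBall A W)), isOpen_interior, hcA.trans (hnorm A W hW),
    hclosure_v.trans ((closure_mono hBV).trans hAu),
    ⟨A, W', hW', hcA, hnorm.closure_setBall_subset A hW' hW'W⟩,
    ⟨setBall A W, W, hW, hclosure_v, (closure_mono hBBV).trans hAu⟩⟩

theorem exists_continuous_zero_one (hnorm : IsNormalQuasiUniformity 𝓤)
    (h𝓤 : IsQuasiUniformity 𝓤) (A : Set X) {V : Set (X × X)} (hV : V ∈ 𝓤) :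
    ∃ f : X → ℝ, Continuous f ∧ Set.EqOn f 0 (closure A) ∧
      Set.EqOn f 1 (interior (closure (setBall A V)))ᶜ := by
  obtain ⟨W, hW, hWV⟩ := h𝓤.2 V hV
  let c : Urysohns.CU (IsThickening 𝓤) :=
    { C := closure A
      U := interior (closure (setBall A V))
      P_C_U := ⟨A, W, hW, subset_rfl, hnorm.closure_setBall_subset A hW hWV⟩
      closed_C := isClosed_closure
      open_U := isOpen_interior
      subset := hnorm A V hV
      hP := fun _ h _ _ => h.exists_between hnorm h𝓤 }
  exact ⟨c.lim, c.continuous_lim, c.lim_of_mem_C, c.lim_of_notMem_U⟩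

end IsNormalQuasiUniformity

/-- If the topology of `X` is generated by a normal
quasi-uniformity and `X` is semi-Hausdorff, then `X` is functionally
Hausdorff. -/
theorem functionallyHausdorff_of_semiHausdorff_normally_quasiUniformizable
    {X : Type*} [TopologicalSpace X]
    (h : ∃ 𝓤 : Filter (X × X), IsQuasiUniformity 𝓤 ∧ IsNormalQuasiUniformity 𝓤 ∧
      GeneratesTopology 𝓤)
    (hsh : ∀ x y : X, x ≠ y → ∃ U ∈ 𝓝 x, y ∉ interior (closure U)) :
    ∀ x y : X, x ≠ y → ∃ f : X → ℝ, Continuous f ∧ f x ≠ f y := by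
  obtain ⟨𝓤, h𝓤, hnorm, hgen⟩ := h
  intro x y hxy
  obtain ⟨U, hU, hyU⟩ := hsh x y hxy
  rw [hgen x, Filter.mem_lift'_sets (h := fun V => {z | (x, z) ∈ V})
    fun _ _ hVW _ hz => hVW hz] at hU
  obtain ⟨V, hV, hVU⟩ := hU
  obtain ⟨f, hf, hf_zero, hf_one⟩ := hnorm.exists_continuous_zero_one h𝓤 {x} hV
  have hy : y ∉ interior (closure (setBall {x} V)) := fun hy =>
    hyU (interior_mono (closure_mono ((setBall_singleton x V).trans_subset hVU)) hy)
  refine ⟨f, hf, ?_⟩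
  rw [hf_zero (subset_closure rfl), hf_one hy]
  norm_num
end

section
/- Let S be a topological monoid with open shifts. Then for every subset A ⊆ S and every open set U containing the unit 1, closure(A) ⊆ interior(closure(A * U)) and closure(A) ⊆ interior(closure(U * A)), where A * U = {a * u : a ∈ A, u ∈ U}. -/
open Topology Pointwise

/-- Proposition `p2`, reformulated. In a topological monoid
`S` with open shifts (all two-sided shifts `x ↦ a * x * b` are open maps), for
every set `A ⊆ S` and every open set `U ∋ 1` one has
`closure A ⊆ interior (closure (A * U))` and
`closure A ⊆ interior (closure (U * A))`. -/
theorem closure_subset_interior_closure_mul {S : Type*} [Monoid S]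
    [TopologicalSpace S] [ContinuousMul S]
    (hshift : ∀ a b : S, IsOpenMap fun x : S => a * x * b)
    (A U : Set S) (hU : IsOpen U) (h1 : (1 : S) ∈ U) :
    closure A ⊆ interior (closure (A * U)) ∧
      closure A ⊆ interior (closure (U * A)) := by
  constructor
  · intro x hx
    rw [mem_interior]
    refine ⟨(fun y : S => x * y * 1) '' U, ?_, hshift x 1 U hU, ⟨1, h1, by simp⟩⟩
    rintro _ ⟨u, hu, rfl⟩
    simp only [mul_one]
    exact map_mem_closure (f := fun a => a * u) (continuous_mul_right u) hx
      (fun a ha => Set.mul_mem_mul ha hu)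
  · intro x hx
    rw [mem_interior]
    refine ⟨(fun y : S => 1 * y * x) '' U, ?_, hshift 1 x U hU, ⟨1, h1, by simp⟩⟩
    rintro _ ⟨u, hu, rfl⟩
    simp only [one_mul]
    exact map_mem_closure (f := fun a => u * a) (continuous_mul_left u) hx
      (fun a ha => Set.mul_mem_mul hu ha)
end

section
/- Let S be a topological monoid with open shifts. Then for every open set U containing the unit 1 and every nonempty subset A ⊆ S there exists a continuous function f : S → ℝ with values in [0,1] such that A ⊆ f⁻¹({0}) and {x ∈ S : f x < 1} ⊆ interior(closure(A * U)) ∩ interior(closure(U * A)), where A * U = {a * u : a ∈ A, u ∈ U}. -/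
open Topology Pointwise

theorem aux_right {S : Type*} [Monoid S]
    [TopologicalSpace S] [ContinuousMul S]
    (hshift : ∀ a b : S, IsOpenMap fun x : S => a * x * b)
    (U : Set S) (hU : IsOpen U) (h1 : (1 : S) ∈ U) (A : Set S) :
    ∃ f : S → ℝ, Continuous f ∧ (∀ x, f x ∈ Set.Icc (0 : ℝ) 1) ∧
      (∀ a ∈ A, f a = 0) ∧
      {x : S | f x < 1} ⊆ interior (closure (A * U)) := by
  classical
  -- the key lemma
  have key : ∀ B W : Set S, IsOpen W → (1 : S) ∈ W →
      closure B ⊆ interior (closure (B * W)) := by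
    intro B W hWo hW1 x hx
    have hopen : IsOpen ((fun y => x * y) '' W) := by
      have h := hshift x 1
      simp only [mul_one] at h
      exact h W hWo
    refine mem_interior.2 ⟨(fun y => x * y) '' W, ?_, hopen, ⟨1, hW1, mul_one x⟩⟩
    rintro _ ⟨w, hw, rfl⟩
    have hm : Set.MapsTo (· * w) B (B * W) := fun b hb => Set.mul_mem_mul hb hw
    exact map_mem_closure (f := fun b => b * w) (continuous_mul_right w) hx hm
  -- the sequence of neighborhoods of 1
  have ex : ∀ W : Set S, ∃ V : Set S,
      (IsOpen W ∧ (1 : S) ∈ W) → IsOpen V ∧ (1 : S) ∈ V ∧ V * V ⊆ W := by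
    intro W
    by_cases h : IsOpen W ∧ (1 : S) ∈ W
    · obtain ⟨V, hV1, hVo, hVm⟩ := exists_open_nhds_one_mul_subset (h.1.mem_nhds h.2)
      exact ⟨V, fun _ => ⟨hV1, hVo, hVm⟩⟩
    · exact ⟨∅, fun hc => absurd hc h⟩
  choose g hg using ex
  set V : ℕ → Set S := fun n => g^[n] U with hVdef
  have hVsucc : ∀ n, V (n + 1) = g (V n) := fun n => Function.iterate_succ_apply' g n U
  have hVbasic : ∀ n, IsOpen (V n) ∧ (1 : S) ∈ V n := by
    intro n
    induction n with
    | zero => exact ⟨hU, h1⟩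
    | succ n ih =>
      rw [hVsucc n]
      exact ⟨(hg (V n) ih).1, (hg (V n) ih).2.1⟩
  have hVo : ∀ n, IsOpen (V n) := fun n => (hVbasic n).1
  have hV1 : ∀ n, (1 : S) ∈ V n := fun n => (hVbasic n).2
  have hVmul : ∀ n, V (n + 1) * V (n + 1) ⊆ V n := by
    intro n
    rw [hVsucc n]
    exact (hg (V n) (hVbasic n)).2.2
  have hV0 : V 0 = U := rfl
  -- the dyadic chain of sets
  set C : ℕ → ℕ → Set S := fun n => Nat.rec
    (fun k => if k = 0 then A else A * V 1)
    (fun n Cn k => if k % 2 = 0 then Cn (k / 2) else Cn (k / 2) * V (n + 2)) n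
    with hCdef
  have hC0 : ∀ k, C 0 k = if k = 0 then A else A * V 1 := fun _ => rfl
  have hCS : ∀ n k, C (n + 1) k =
      if k % 2 = 0 then C n (k / 2) else C n (k / 2) * V (n + 2) := fun _ _ => rfl
  have hCzero : ∀ n, C n 0 = A := by
    intro n; induction n with
    | zero => simp [hC0]
    | succ n ih => rw [hCS]; simpa using ih
  have hCeven : ∀ n k, C (n + 1) (2 * k) = C n k := by
    intro n k
    rw [hCS]
    simp [Nat.mul_mod_right, Nat.mul_div_cancel_left k (by norm_num : 0 < 2)]
  have hCpow : ∀ m n k, C (n + m) (2 ^ m * k) = C n k := by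
    intro m
    induction m with
    | zero => intro n k; simp
    | succ m ih =>
      intro n k
      have h1 : n + (m + 1) = (n + m) + 1 := by ring
      have h2 : 2 ^ (m + 1) * k = 2 * (2 ^ m * k) := by ring
      rw [h1, h2, hCeven, ih]
  -- absorption
  have habs : ∀ n k, k + 1 ≤ 2 ^ n → C n k * V (n + 1) ⊆ C n (k + 1) := by
    intro n
    induction n with
    | zero =>
      intro k hk
      have hk0 : k = 0 := by simpa using hk
      subst hk0
      rw [hC0, hC0]
      simp
    | succ n ih =>
      intro k hk
      rcases Nat.even_or_odd k with ⟨j, hj⟩ | ⟨j, hj⟩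
      · subst hj
        have e1 : C (n + 1) (j + j) = C n j := by
          rw [show j + j = 2 * j by ring, hCeven]
        have e2 : C (n + 1) (j + j + 1) = C n j * V (n + 2) := by
          rw [hCS]
          have : (j + j + 1) % 2 = 1 := by omega
          rw [this]
          have : (j + j + 1) / 2 = j := by omega
          simp [this]
        rw [e1, e2]
      · subst hj
        have e1 : C (n + 1) (2 * j + 1) = C n j * V (n + 2) := by
          rw [hCS]
          have h2 : (2 * j + 1) % 2 = 1 := by omega
          rw [h2]
          have : (2 * j + 1) / 2 = j := by omega
          simp [this]
        have e2 : C (n + 1) (2 * j + 1 + 1) = C n (j + 1) := by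
          rw [show 2 * j + 1 + 1 = 2 * (j + 1) by ring, hCeven]
        rw [e1, e2]
        have hj1 : j + 1 ≤ 2 ^ n := by
          have : 2 * j + 2 ≤ 2 ^ (n + 1) := hk
          omega
        calc C n j * V (n + 2) * V (n + 2) ⊆ C n j * V (n + 1) := by
              rw [mul_assoc]
              exact Set.mul_subset_mul_left (hVmul (n + 1))
          _ ⊆ C n (j + 1) := ih j hj1
  -- monotonicity
  have hmono_succ : ∀ n k, k + 1 ≤ 2 ^ n → C n k ⊆ C n (k + 1) := by
    intro n k hk x hx
    exact habs n k hk ⟨x, hx, 1, hV1 (n + 1), mul_one x⟩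
  have hmono : ∀ n k k', k ≤ k' → k' ≤ 2 ^ n → C n k ⊆ C n k' := by
    intro n k k' hkk' hk'
    induction k' with
    | zero =>
      have : k = 0 := by omega
      subst this; exact subset_rfl
    | succ k' ih =>
      rcases Nat.lt_or_ge k (k' + 1) with h | h
      · exact (ih (by omega) (by omega)).trans (hmono_succ n k' (by omega))
      · have : k = k' + 1 := by omega
        subst this; exact subset_rfl
  have htop : ∀ n, C n (2 ^ n) = A * V 1 := by
    intro n
    induction n with
    | zero => simp [hC0]
    | succ n ih => rw [pow_succ, mul_comm (2 ^ n) 2, hCeven, ih]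
  have hV1U : V 1 ⊆ U := by
    intro v hv
    have : v * 1 ∈ V 1 * V 1 := Set.mul_mem_mul hv (hV1 1)
    rw [mul_one] at this
    exact hVmul 0 this
  have hsub : ∀ n k, k ≤ 2 ^ n → C n k ⊆ A * U := by
    intro n k hk
    refine (hmono n k (2 ^ n) hk le_rfl).trans ?_
    rw [htop n]
    exact Set.mul_subset_mul_left hV1U
  -- the function
  set T : ℕ → ℕ → Set S := fun n k => interior (closure (C n k)) with hTdef
  set Q : S → Set ℝ := fun x =>
    {r : ℝ | r = 1 ∨ ∃ n k : ℕ, k < 2 ^ n ∧ x ∈ T n k ∧ r = (k : ℝ) / 2 ^ n} with hQdef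
  set f : S → ℝ := fun x => sInf (Q x) with hfdef
  have hQ1 : ∀ x, (1 : ℝ) ∈ Q x := fun x => Or.inl rfl
  have hQne : ∀ x, (Q x).Nonempty := fun x => ⟨1, hQ1 x⟩
  have hQpos : ∀ x, ∀ r ∈ Q x, (0 : ℝ) ≤ r := by
    rintro x r (rfl | ⟨n, k, -, -, rfl⟩)
    · norm_num
    · positivity
  have hQbdd : ∀ x, BddBelow (Q x) := fun x => ⟨0, hQpos x⟩
  have hf01 : ∀ x, f x ∈ Set.Icc (0 : ℝ) 1 :=
    fun x => ⟨le_csInf (hQne x) (hQpos x), csInf_le (hQbdd x) (hQ1 x)⟩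
  have hfle : ∀ x n k, k < 2 ^ n → x ∈ T n k → f x ≤ (k : ℝ) / 2 ^ n := by
    intro x n k hk hx
    exact csInf_le (hQbdd x) (Or.inr ⟨n, k, hk, hx, rfl⟩)
  -- f vanishes on A
  have hfzero : ∀ a ∈ A, f a = 0 := by
    intro a ha
    have hub : ∀ n : ℕ, f a ≤ (1 : ℝ) / 2 ^ (n + 1) := by
      intro n
      have h1' : a ∈ T (n + 1) 1 := by
        have ha0 : a ∈ C (n + 1) 0 := (hCzero (n + 1)).ge ha
        have h0 : a ∈ closure (C (n + 1) 0) := subset_closure ha0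
        have hk := key (C (n + 1) 0) (V (n + 2)) (hVo (n + 2)) (hV1 (n + 2)) h0
        have hs : C (n + 1) 0 * V (n + 2) ⊆ C (n + 1) 1 :=
          habs (n + 1) 0 Nat.one_le_two_pow
        exact interior_mono (closure_mono hs) hk
      simpa using hfle a (n + 1) 1 (Nat.one_lt_two_pow (by omega)) h1'
    have hge : 0 ≤ f a := (hf01 a).1
    by_contra hne
    have hpos : 0 < f a := lt_of_le_of_ne hge (Ne.symm hne)
    obtain ⟨n, hn⟩ := exists_pow_lt_of_lt_one hpos (by norm_num : (1 : ℝ) / 2 < 1)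
    have h2 : (1 : ℝ) / 2 ^ (n + 1) ≤ 1 / 2 ^ n := by
      have h3 : (2 : ℝ) ^ n ≤ 2 ^ (n + 1) :=
        pow_le_pow_right₀ (by norm_num : (1 : ℝ) ≤ 2) (Nat.le_succ n)
      exact one_div_le_one_div_of_le (by positivity) h3
    rw [div_pow, one_pow] at hn
    linarith [hub n]
  -- cross-level monotonicity
  have hcross : ∀ n k n' k', k' * 2 ^ n ≤ k * 2 ^ n' → k ≤ 2 ^ n → C n' k' ⊆ C n k := by
    intro n k n' k' hle hk
    have e1 : C (n' + n) (2 ^ n * k') = C n' k' := hCpow n n' k'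
    have e2 : C (n + n') (2 ^ n' * k) = C n k := hCpow n' n k
    rw [← e1, ← e2, Nat.add_comm n n']
    refine hmono (n' + n) (2 ^ n * k') (2 ^ n' * k) (by simpa [Nat.mul_comm] using hle) ?_
    calc 2 ^ n' * k ≤ 2 ^ n' * 2 ^ n := Nat.mul_le_mul_left _ hk
      _ = 2 ^ (n' + n) := (pow_add 2 n' n).symm
  -- the subset property
  have hlt1 : {x : S | f x < 1} ⊆ interior (closure (A * U)) := by
    intro x hx
    obtain ⟨r, hrQ, hr1⟩ := exists_lt_of_csInf_lt (hQne x) hx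
    rcases hrQ with rfl | ⟨n, k, hk, hxT, rfl⟩
    · exact absurd hr1 (lt_irrefl 1)
    · exact interior_mono (closure_mono (hsub n k hk.le)) hxT
  -- upper semicontinuity
  have husc : UpperSemicontinuous f := by
    rw [upperSemicontinuous_iff_isOpen_preimage]
    intro t
    rw [isOpen_iff_forall_mem_open]
    intro x hx
    obtain ⟨r, hrQ, hrt⟩ := exists_lt_of_csInf_lt (hQne x) hx
    rcases hrQ with rfl | ⟨n, k, hk, hxT, rfl⟩
    · exact ⟨Set.univ, fun y _ => lt_of_le_of_lt (hf01 y).2 hrt, isOpen_univ, trivial⟩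
    · refine ⟨T n k, fun y hy => ?_, isOpen_interior, hxT⟩
      exact lt_of_le_of_lt (hfle y n k hk hy) hrt
  -- lower semicontinuity
  have hlsc : LowerSemicontinuous f := by
    rw [lowerSemicontinuous_iff_isOpen_preimage]
    intro t
    rw [isOpen_iff_forall_mem_open]
    intro x hx
    simp only [Set.mem_preimage, Set.mem_Ioi] at hx
    rcases lt_or_ge t 0 with ht | ht
    · exact ⟨Set.univ, fun y _ => lt_of_lt_of_le ht (hf01 y).1, isOpen_univ, trivial⟩
    -- choose n with 2/2^n < f x - t
    obtain ⟨n, hn⟩ := exists_pow_lt_of_lt_one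
      (show (0 : ℝ) < (f x - t) / 2 by linarith) (by norm_num : (1 : ℝ) / 2 < 1)
    rw [div_pow, one_pow] at hn
    have h2n : (0 : ℝ) < 2 ^ n := by positivity
    have hngap : (2 : ℝ) / 2 ^ n < f x - t := by
      rw [div_lt_iff₀ h2n] at hn ⊢
      linarith
    obtain ⟨k, hkt, hkt2⟩ : ∃ k : ℕ, t < (k : ℝ) / 2 ^ n ∧ (k : ℝ) / 2 ^ n ≤ t + 1 / 2 ^ n := by
      refine ⟨⌊t * 2 ^ n⌋₊ + 1, ?_, ?_⟩
      · rw [lt_div_iff₀ h2n]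
        push_cast
        exact Nat.lt_floor_add_one (t * 2 ^ n)
      · rw [div_le_iff₀ h2n]
        push_cast
        have := Nat.floor_le (show (0 : ℝ) ≤ t * 2 ^ n by positivity)
        rw [add_mul, one_div, inv_mul_cancel₀ (ne_of_gt h2n)]
        linarith
    have hk1fx : ((k : ℝ) + 1) / 2 ^ n < f x := by
      have e : ((k : ℝ) + 1) / 2 ^ n = (k : ℝ) / 2 ^ n + 1 / 2 ^ n := by ring
      have e2 : (2 : ℝ) / 2 ^ n = 1 / 2 ^ n + 1 / 2 ^ n := by ring
      rw [e]
      rw [e2] at hngap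
      linarith
    have hkbound : k + 1 < 2 ^ n := by
      have hfx1 : f x ≤ 1 := (hf01 x).2
      have h3 : ((k : ℝ) + 1) / 2 ^ n < 1 := lt_of_lt_of_le hk1fx hfx1
      rw [div_lt_one h2n] at h3
      have h4 : ((k + 1 : ℕ) : ℝ) < ((2 ^ n : ℕ) : ℝ) := by push_cast; linarith
      exact_mod_cast h4
    refine ⟨(closure (T n k))ᶜ, ?_, isClosed_closure.isOpen_compl, ?_⟩
    · -- every point outside the closure has f > t
      intro y hy
      simp only [Set.mem_compl_iff] at hy
      have hlb : (k : ℝ) / 2 ^ n ≤ f y := by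
        refine le_csInf (hQne y) ?_
        rintro r (rfl | ⟨n', k', hk', hyT, rfl⟩)
        · rw [div_le_one h2n]
          have : ((k : ℕ) : ℝ) ≤ ((2 ^ n : ℕ) : ℝ) := by exact_mod_cast (by omega : k ≤ 2 ^ n)
          push_cast at this
          linarith
        · by_contra hcon
          push_neg at hcon
          have h2n' : (0 : ℝ) < 2 ^ n' := by positivity
          have hnat : k' * 2 ^ n < k * 2 ^ n' := by
            have := (div_lt_div_iff₀ h2n' h2n).1 hcon
            have hcast : ((k' * 2 ^ n : ℕ) : ℝ) < ((k * 2 ^ n' : ℕ) : ℝ) := by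
              push_cast; linarith
            exact_mod_cast hcast
          have hsubC : C n' k' ⊆ C n k := hcross n k n' k' hnat.le (by omega)
          have : y ∈ closure (T n k) :=
            subset_closure (interior_mono (closure_mono hsubC) hyT)
          exact hy this
      exact lt_of_lt_of_le hkt hlb
    · -- x is outside the closure
      simp only [Set.mem_compl_iff]
      intro hxc
      have hx1 : x ∈ closure (C n k) := by
        have : closure (T n k) ⊆ closure (C n k) := by
          rw [← closure_closure (s := C n k)]
          exact closure_mono interior_subset
        exact this hxc
      have hx2 : x ∈ interior (closure (C n k * V (n + 1))) :=
        key (C n k) (V (n + 1)) (hVo (n + 1)) (hV1 (n + 1)) hx1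
      have hx3 : x ∈ T n (k + 1) :=
        interior_mono (closure_mono (habs n k (by omega))) hx2
      have := hfle x n (k + 1) hkbound hx3
      push_cast at this
      linarith
  exact ⟨f, continuous_iff_lower_upperSemicontinuous.2 ⟨hlsc, husc⟩, hf01, hfzero, hlt1⟩

/-- Theorem `para`. In a topological monoid `S` with open
shifts, for every open `U ∋ 1` and every nonempty `A ⊆ S` there is a continuous
`f : S → [0,1] ⊆ ℝ` with `A ⊆ f⁻¹(0)` and
`{f < 1} ⊆ interior (closure (A * U)) ∩ interior (closure (U * A))`. -/
theorem exists_urysohn_function_monoid {S : Type*} [Monoid S]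
    [TopologicalSpace S] [ContinuousMul S]
    (hshift : ∀ a b : S, IsOpenMap fun x : S => a * x * b)
    (U : Set S) (hU : IsOpen U) (h1 : (1 : S) ∈ U)
    (A : Set S) (hA : A.Nonempty) :
    ∃ f : S → ℝ, Continuous f ∧ (∀ x, f x ∈ Set.Icc (0 : ℝ) 1) ∧
      A ⊆ f ⁻¹' {0} ∧
      {x : S | f x < 1} ⊆
        interior (closure (A * U)) ∩ interior (closure (U * A)) := by
  obtain ⟨f₁, hf₁c, hf₁01, hf₁0, hf₁lt⟩ := aux_right hshift U hU h1 A
  -- transfer to the opposite monoid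
  have hshift' : ∀ a b : Sᵐᵒᵖ, IsOpenMap fun x : Sᵐᵒᵖ => a * x * b := by
    intro a b
    have h : (fun x : Sᵐᵒᵖ => a * x * b) =
        MulOpposite.op ∘ (fun y : S => b.unop * y * a.unop) ∘ MulOpposite.unop := by
      funext x
      apply MulOpposite.unop_injective
      simp [mul_assoc]
    rw [h]
    exact (MulOpposite.opHomeomorph.isOpenMap.comp (hshift b.unop a.unop)).comp
      MulOpposite.opHomeomorph.symm.isOpenMap
  have hU' : IsOpen (MulOpposite.unop ⁻¹' U : Set Sᵐᵒᵖ) :=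
    hU.preimage MulOpposite.continuous_unop
  have h1' : (1 : Sᵐᵒᵖ) ∈ (MulOpposite.unop ⁻¹' U : Set Sᵐᵒᵖ) := by
    simp only [Set.mem_preimage, MulOpposite.unop_one]
    exact h1
  obtain ⟨f₂', hf₂c, hf₂01, hf₂0, hf₂lt⟩ :=
    aux_right hshift' (MulOpposite.unop ⁻¹' U) hU' h1' (MulOpposite.unop ⁻¹' A)
  have hAU : (MulOpposite.unop ⁻¹' A : Set Sᵐᵒᵖ) * (MulOpposite.unop ⁻¹' U) =
      MulOpposite.unop ⁻¹' (U * A) := by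
    ext x
    simp only [Set.mem_mul, Set.mem_preimage]
    constructor
    · rintro ⟨a, ha, u, hu, rfl⟩
      exact ⟨MulOpposite.unop u, hu, MulOpposite.unop a, ha, rfl⟩
    · rintro ⟨u, hu, a, ha, hx⟩
      refine ⟨MulOpposite.op a, by simpa using ha, MulOpposite.op u, by simpa using hu, ?_⟩
      apply MulOpposite.unop_injective
      simpa using hx
  have hpre : ∀ s : Set S,
      interior (closure (MulOpposite.unop ⁻¹' s : Set Sᵐᵒᵖ)) =
        MulOpposite.unop ⁻¹' (interior (closure s)) := by
    intro s
    have h1 : ∀ t : Set S, (MulOpposite.unop ⁻¹' t : Set Sᵐᵒᵖ) =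
        (MulOpposite.opHomeomorph : S ≃ₜ Sᵐᵒᵖ).symm ⁻¹' t := fun _ => rfl
    rw [h1, ← Homeomorph.preimage_closure, ← Homeomorph.preimage_interior, h1]
  refine ⟨fun x => max (f₁ x) (f₂' (MulOpposite.op x)),
    hf₁c.max (hf₂c.comp MulOpposite.continuous_op), ?_, ?_, ?_⟩
  · intro x
    exact ⟨le_max_of_le_left (hf₁01 x).1, max_le (hf₁01 x).2 (hf₂01 _).2⟩
  · intro a ha
    have h2 : f₂' (MulOpposite.op a) = 0 := hf₂0 _ (by simpa using ha)
    simp [Set.mem_preimage, hf₁0 a ha, h2]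
  · intro x hx
    simp only [Set.mem_setOf_eq, max_lt_iff] at hx
    refine ⟨hf₁lt hx.1, ?_⟩
    have h3 := hf₂lt hx.2
    rw [hAU, hpre] at h3
    exact h3
end

section
/- Let S be a topological monoid with open shifts. Then for every point x ∈ S and every neighborhood O of x there exists a continuous function f : S → ℝ with values in [0,1] such that f x = 0 and {z ∈ S : f z < 1} ⊆ interior(closure(O)). -/
open Topology

open Pointwise Set

set_option linter.unusedSectionVars false


namespace UrysohnMonoidAux

variable {S : Type*} [Monoid S] [TopologicalSpace S] [ContinuousMul S]

/-- The dyadic family of products of the neighborhoods `V n`. -/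
def Mset (V : ℕ → Set S) : ℕ → ℕ → Set S
  | 0, _ => V 1
  | n+1, k => if k % 2 = 0 then Mset V n (k/2) else Mset V n (k/2) * V (n+1)

lemma Mset_even (V : ℕ → Set S) (n k : ℕ) : Mset V (n+1) (2*k) = Mset V n k := by
  have h1 : (2*k) % 2 = 0 := by omega
  have h2 : (2*k) / 2 = k := by omega
  simp [Mset, h1, h2]

lemma Mset_odd (V : ℕ → Set S) (n k : ℕ) :
    Mset V (n+1) (2*k+1) = Mset V n k * V (n+1) := by
  have h1 : (2*k+1) % 2 = 1 := by omega
  have h2 : (2*k+1) / 2 = k := by omega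
  simp [Mset, h1, h2]

lemma one_mem_Mset {V : ℕ → Set S} (hV1 : ∀ n, (1:S) ∈ V n) :
    ∀ n k, (1:S) ∈ Mset V n k
  | 0, _ => hV1 1
  | n+1, k => by
    rw [Mset]
    split
    · exact one_mem_Mset hV1 n _
    · simpa using Set.mul_mem_mul (one_mem_Mset hV1 n (k/2)) (hV1 (n+1))

lemma isOpen_mul_right (hshift : ∀ a b : S, IsOpenMap fun x : S => a * x * b)
    {A B : Set S} (hB : IsOpen B) : IsOpen (A * B) := by
  have h : A * B = ⋃ a ∈ A, (fun u => a * u * 1) '' B := by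
    ext w
    simp only [Set.mem_mul, Set.mem_iUnion, Set.mem_image, mul_one]
    tauto
  rw [h]
  exact isOpen_biUnion fun a _ => hshift a 1 B hB

lemma isOpen_Mset {V : ℕ → Set S} (hVo : ∀ n, IsOpen (V n))
    (hshift : ∀ a b : S, IsOpenMap fun x : S => a * x * b) :
    ∀ n k, IsOpen (Mset V n k)
  | 0, _ => hVo 1
  | n+1, k => by
    rw [Mset]
    split
    · exact isOpen_Mset hVo hshift n _
    · exact isOpen_mul_right hshift (hVo (n+1))

lemma Mset_step {V : ℕ → Set S} (hVs : ∀ n, V (n+1) * V (n+1) ⊆ V n) :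
    ∀ n k, k + 2 ≤ 2^n → Mset V n k * V n ⊆ Mset V n (k+1)
  | 0, k, h => by norm_num at h; omega
  | n+1, k, h => by
    have h2 : (2:ℕ)^(n+1) = 2 * 2^n := by rw [pow_succ]; ring
    rcases Nat.even_or_odd k with ⟨j, hj⟩ | ⟨j, hj⟩
    · have hk : k = 2*j := by omega
      subst hk
      rw [Mset_even, Mset_odd]
    · have hk : k = 2*j+1 := by omega
      subst hk
      have hguard : j + 2 ≤ 2^n := by omega
      rw [Mset_odd, show 2*j+1+1 = 2*(j+1) by ring, Mset_even]
      calc Mset V n j * V (n+1) * V (n+1)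
          = Mset V n j * (V (n+1) * V (n+1)) := mul_assoc _ _ _
        _ ⊆ Mset V n j * V n := Set.mul_subset_mul_left (hVs n)
        _ ⊆ Mset V n (j+1) := Mset_step hVs n j hguard

lemma Mset_mono_succ {V : ℕ → Set S} (hV1 : ∀ n, (1:S) ∈ V n)
    (hVs : ∀ n, V (n+1) * V (n+1) ⊆ V n) (n k : ℕ) (h : k + 2 ≤ 2^n) :
    Mset V n k ⊆ Mset V n (k+1) :=
  (Set.subset_mul_left _ (hV1 n)).trans (Mset_step hVs n k h)

lemma Mset_mono {V : ℕ → Set S} (hV1 : ∀ n, (1:S) ∈ V n)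
    (hVs : ∀ n, V (n+1) * V (n+1) ⊆ V n) (n : ℕ) :
    ∀ b a, a ≤ b → b + 1 ≤ 2^n → Mset V n a ⊆ Mset V n b := by
  intro b
  induction b with
  | zero => intro a ha _; interval_cases a; exact subset_rfl
  | succ b ih =>
    intro a ha hb
    rcases Nat.lt_or_ge a (b+1) with h | h
    · exact (ih a (by omega) (by omega)).trans (Mset_mono_succ hV1 hVs n b (by omega))
    · have : a = b + 1 := by omega
      subst this; exact subset_rfl

lemma Mset_pow (V : ℕ → Set S) :
    ∀ m n k, Mset V (n+m) (k * 2^m) = Mset V n k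
  | 0, n, k => by simp
  | m+1, n, k => by
    have h : k * 2^(m+1) = 2 * (k * 2^m) := by ring
    rw [show n + (m+1) = (n+m)+1 from rfl, h, Mset_even, Mset_pow V m n k]

lemma Mset_top {V : ℕ → Set S} (hVs : ∀ n, V (n+1) * V (n+1) ⊆ V n) :
    ∀ n, Mset V n (2^n - 1) * V n ⊆ V 1 * V 0
  | 0 => by
    show Mset V 0 0 * V 0 ⊆ V 1 * V 0
    exact subset_rfl
  | n+1 => by
    have h2 : (2:ℕ)^(n+1) = 2 * 2^n := by rw [pow_succ]; ring
    have h3 : (1:ℕ) ≤ 2^n := Nat.one_le_two_pow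
    have h : (2:ℕ)^(n+1) - 1 = 2*(2^n - 1) + 1 := by omega
    rw [h, Mset_odd]
    calc Mset V n (2^n-1) * V (n+1) * V (n+1)
        = Mset V n (2^n-1) * (V (n+1) * V (n+1)) := mul_assoc _ _ _
      _ ⊆ Mset V n (2^n-1) * V n := Set.mul_subset_mul_left (hVs n)
      _ ⊆ V 1 * V 0 := Mset_top hVs n

lemma Mset_mul_V {V : ℕ → Set S} (hV1 : ∀ n, (1:S) ∈ V n)
    (hVs : ∀ n, V (n+1) * V (n+1) ⊆ V n) (n k : ℕ) (hk : k + 1 ≤ 2^n) :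
    Mset V n k * V n ⊆ V 1 * V 0 := by
  have h3 : (1:ℕ) ≤ 2^n := Nat.one_le_two_pow
  calc Mset V n k * V n
      ⊆ Mset V n (2^n - 1) * V n :=
        Set.mul_subset_mul_right (Mset_mono hV1 hVs n (2^n-1) k (by omega) (by omega))
    _ ⊆ V 1 * V 0 := Mset_top hVs n

lemma Mset_subset_Mset {V : ℕ → Set S} (hV1 : ∀ n, (1:S) ∈ V n)
    (hVs : ∀ n, V (n+1) * V (n+1) ⊆ V n) {m j n k : ℕ}
    (hj : j + 1 ≤ 2^m) (hk : k + 1 ≤ 2^n) (hjk : (j:ℝ)/2^m < (k:ℝ)/2^n) :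
    Mset V m j ⊆ Mset V n k := by
  have hjk' : j * 2^n < k * 2^m := by
    have h1 : (0:ℝ) < 2^m := by positivity
    have h2 : (0:ℝ) < 2^n := by positivity
    rw [div_lt_div_iff₀ h1 h2] at hjk
    exact_mod_cast hjk
  have e1 : Mset V (m+n) (j * 2^n) = Mset V m j := Mset_pow V n m j
  have e2 : Mset V (m+n) (k * 2^m) = Mset V n k := by
    rw [Nat.add_comm m n]; exact Mset_pow V m n k
  rw [← e1, ← e2]
  apply Mset_mono hV1 hVs (m+n) (k * 2^m) (j * 2^n) (by omega)
  have h1 : (k+1) * 2^m ≤ 2^n * 2^m := Nat.mul_le_mul_right _ hk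
  have h2 : (1:ℕ) ≤ 2^m := Nat.one_le_two_pow
  calc k * 2^m + 1 ≤ k * 2^m + 2^m := by omega
    _ = (k+1) * 2^m := by ring
    _ ≤ 2^n * 2^m := h1
    _ = 2^(m+n) := by rw [pow_add]; ring

/-! The Urysohn function. -/

def Dset (V : ℕ → Set S) (x z : S) : Set ℝ :=
  insert 1 {r : ℝ | ∃ n k : ℕ, k + 1 ≤ 2^n ∧ r = (k:ℝ)/2^n ∧
    z ∈ interior (closure ({x} * Mset V n k))}

noncomputable def ufun (V : ℕ → Set S) (x : S) (z : S) : ℝ := sInf (Dset V x z)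

lemma one_mem_Dset (V : ℕ → Set S) (x z : S) : (1:ℝ) ∈ Dset V x z :=
  Set.mem_insert _ _

lemma nonneg_of_mem_Dset {V : ℕ → Set S} {x z : S} {r : ℝ} (hr : r ∈ Dset V x z) :
    0 ≤ r := by
  rcases Set.mem_insert_iff.1 hr with rfl | ⟨n, k, _, rfl, _⟩
  · norm_num
  · positivity

lemma bddBelow_Dset (V : ℕ → Set S) (x z : S) : BddBelow (Dset V x z) :=
  ⟨0, fun _ hr => nonneg_of_mem_Dset hr⟩

lemma ufun_nonneg (V : ℕ → Set S) (x z : S) : 0 ≤ ufun V x z :=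
  le_csInf ⟨1, one_mem_Dset V x z⟩ fun _ hr => nonneg_of_mem_Dset hr

lemma ufun_le_one (V : ℕ → Set S) (x z : S) : ufun V x z ≤ 1 :=
  csInf_le (bddBelow_Dset V x z) (one_mem_Dset V x z)

lemma ufun_le {V : ℕ → Set S} {x z : S} {n k : ℕ} (hk : k + 1 ≤ 2^n)
    (hz : z ∈ interior (closure ({x} * Mset V n k))) : ufun V x z ≤ (k:ℝ)/2^n :=
  csInf_le (bddBelow_Dset V x z) (Set.mem_insert_iff.2 (Or.inr ⟨n, k, hk, rfl, hz⟩))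

lemma mul_mem_closure_mul_singleton {B : Set S} {z : S} (b : S) (hz : z ∈ closure B) :
    z * b ∈ closure (B * {b}) := by
  rw [Set.mul_singleton]
  exact image_closure_subset_closure_image (continuous_mul_right b) ⟨z, hz, rfl⟩

lemma mem_singleton_mul_self {B : Set S} (z : S) (hB : (1:S) ∈ B) : z ∈ {z} * B := by
  simpa using Set.mul_mem_mul (Set.mem_singleton z) hB

lemma x_mem_singleton_mul {V : ℕ → Set S} (hV1 : ∀ n, (1:S) ∈ V n) (x : S) (n k : ℕ) :
    x ∈ {x} * Mset V n k :=
  mem_singleton_mul_self x (one_mem_Mset hV1 n k)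

lemma closure_subset_interior_closure {V : ℕ → Set S} {x : S}
    (hV1 : ∀ n, (1:S) ∈ V n) (hVo : ∀ n, IsOpen (V n))
    (hVs : ∀ n, V (n+1) * V (n+1) ⊆ V n)
    (hshift : ∀ a b : S, IsOpenMap fun x : S => a * x * b)
    (n k : ℕ) (hk : k + 2 ≤ 2^n) :
    closure ({x} * Mset V n k) ⊆ interior (closure ({x} * Mset V n (k+1))) := by
  intro z hz
  have hsub : {z} * V n ⊆ closure ({x} * Mset V n (k+1)) := by
    rintro w hw
    rw [Set.singleton_mul] at hw
    obtain ⟨b, hb, rfl⟩ := hw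
    refine closure_mono ?_ (mul_mem_closure_mul_singleton b hz)
    calc {x} * Mset V n k * {b}
        ⊆ {x} * Mset V n k * V n :=
          Set.mul_subset_mul_left (Set.singleton_subset_iff.2 hb)
      _ = {x} * (Mset V n k * V n) := mul_assoc _ _ _
      _ ⊆ {x} * Mset V n (k+1) := Set.mul_subset_mul_left (Mset_step hVs n k hk)
  exact interior_maximal hsub (isOpen_mul_right hshift (hVo n))
    (mem_singleton_mul_self z (hV1 n))

lemma UU_mono {V : ℕ → Set S} {x : S} (hV1 : ∀ n, (1:S) ∈ V n)
    (hVs : ∀ n, V (n+1) * V (n+1) ⊆ V n) {m j n k : ℕ}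
    (hj : j + 1 ≤ 2^m) (hk : k + 1 ≤ 2^n) (hjk : (j:ℝ)/2^m < (k:ℝ)/2^n) :
    interior (closure ({x} * Mset V m j)) ⊆ interior (closure ({x} * Mset V n k)) :=
  interior_mono (closure_mono (Set.mul_subset_mul_left (Mset_subset_Mset hV1 hVs hj hk hjk)))

lemma ufun_lb {V : ℕ → Set S} {x : S} (hV1 : ∀ n, (1:S) ∈ V n)
    (hVs : ∀ n, V (n+1) * V (n+1) ⊆ V n) {w : S} {n k : ℕ} (hk : k + 1 ≤ 2^n)
    (hw : w ∉ interior (closure ({x} * Mset V n k))) : (k:ℝ)/2^n ≤ ufun V x w := by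
  apply le_csInf ⟨1, one_mem_Dset V x w⟩
  intro r hr
  rcases Set.mem_insert_iff.1 hr with rfl | ⟨m, j, hj, rfl, hwU⟩
  · rw [div_le_one (by positivity : (0:ℝ) < 2^n)]
    exact_mod_cast (by omega : k ≤ 2^n)
  · by_contra h
    push_neg at h
    exact hw (UU_mono hV1 hVs hj hk h hwU)

lemma continuous_of_isOpen_lt_gt {X : Type*} [TopologicalSpace X] {f : X → ℝ}
    (h1 : ∀ t : ℝ, IsOpen {z | f z < t}) (h2 : ∀ t : ℝ, IsOpen {z | t < f z}) :
    Continuous f := by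
  apply continuous_iff_continuousAt.2
  intro z
  apply tendsto_order.2
  constructor
  · intro a ha
    exact Filter.eventually_iff.2 ((h2 a).mem_nhds ha)
  · intro a ha
    exact Filter.eventually_iff.2 ((h1 a).mem_nhds ha)

set_option maxHeartbeats 1000000 in
lemma isOpen_ufun_lt {V : ℕ → Set S} {x : S} (t : ℝ) :
    IsOpen {z : S | ufun V x z < t} := by
  rw [isOpen_iff_forall_mem_open]
  intro z hz
  have hz' : sInf (Dset V x z) < t := hz
  obtain ⟨r, hrD, hrt⟩ := exists_lt_of_csInf_lt ⟨1, one_mem_Dset V x z⟩ hz'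
  rcases Set.mem_insert_iff.1 hrD with rfl | ⟨n, k, hk, rfl, hzU⟩
  · refine ⟨Set.univ, ?_, isOpen_univ, trivial⟩
    intro w _
    have h1 : ufun V x w ≤ 1 := ufun_le_one V x w
    show ufun V x w < t
    linarith
  · refine ⟨interior (closure ({x} * Mset V n k)), ?_, isOpen_interior, hzU⟩
    intro w hw
    have h1 : ufun V x w ≤ (k:ℝ)/2^n := ufun_le hk hw
    show ufun V x w < t
    linarith

set_option maxHeartbeats 1000000 in
lemma isOpen_ufun_gt {V : ℕ → Set S} {x : S} (hV1 : ∀ n, (1:S) ∈ V n)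
    (hVo : ∀ n, IsOpen (V n)) (hVs : ∀ n, V (n+1) * V (n+1) ⊆ V n)
    (hshift : ∀ a b : S, IsOpenMap fun x : S => a * x * b) (t : ℝ) :
    IsOpen {z : S | t < ufun V x z} := by
  rw [isOpen_iff_forall_mem_open]
  intro z hz
  have hz' : t < ufun V x z := hz
  by_cases ht : t < 0
  · refine ⟨Set.univ, ?_, isOpen_univ, trivial⟩
    intro w _
    have h1 : 0 ≤ ufun V x w := ufun_nonneg V x w
    show t < ufun V x w
    linarith
  push_neg at ht
  obtain ⟨n, hn⟩ := exists_pow_lt_of_lt_one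
    (show (0:ℝ) < (ufun V x z - t)/2 by linarith) (show (1:ℝ)/2 < 1 by norm_num)
  have h2n : (0:ℝ) < 2^n := by positivity
  have hn' : (2:ℝ)/2^n < ufun V x z - t := by
    have hpow : ((1:ℝ)/2)^n = 1/2^n := by rw [div_pow, one_pow]
    rw [hpow, div_lt_div_iff₀ h2n two_pos] at hn
    rw [div_lt_iff₀ h2n]
    linarith
  obtain ⟨k, hkdef⟩ : ∃ k : ℕ, k = Nat.floor (t * 2^n) + 1 := ⟨_, rfl⟩
  have hkc : (k:ℝ) = (Nat.floor (t * 2^n) : ℝ) + 1 := by rw [hkdef]; push_cast; ring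
  have hk1 : t < (k:ℝ)/2^n := by
    rw [lt_div_iff₀ h2n, hkc]
    exact Nat.lt_floor_add_one _
  have hk2 : ((k:ℝ)+1)/2^n < ufun V x z := by
    have hfl : (Nat.floor (t * 2^n) : ℝ) ≤ t * 2^n := Nat.floor_le (by positivity)
    have hnum : ((k:ℝ)+1) ≤ t * 2^n + 2 := by rw [hkc]; linarith
    have hle : ((k:ℝ)+1)/2^n ≤ (t * 2^n + 2)/2^n :=
      div_le_div_of_nonneg_right hnum h2n.le
    have heq : (t * 2^n + 2)/2^n = t + 2/2^n := by field_simp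
    rw [heq] at hle
    linarith
  have hk2n : k + 2 ≤ 2^n := by
    have h1 : ((k:ℝ)+1) < 2^n := by
      have h := lt_of_lt_of_le hk2 (ufun_le_one V x z)
      rwa [div_lt_one h2n] at h
    have h2 : k + 1 < 2^n := by exact_mod_cast h1
    omega
  have hz1 : z ∉ interior (closure ({x} * Mset V n (k+1))) := by
    intro h
    have hle := ufun_le (show (k+1)+1 ≤ 2^n by omega) h
    have hcast : (((k+1:ℕ)):ℝ) = (k:ℝ) + 1 := by push_cast; ring
    rw [hcast] at hle
    linarith
  have hchain : closure (interior (closure ({x} * Mset V n k))) ⊆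
      interior (closure ({x} * Mset V n (k+1))) := by
    calc closure (interior (closure ({x} * Mset V n k)))
        ⊆ closure (closure ({x} * Mset V n k)) := closure_mono interior_subset
      _ = closure ({x} * Mset V n k) := closure_closure
      _ ⊆ _ := closure_subset_interior_closure hV1 hVo hVs hshift n k (by omega)
  refine ⟨(closure (interior (closure ({x} * Mset V n k))))ᶜ, ?_,
    isClosed_closure.isOpen_compl, ?_⟩
  · intro w hw
    have hlb : (k:ℝ)/2^n ≤ ufun V x w :=
      ufun_lb hV1 hVs (show k + 1 ≤ 2^n by omega) (fun h => hw (subset_closure h))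
    show t < ufun V x w
    linarith
  · intro h
    exact hz1 (hchain h)

end UrysohnMonoidAux

open UrysohnMonoidAux

/-- Corollary `mono`. In a topological monoid `S` with open
shifts, for every point `x` and every neighborhood `O` of `x` there is a
continuous `f : S → [0,1] ⊆ ℝ` with `f x = 0` and
`{f < 1} ⊆ interior (closure O)`. -/

theorem exists_urysohn_function_monoid_point {S : Type*} [Monoid S]
    [TopologicalSpace S] [ContinuousMul S]
    (hshift : ∀ a b : S, IsOpenMap fun x : S => a * x * b)
    (x : S) (O : Set S) (hO : O ∈ 𝓝 x) :
    ∃ f : S → ℝ, Continuous f ∧ (∀ z, f z ∈ Set.Icc (0 : ℝ) 1) ∧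
      f x = 0 ∧ {z : S | f z < 1} ⊆ interior (closure O) := by
  classical
  have hT : (fun u : S => x * u) ⁻¹' O ∈ 𝓝 (1:S) := by
    have hc : ContinuousAt (fun u : S => x * u) 1 := (continuous_mul_left x).continuousAt
    exact hc.preimage_mem_nhds (by rwa [mul_one])
  obtain ⟨V, hVo, hV1, hVs, hV10⟩ :
      ∃ V : ℕ → Set S, (∀ n, IsOpen (V n)) ∧ (∀ n, (1:S) ∈ V n) ∧
        (∀ n, V (n+1) * V (n+1) ⊆ V n) ∧
        V 1 * V 0 ⊆ (fun u : S => x * u) ⁻¹' O := by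
    obtain ⟨W0, hW0o, hW01, hW0T⟩ : ∃ W0 : Set S, IsOpen W0 ∧ (1:S) ∈ W0 ∧
        W0 ⊆ (fun u : S => x * u) ⁻¹' O :=
      ⟨interior _, isOpen_interior, mem_interior_iff_mem_nhds.2 hT, interior_subset⟩
    have hstep : ∀ A : {A : Set S // IsOpen A ∧ (1:S) ∈ A},
        ∃ B : Set S, IsOpen B ∧ (1:S) ∈ B ∧ B * B ⊆ A.1 := fun A =>
      exists_open_nhds_one_mul_subset (A.2.1.mem_nhds A.2.2)
    choose g hgo hg1 hgs using hstep
    set succ : {A : Set S // IsOpen A ∧ (1:S) ∈ A} → {A : Set S // IsOpen A ∧ (1:S) ∈ A} :=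
      fun A => ⟨g A, hgo A, hg1 A⟩ with hsucc
    set seq : ℕ → {A : Set S // IsOpen A ∧ (1:S) ∈ A} :=
      fun n => succ^[n] ⟨W0, hW0o, hW01⟩ with hseq
    have hit : ∀ n, seq (n+1) = succ (seq n) := fun n => Function.iterate_succ_apply' _ _ _
    have hmul : ∀ n, (seq (n+1)).1 * (seq (n+1)).1 ⊆ (seq n).1 := by
      intro n
      rw [hit n]
      exact hgs (seq n)
    refine ⟨fun n => (seq (n+1)).1, fun n => (seq (n+1)).2.1, fun n => (seq (n+1)).2.2,
      fun n => hmul (n+1), ?_⟩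
    have h1 : (seq 2).1 ⊆ (seq 1).1 :=
      (Set.subset_mul_left _ (seq 2).2.2).trans (hmul 1)
    calc (seq 2).1 * (seq 1).1 ⊆ (seq 1).1 * (seq 1).1 := Set.mul_subset_mul_right h1
      _ ⊆ (seq 0).1 := hmul 0
      _ ⊆ _ := hW0T
  refine ⟨ufun V x, ?_, fun z => ⟨ufun_nonneg V x z, ufun_le_one V x z⟩, ?_, ?_⟩
  · exact continuous_of_isOpen_lt_gt (fun t => isOpen_ufun_lt t)
      (fun t => isOpen_ufun_gt hV1 hVo hVs hshift t)
  · refine le_antisymm ?_ (ufun_nonneg V x x)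
    have hx : x ∈ interior (closure ({x} * Mset V 0 0)) :=
      interior_maximal subset_closure (isOpen_mul_right hshift (isOpen_Mset hVo hshift 0 0))
        (x_mem_singleton_mul hV1 x 0 0)
    have h0 := ufun_le (show 0 + 1 ≤ 2^0 by norm_num) hx
    simpa using h0
  · intro z hz
    have hz' : sInf (Dset V x z) < 1 := hz
    obtain ⟨r, hrD, hrt⟩ := exists_lt_of_csInf_lt ⟨1, one_mem_Dset V x z⟩ hz'
    rcases Set.mem_insert_iff.1 hrD with rfl | ⟨n, k, hk, rfl, hzU⟩
    · exact absurd hrt (lt_irrefl 1)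
    · have hzc : z ∈ closure ({x} * Mset V n k) := interior_subset hzU
      have hsub : {z} * V n ⊆ closure O := by
        rintro w hw
        rw [Set.singleton_mul] at hw
        obtain ⟨b, hb, rfl⟩ := hw
        have h1 : z * b ∈ closure ({x} * Mset V n k * {b}) :=
          mul_mem_closure_mul_singleton b hzc
        refine closure_mono ?_ h1
        calc {x} * Mset V n k * {b}
            ⊆ {x} * Mset V n k * V n :=
              Set.mul_subset_mul_left (Set.singleton_subset_iff.2 hb)
          _ = {x} * (Mset V n k * V n) := mul_assoc _ _ _
          _ ⊆ {x} * (V 1 * V 0) := Set.mul_subset_mul_left (Mset_mul_V hV1 hVs n k hk)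
          _ ⊆ O := by
              rintro u hu
              rw [Set.singleton_mul] at hu
              obtain ⟨v, hv, rfl⟩ := hu
              exact hV10 hv
      exact interior_maximal hsub (isOpen_mul_right hshift (hVo n))
        (mem_singleton_mul_self z (hV1 n))
end

section
/- Every semiregular topological monoid with open shifts is completely regular. That is, if S is a topological monoid with open shifts and for every point x ∈ S and every neighborhood O of x there is a neighborhood U of x with interior(closure(U)) ⊆ O, then S is completely regular. -/
/-!
Fix `x ∉ K` and, by semiregularity, a neighbourhood `V` of `x` with `interior (closure V) ⊆ Kᶜ`.
Call `u` a thickening of `c` if `closure (c * w) ⊆ u` for some neighbourhood `w` of `1`. Since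
left shifts are open and right multiplication is continuous, `closure s ⊆ interior (closure (s * w))`
for every `s`; together with `w' * w' ⊆ w` this lets one insert an open set `v` with
`c ⊆ v ⊆ closure v ⊆ u` between any thickening pair, keeping both new pairs thickenings. This is
exactly the interpolation property that drives Urysohn's construction (`Urysohns.CU`), which,
started from the pair `{x}`, `closure V`, yields a continuous function vanishing at `x` and
equal to `1` off `interior (closure V)`, hence on `K`.
-/

open Topology Set Pointwise

namespace MonoidOpenShifts

variable {M : Type*} [Monoid M] [TopologicalSpace M]

lemma isOpen_mul (hshift : ∀ a : M, IsOpenMap (a * ·)) (s : Set M) {t : Set M}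
    (ht : IsOpen t) : IsOpen (s * t) := by
  rw [← iUnion_mul_left_image]
  exact isOpen_biUnion fun a _ => hshift a t ht

variable [ContinuousMul M]

lemma closure_mul_subset (s t : Set M) : closure s * t ⊆ closure (s * t) :=
  mul_subset_iff.2 fun _ ha b hb =>
    map_mem_closure (f := (· * b)) (continuous_mul_const b) ha fun _ ha' => mul_mem_mul ha' hb

lemma closure_closure_mul_subset (s t : Set M) : closure (closure s * t) ⊆ closure (s * t) :=
  closure_minimal (closure_mul_subset s t) isClosed_closure

lemma closure_subset_interior_closure_mul (hshift : ∀ a : M, IsOpenMap (a * ·)) {w : Set M}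
    (hw : w ∈ 𝓝 1) (s : Set M) : closure s ⊆ interior (closure (s * w)) :=
  calc closure s ⊆ closure s * interior w := subset_mul_left _ (mem_interior_iff_mem_nhds.2 hw)
    _ ⊆ interior (closure (s * w)) :=
      interior_maximal
        ((closure_mul_subset _ _).trans (closure_mono (mul_subset_mul_left interior_subset)))
        (isOpen_mul hshift _ isOpen_interior)

/-- The monoid counterpart of `IsThickening`, used as the predicate of `Urysohns.CU`. -/
def IsMulThickening (c u : Set M) : Prop :=
  ∃ w ∈ 𝓝 (1 : M), closure (c * w) ⊆ u

lemma isMulThickening_singleton_closure_of_mem_nhds {x : M} {V : Set M} (hV : V ∈ 𝓝 x) :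
    IsMulThickening {x} (closure V) := by
  have hw : (x * ·) ⁻¹' V ∈ 𝓝 (1 : M) :=
    (continuous_const_mul x).continuousAt.preimage_mem_nhds (by rwa [mul_one])
  exact ⟨_, hw, closure_mono (singleton_mul.trans_subset (image_preimage_subset _ V))⟩

lemma IsMulThickening.closure_left {c u : Set M} (h : IsMulThickening c u) :
    IsMulThickening (closure c) u :=
  let ⟨w, hw, hcw⟩ := h
  ⟨w, hw, (closure_closure_mul_subset c w).trans hcw⟩

lemma IsMulThickening.exists_isOpen_between (hshift : ∀ a : M, IsOpenMap (a * ·))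
    {c u : Set M} (h : IsMulThickening c u) :
    ∃ v, IsOpen v ∧ c ⊆ v ∧ closure v ⊆ u ∧ IsMulThickening c v ∧
      IsMulThickening (closure v) u := by
  obtain ⟨w, hw, hcw⟩ := h
  obtain ⟨w₁, hw₁o, hw₁1, hw₁⟩ := exists_open_nhds_one_mul_subset hw
  obtain ⟨w₂, hw₂o, hw₂1, hw₂⟩ := exists_open_nhds_one_mul_subset (hw₁o.mem_nhds hw₁1)
  have hw₁w : c * w₁ ⊆ c * w := mul_subset_mul_left ((subset_mul_left w₁ hw₁1).trans hw₁)
  have hw₁w₁ : c * w₁ * w₁ ⊆ c * w := by rw [mul_assoc]; exact mul_subset_mul_left hw₁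
  have hw₂w₂ : c * w₂ * w₂ ⊆ c * w₁ := by rw [mul_assoc]; exact mul_subset_mul_left hw₂
  have hv : closure (interior (closure (c * w₁))) ⊆ closure (c * w₁) :=
    closure_minimal interior_subset isClosed_closure
  refine ⟨interior (closure (c * w₁)), isOpen_interior,
    subset_closure.trans (closure_subset_interior_closure_mul hshift (hw₁o.mem_nhds hw₁1) c),
    hv.trans ((closure_mono hw₁w).trans hcw), ⟨w₂, hw₂o.mem_nhds hw₂1, ?_⟩,
    ⟨w₁, hw₁o.mem_nhds hw₁1, ?_⟩⟩
  · exact (closure_subset_interior_closure_mul hshift (hw₂o.mem_nhds hw₂1) _).trans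
      (interior_mono (closure_mono hw₂w₂))
  · calc closure (closure (interior (closure (c * w₁))) * w₁)
        ⊆ closure (closure (c * w₁) * w₁) := closure_mono (mul_subset_mul_right hv)
      _ ⊆ closure (c * w) := (closure_closure_mul_subset _ _).trans (closure_mono hw₁w₁)
      _ ⊆ u := hcw

lemma exists_continuous_zero_one_of_isMulThickening (hshift : ∀ a : M, IsOpenMap (a * ·))
    {c u : Set M} (h : IsMulThickening c u) :
    ∃ f : M → unitInterval, Continuous f ∧ EqOn f 0 c ∧ EqOn f 1 (interior u)ᶜ := by
  obtain ⟨v, hvo, hcv, hvu, hcv', -⟩ := h.closure_left.exists_isOpen_between hshift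
  let C : Urysohns.CU (IsMulThickening (M := M)) :=
    { C := closure c
      U := v
      P_C_U := hcv'
      closed_C := isClosed_closure
      open_U := hvo
      subset := hcv
      hP := fun _ hP _ _ => hP.exists_isOpen_between hshift }
  have hv : v ⊆ interior u := interior_maximal (subset_closure.trans hvu) hvo
  exact ⟨fun y => ⟨C.lim y, C.lim_mem_Icc y⟩, C.continuous_lim.subtype_mk C.lim_mem_Icc,
    fun y hy => Subtype.ext (C.lim_of_mem_C y (subset_closure hy)),
    fun y hy => Subtype.ext (C.lim_of_notMem_U y fun hyv => hy (hv hyv))⟩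

end MonoidOpenShifts

open MonoidOpenShifts

/-- Every semiregular topological monoid with open shifts is
completely regular. -/
theorem completelyRegular_of_semiregular_monoid {S : Type*} [Monoid S]
    [TopologicalSpace S] [ContinuousMul S]
    (hshift : ∀ a b : S, IsOpenMap fun x : S => a * x * b)
    (hs : ∀ x : S, ∀ O ∈ 𝓝 x, ∃ U ∈ 𝓝 x, interior (closure U) ⊆ O) :
    CompletelyRegularSpace S := by
  have hshift_left : ∀ a : S, IsOpenMap (a * ·) := fun a => by simpa using hshift a 1
  refine ⟨fun x K hK hxK => ?_⟩
  obtain ⟨V, hV, hVK⟩ := hs x Kᶜ (hK.isOpen_compl.mem_nhds hxK)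
  obtain ⟨f, hf, hfx, hfV⟩ := exists_continuous_zero_one_of_isMulThickening hshift_left
    (isMulThickening_singleton_closure_of_mem_nhds hV)
  exact ⟨f, hf, hfx rfl, fun y hy => hfV fun hyV => hVK hyV hy⟩
end

section
/- Every semi-Hausdorff topological monoid with open shifts is functionally Hausdorff. That is, if S is a topological monoid with open shifts such that for any distinct points x, y ∈ S there is a neighborhood U of x with y ∉ interior(closure(U)), then for any distinct points x, y ∈ S there is a continuous function f : S → ℝ with f x ≠ f y. -/
/-!
If left multiplications are open maps, `closure s ⊆ interior (closure (s * O))` for every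
neighbourhood `O` of `1`. Hence, choosing `W * W ⊆ O`, the open set
`v = interior (closure (c * W))` interpolates between `c` and `u` whenever
`closure (c * O) ⊆ u`, in the sense that `closure (c * W') ⊆ v` and `closure (closure v * W) ⊆ u`
for suitable neighbourhoods `W'`, `W` of `1`. This is exactly the splitting step of Urysohn's
construction, which then yields a continuous function vanishing on `closure {x}` and equal to `1`
outside `interior (closure U)` for any neighbourhood `U` of `x`.
-/

open Topology Set
open scoped Pointwise

section

variable {M : Type*} [Monoid M] [TopologicalSpace M]

theorem isOpen_mul_of_isOpenMap_mul_left (hM : ∀ a : M, IsOpenMap (a * ·)) (s : Set M)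
    {t : Set M} (ht : IsOpen t) : IsOpen (s * t) := by
  rw [← iUnion_mul_left_image]
  exact isOpen_biUnion fun a _ => hM a t ht

def ClosureMulNhdsOneSubset (c u : Set M) : Prop :=
  ∃ O ∈ 𝓝 (1 : M), closure (c * O) ⊆ u

theorem ClosureMulNhdsOneSubset.subset {c u : Set M} (hcu : ClosureMulNhdsOneSubset c u) :
    c ⊆ u := by
  obtain ⟨O, hO, hcO⟩ := hcu
  exact (subset_mul_left c (mem_of_mem_nhds hO)).trans (subset_closure.trans hcO)

variable [ContinuousMul M]

theorem closure_closure_mul (s t : Set M) : closure (closure s * t) = closure (s * t) := by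
  refine (closure_minimal ?_ isClosed_closure).antisymm
    (closure_mono (mul_subset_mul_right subset_closure))
  rintro _ ⟨a, ha, b, hb, rfl⟩
  exact map_mem_closure (f := (· * b)) (continuous_mul_const b) ha
    fun a' ha' => mul_mem_mul ha' hb

theorem closure_subset_interior_closure_mul_s10 (hM : ∀ a : M, IsOpenMap (a * ·)) (s : Set M)
    {O : Set M} (hO : O ∈ 𝓝 1) : closure s ⊆ interior (closure (s * O)) := by
  have hmem : closure s ⊆ closure s * interior O :=
    subset_mul_left _ (mem_interior_iff_mem_nhds.2 hO)
  refine hmem.trans (interior_maximal ?_ (isOpen_mul_of_isOpenMap_mul_left hM _ isOpen_interior))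
  calc closure s * interior O ⊆ closure (closure s * interior O) := subset_closure
    _ = closure (s * interior O) := closure_closure_mul _ _
    _ ⊆ closure (s * O) := closure_mono (mul_subset_mul_left interior_subset)

theorem closureMulNhdsOneSubset_closure_interior_closure (hM : ∀ a : M, IsOpenMap (a * ·))
    {s u O : Set M} (hO : O ∈ 𝓝 1) (hsu : s * O ⊆ u) :
    ClosureMulNhdsOneSubset (closure s) (interior (closure u)) := by
  obtain ⟨W, hWo, hW1, hWW⟩ := exists_open_nhds_one_mul_subset hO
  have hW : W ∈ 𝓝 (1 : M) := hWo.mem_nhds hW1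
  refine ⟨W, hW, ?_⟩
  calc closure (closure s * W) = closure (s * W) := closure_closure_mul _ _
    _ ⊆ interior (closure (s * W * W)) := closure_subset_interior_closure_mul_s10 hM _ hW
    _ ⊆ interior (closure u) := by
      gcongr
      rw [mul_assoc]
      exact (mul_subset_mul_left hWW).trans hsu

theorem ClosureMulNhdsOneSubset.exists_between (hM : ∀ a : M, IsOpenMap (a * ·))
    {c u : Set M} (hc : IsClosed c) (hcu : ClosureMulNhdsOneSubset c u) :
    ∃ v, IsOpen v ∧ c ⊆ v ∧ closure v ⊆ u ∧
      ClosureMulNhdsOneSubset c v ∧ ClosureMulNhdsOneSubset (closure v) u := by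
  obtain ⟨O, hO, hcO⟩ := hcu
  obtain ⟨W, hWo, hW1, hWW⟩ := exists_open_nhds_one_mul_subset hO
  have hW : W ∈ 𝓝 (1 : M) := hWo.mem_nhds hW1
  have hvu : ClosureMulNhdsOneSubset (closure (interior (closure (c * W)))) u := by
    refine ⟨W, hW, ?_⟩
    calc closure (closure (interior (closure (c * W))) * W)
        ⊆ closure (closure (c * W) * W) :=
          closure_mono (mul_subset_mul_right (closure_minimal interior_subset isClosed_closure))
      _ = closure (c * (W * W)) := by rw [closure_closure_mul, mul_assoc]
      _ ⊆ u := (closure_mono (mul_subset_mul_left hWW)).trans hcO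
  refine ⟨interior (closure (c * W)), isOpen_interior, ?_, hvu.subset, ?_, hvu⟩
  · simpa only [hc.closure_eq] using closure_subset_interior_closure_mul_s10 hM c hW
  · simpa only [hc.closure_eq] using
      closureMulNhdsOneSubset_closure_interior_closure (s := c) hM hW subset_rfl

theorem exists_continuous_zero_one_of_closureMulNhdsOneSubset
    (hM : ∀ a : M, IsOpenMap (a * ·)) {c u : Set M} (hc : IsClosed c) (hu : IsOpen u)
    (hcu : ClosureMulNhdsOneSubset c u) : ∃ f : C(M, ℝ), EqOn f 0 c ∧ EqOn f 1 uᶜ := by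
  let C : Urysohns.CU (ClosureMulNhdsOneSubset (M := M)) :=
    { C := c
      U := u
      P_C_U := hcu
      closed_C := hc
      open_U := hu
      subset := hcu.subset
      hP := fun hc hcu _ _ => hcu.exists_between hM hc }
  exact ⟨⟨C.lim, C.continuous_lim⟩, C.lim_of_mem_C, fun x hx => C.lim_of_notMem_U x hx⟩

end

/-- Every semi-Hausdorff topological monoid with open shifts
is functionally Hausdorff. -/
theorem functionallyHausdorff_of_semiHausdorff_monoid {S : Type*} [Monoid S]
    [TopologicalSpace S] [ContinuousMul S]
    (hshift : ∀ a b : S, IsOpenMap fun x : S => a * x * b)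
    (hsh : ∀ x y : S, x ≠ y → ∃ U ∈ 𝓝 x, y ∉ interior (closure U)) :
    ∀ x y : S, x ≠ y → ∃ f : S → ℝ, Continuous f ∧ f x ≠ f y := by
  intro x y hxy
  obtain ⟨U, hU, hyU⟩ := hsh x y hxy
  have hM : ∀ a : S, IsOpenMap (a * ·) := fun a => by simpa only [mul_one] using hshift a 1
  have hO : (x * ·) ⁻¹' U ∈ 𝓝 (1 : S) :=
    (continuous_const_mul x).continuousAt.preimage_mem_nhds (by rwa [mul_one])
  have hxU : {x} * (x * ·) ⁻¹' U ⊆ U := by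
    rw [singleton_mul]
    exact image_preimage_subset _ _
  obtain ⟨f, hfx, hfy⟩ := exists_continuous_zero_one_of_closureMulNhdsOneSubset hM
    isClosed_closure isOpen_interior (closureMulNhdsOneSubset_closure_interior_closure hM hO hxU)
  refine ⟨f, f.continuous, ?_⟩
  rw [hfx (subset_closure rfl), hfy hyU]
  exact zero_ne_one
end

section
/- Every regular paratopological group is completely regular. That is, if G is a group equipped with a topology for which multiplication (x,y) ↦ x*y is jointly continuous, and G is a regular topological space, then G is completely regular. -/
/-!
Urysohn's construction (`Urysohns.CU`) works in any space where, between a closed set `c` and an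
open set `u ⊇ c`, one can interpolate an open `v` with `c ⊆ v`, `closure v ⊆ u`, such that both
`(c, v)` and `(closure v, u)` are again pairs of the same kind. In a paratopological group this
works for the pairs with `c = closure A` and `closure (A * W) ⊆ u` for a neighbourhood `W` of `1`.
Choose `V * V ⊆ W` and `V' * V' ⊆ V`, and set `v = interior (closure (A * V))`. Then `V'` witnesses
the pair `(closure A, v)` and `V` witnesses `(closure v, u)`. This uses two facts:
`closure B * V ⊆ closure (B * V)`, and each `y ∈ closure B` has the neighbourhood
`y * V ⊆ closure (B * V)`. Regularity is used only once, to get a closed neighbourhood of `x` that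
misses `K`. This neighbourhood gives the first pair `(closure {x}, Kᶜ)`.
-/

open Set Topology Filter Pointwise

theorem closure_mul_subset_closure_mul {M : Type*} [Mul M] [TopologicalSpace M] [ContinuousMul M]
    (s t : Set M) : closure s * t ⊆ closure (s * t) := by
  rintro _ ⟨x, hx, y, hy, rfl⟩
  exact map_mem_closure (f := (· * y)) (continuous_mul_const y) hx fun a ha => mul_mem_mul ha hy

namespace ParatopologicalGroup

variable {G : Type*} [Group G] [TopologicalSpace G]

def WellInside (c u : Set G) : Prop :=
  ∃ A : Set G, ∃ W ∈ 𝓝 (1 : G), c = closure A ∧ closure (A * W) ⊆ u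

theorem WellInside.subset {c u : Set G} (h : WellInside c u) : c ⊆ u := by
  obtain ⟨A, W, hW, rfl, hAW⟩ := h
  exact (closure_mono (subset_mul_left A (mem_of_mem_nhds hW))).trans hAW

variable [ContinuousMul G]

theorem closure_subset_interior_closure_mul (s : Set G) {V : Set G} (hV : V ∈ 𝓝 (1 : G)) :
    closure s ⊆ interior (closure (s * V)) := by
  intro y hy
  rw [mem_interior_iff_mem_nhds]
  filter_upwards [singleton_mul_mem_nhds_of_nhds_one y hV] with z hz
  exact closure_mul_subset_closure_mul s V (mul_subset_mul_right (singleton_subset_iff.2 hy) hz)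

theorem exists_nhds_one_mul_self_subset {W : Set G} (hW : W ∈ 𝓝 (1 : G)) :
    ∃ V ∈ 𝓝 (1 : G), V ⊆ W ∧ V * V ⊆ W := by
  obtain ⟨V, hV, hV1, hVW⟩ := exists_open_nhds_one_mul_subset hW
  exact ⟨V, hV.mem_nhds hV1, (subset_mul_left V hV1).trans hVW, hVW⟩

theorem WellInside.exists_isOpen_between {c u : Set G} (h : WellInside c u) :
    ∃ v, IsOpen v ∧ c ⊆ v ∧ closure v ⊆ u ∧ WellInside c v ∧ WellInside (closure v) u := by
  obtain ⟨A, W, hW, rfl, hAW⟩ := h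
  obtain ⟨V, hV, hVW, hVVW⟩ := exists_nhds_one_mul_self_subset hW
  obtain ⟨V', hV', -, hV'V'⟩ := exists_nhds_one_mul_self_subset hV
  have hclosure_v : closure (interior (closure (A * V))) ⊆ closure (A * V) :=
    closure_minimal interior_subset isClosed_closure
  refine ⟨interior (closure (A * V)), isOpen_interior, closure_subset_interior_closure_mul A hV,
    ?_, ⟨A, V', hV', rfl, ?_⟩, ⟨_, V, hV, rfl, ?_⟩⟩
  · exact hclosure_v.trans ((closure_mono (mul_subset_mul_left hVW)).trans hAW)
  · calc closure (A * V') ⊆ interior (closure (A * V' * V')) :=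
          closure_subset_interior_closure_mul _ hV'
      _ ⊆ interior (closure (A * V)) := by
          rw [mul_assoc]
          exact interior_mono (closure_mono (mul_subset_mul_left hV'V'))
  · calc closure (interior (closure (A * V)) * V) ⊆ closure (closure (A * V) * V) :=
          closure_mono (mul_subset_mul_right interior_subset)
      _ ⊆ closure (A * V * V) :=
          closure_minimal (closure_mul_subset_closure_mul _ _) isClosed_closure
      _ ⊆ u := by
          rw [mul_assoc]
          exact (closure_mono (mul_subset_mul_left hVVW)).trans hAW

theorem wellInside_closure_singleton [RegularSpace G] {x : G} {u : Set G} (hu : u ∈ 𝓝 x) :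
    WellInside (closure {x}) u := by
  obtain ⟨N, hN, hNclosed, hNu⟩ := exists_mem_nhds_isClosed_subset hu
  have hW : (x * ·) ⁻¹' N ∈ 𝓝 (1 : G) :=
    (continuous_const_mul x).continuousAt.preimage_mem_nhds (by simpa using hN)
  refine ⟨{x}, _, hW, rfl, closure_minimal ?_ hNclosed |>.trans hNu⟩
  rintro _ ⟨_, rfl, y, hy, rfl⟩
  exact hy

end ParatopologicalGroup

open ParatopologicalGroup in
/-- Corollary `r1`. Every regular paratopological group is
completely regular. -/
theorem completelyRegular_of_regular_paratopologicalGroup {G : Type*} [Group G]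
    [TopologicalSpace G] [ContinuousMul G] [RegularSpace G] :
    CompletelyRegularSpace G := by
  refine ⟨fun x K hK hxK => ?_⟩
  have start : WellInside (closure {x}) Kᶜ :=
    wellInside_closure_singleton (hK.isOpen_compl.mem_nhds hxK)
  let c : Urysohns.CU (WellInside (G := G)) :=
    { C := closure {x}
      U := Kᶜ
      P_C_U := start
      closed_C := isClosed_closure
      open_U := hK.isOpen_compl
      subset := start.subset
      hP := fun _ h _ _ => h.exists_isOpen_between }
  exact ⟨fun y => ⟨c.lim y, c.lim_mem_Icc y⟩, c.continuous_lim.subtype_mk _,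
    Subtype.ext (c.lim_of_mem_C x (subset_closure rfl)),
    fun y hy => Subtype.ext (c.lim_of_notMem_U y (not_not_intro hy))⟩
end

section
/- Every semi-Hausdorff paratopological group is functionally Hausdorff. That is, if G is a group equipped with a topology for which multiplication (x,y) ↦ x*y is jointly continuous, and for any distinct points x, y ∈ G there is a neighborhood U of x with y ∉ interior(closure(U)), then for any distinct points x, y ∈ G there is a continuous function f : G → ℝ with f x ≠ f y. -/
set_option linter.unusedSectionVars false
open Topology Set Pointwise

namespace SHaux

variable {G : Type*} [Group G] [TopologicalSpace G] [ContinuousMul G]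

lemma cl_mul_cl (A B : Set G) : closure A * closure B ⊆ closure (A * B) := by
  rintro _ ⟨a, ha, b, hb, rfl⟩
  exact map_mem_closure₂ continuous_mul ha hb fun x hx y hy => Set.mul_mem_mul hx hy

lemma mem_cl_mul {A B : Set G} {z a : G} (hz : z ∈ closure A) (ha : a ∈ B) :
    z * a ∈ closure (A * B) :=
  cl_mul_cl A B (Set.mul_mem_mul hz (subset_closure ha))

/-- dyadic chain of sets built from a sequence `W` of neighborhoods of `1`. -/
def V (W : ℕ → Set G) : ℕ → ℕ → Set G
  | 0, k => if k = 0 then {1} else Set.univ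
  | n+1, k => if k % 2 = 0 then V W (n) (k/2) else V W n (k/2) * W (n+3)

variable {W : ℕ → Set G}

lemma Wmono (h1 : ∀ n, (1:G) ∈ W n) (hmul : ∀ n, W (n+1) * W (n+1) ⊆ W n)
    (n : ℕ) : W (n+1) ⊆ W n := fun x hx => by
  simpa using hmul n (Set.mul_mem_mul hx (h1 (n+1)))

lemma V_zero (n : ℕ) : V W n 0 = ({1} : Set G) := by
  induction n with
  | zero => simp [V]
  | succ n ih => simp [V, ih]

lemma V_even (n k : ℕ) : V W (n+1) (2*k) = V W n k := by
  simp [V, Nat.mul_mod_right, Nat.mul_div_cancel_left _ (by norm_num : 0 < 2)]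

lemma V_one (h1 : ∀ n, (1:G) ∈ W n) : ∀ n k, (1:G) ∈ V W n k := by
  intro n
  induction n with
  | zero => intro k; by_cases hk : k = 0 <;> simp [V, hk]
  | succ n ih =>
    intro k
    by_cases hk : k % 2 = 0
    · simpa [V, hk] using ih (k/2)
    · simpa [V, hk] using Set.mul_mem_mul (ih (k/2)) (h1 (n+3))

lemma V_univ (h1 : ∀ n, (1:G) ∈ W n) : ∀ n k, 2^n ≤ k → V W n k = Set.univ := by
  intro n
  induction n with
  | zero => intro k hk; simp [V, show k ≠ 0 by omega]
  | succ n ih =>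
    intro k hk
    have hk2 : 2^n ≤ k/2 := by
      rw [Nat.le_div_iff_mul_le (by norm_num)]
      calc 2^n * 2 = 2^(n+1) := (pow_succ 2 n).symm
        _ ≤ k := hk
    by_cases hpar : k % 2 = 0
    · simp [V, hpar, ih _ hk2]
    · have : V W (n+1) k = V W n (k/2) * W (n+3) := by simp [V, hpar]
      rw [this, ih _ hk2]
      apply Set.eq_univ_of_forall
      intro x
      exact ⟨x * 1⁻¹, trivial, 1, h1 (n+3), by group⟩

lemma V_step (hmul : ∀ n, W (n+1) * W (n+1) ⊆ W n) :
    ∀ n k, V W n k * W (n+2) ⊆ V W n (k+1) := by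
  intro n
  induction n with
  | zero =>
    intro k
    have : V W 0 (k+1) = Set.univ := by simp [V]
    rw [this]; exact Set.subset_univ _
  | succ n ih =>
    intro k
    by_cases hpar : k % 2 = 0
    · have h1 : V W (n+1) k = V W n (k/2) := by simp [V, hpar]
      have h2 : V W (n+1) (k+1) = V W n ((k+1)/2) * W (n+3) := by
        simp [V, show (k+1) % 2 ≠ 0 by omega]
      have h3 : (k+1)/2 = k/2 := by omega
      rw [h1, h2, h3]
    · have h1 : V W (n+1) k = V W n (k/2) * W (n+3) := by simp [V, hpar]
      have h2 : V W (n+1) (k+1) = V W n ((k+1)/2) := by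
        simp [V, show (k+1) % 2 = 0 by omega]
      have h3 : (k+1)/2 = k/2 + 1 := by omega
      rw [h1, h2, h3]
      calc V W n (k/2) * W (n+3) * W (n+3)
          = V W n (k/2) * (W (n+3) * W (n+3)) := by rw [mul_assoc]
        _ ⊆ V W n (k/2) * W (n+2) := Set.mul_subset_mul_left (hmul (n+2))
        _ ⊆ V W n (k/2 + 1) := ih (k/2)

lemma V_succ_mono (h1 : ∀ n, (1:G) ∈ W n) (hmul : ∀ n, W (n+1) * W (n+1) ⊆ W n)
    (n k : ℕ) : V W n k ⊆ V W n (k+1) := by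
  intro x hx
  exact V_step hmul n k ⟨x, hx, 1, h1 (n+2), mul_one x⟩

lemma V_mono (h1 : ∀ n, (1:G) ∈ W n) (hmul : ∀ n, W (n+1) * W (n+1) ⊆ W n)
    (n : ℕ) : Monotone (V W n) :=
  monotone_nat_of_le_succ fun k => V_succ_mono h1 hmul n k

lemma V_pow : ∀ (m n k : ℕ), V W (n+m) (2^m * k) = V W n k := by
  intro m
  induction m with
  | zero => intro n k; simp
  | succ m ih =>
    intro n k
    have h : 2^(m+1) * k = 2 * (2^m * k) := by ring
    have : V W (n + (m+1)) (2^(m+1) * k) = V W ((n+m)+1) (2 * (2^m*k)) := by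
      rw [h]; rfl
    rw [this, V_even, ih]

lemma V_mul_sub_W2 (h1 : ∀ n, (1:G) ∈ W n) (hmul : ∀ n, W (n+1) * W (n+1) ⊆ W n) :
    ∀ n k, k < 2^n → V W n k * W (n+2) ⊆ W 2 := by
  intro n
  induction n with
  | zero =>
    intro k hk
    have : k = 0 := by simpa using hk
    subst this
    rintro _ ⟨a, ha, b, hb, rfl⟩
    rw [V] at ha
    simp only [if_pos rfl, Set.mem_singleton_iff] at ha
    subst ha; simpa using hb
  | succ n ih =>
    intro k hk
    have hpow : 2^(n+1) = 2 * 2^n := by rw [pow_succ]; ring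
    by_cases hpar : k % 2 = 0
    · have h1' : V W (n+1) k = V W n (k/2) := by simp [V, hpar]
      have hlt : k/2 < 2^n := by omega
      rw [h1']
      calc V W n (k/2) * W (n+3) ⊆ V W n (k/2) * W (n+2) :=
            Set.mul_subset_mul_left (Wmono h1 hmul (n+2))
        _ ⊆ W 2 := ih _ hlt
    · have h1' : V W (n+1) k = V W n (k/2) * W (n+3) := by simp [V, hpar]
      have hlt : k/2 < 2^n := by omega
      rw [h1']
      calc V W n (k/2) * W (n+3) * W (n+3)
          = V W n (k/2) * (W (n+3) * W (n+3)) := by rw [mul_assoc]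
        _ ⊆ V W n (k/2) * W (n+2) := Set.mul_subset_mul_left (hmul (n+2))
        _ ⊆ W 2 := ih _ hlt

lemma V_sub_W2 (h1 : ∀ n, (1:G) ∈ W n) (hmul : ∀ n, W (n+1) * W (n+1) ⊆ W n)
    {n k : ℕ} (hk : k < 2^n) : V W n k ⊆ W 2 := by
  intro x hx
  exact V_mul_sub_W2 h1 hmul n k hk ⟨x, hx, 1, h1 (n+2), mul_one x⟩

end SHaux


/-- Corollary `h1`. Every semi-Hausdorff paratopological
group is functionally Hausdorff. -/
theorem functionallyHausdorff_of_semiHausdorff_paratopologicalGroup {G : Type*}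
    [Group G] [TopologicalSpace G] [ContinuousMul G]
    (hsh : ∀ x y : G, x ≠ y → ∃ U ∈ 𝓝 x, y ∉ interior (closure U)) :
    ∀ x y : G, x ≠ y → ∃ f : G → ℝ, Continuous f ∧ f x ≠ f y := by
  intro x y hxy
  have hg1 : (1:G) ≠ x⁻¹ * y := by
    intro h
    apply hxy
    have h2 : x * (1:G) = x * (x⁻¹ * y) := by rw [← h]
    simpa [mul_inv_cancel_left] using h2
  obtain ⟨U0, hU0, hgU0⟩ := hsh 1 (x⁻¹*y) hg1
  have key : ∀ s : Set G, s ∈ 𝓝 (1:G) → ∃ t : Set G, t ∈ 𝓝 (1:G) ∧ t * t ⊆ s := by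
    intro s hs
    obtain ⟨V, hVo, hV1, hVV⟩ := exists_open_nhds_one_mul_subset hs
    exact ⟨V, hVo.mem_nhds hV1, hVV⟩
  choose nxt hn1 hn2 using key
  let U' : ℕ → {s : Set G // s ∈ 𝓝 (1:G)} := fun n =>
    Nat.rec ⟨U0, hU0⟩ (fun _ p => ⟨nxt p.1 p.2, hn1 p.1 p.2⟩) n
  set U : ℕ → Set G := fun n => (U' n).1 with hUdef
  have hUn : ∀ n, U n ∈ 𝓝 (1:G) := fun n => (U' n).2
  have hUmul : ∀ n, U (n+1) * U (n+1) ⊆ U n := fun n => hn2 (U n) (hUn n)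
  set W : ℕ → Set G := fun n => interior (closure (U n)) with hWdef
  have w_open : ∀ n, IsOpen (W n) := fun n => isOpen_interior
  have w1 : ∀ n, (1:G) ∈ W n := fun n =>
    interior_mono subset_closure (mem_interior_iff_mem_nhds.2 (hUn n))
  have wUsub : ∀ n, closure (U (n+1)) * W (n+1) ⊆ closure (U n) := by
    intro n
    calc closure (U (n+1)) * W (n+1)
        ⊆ closure (U (n+1)) * closure (U (n+1)) :=
          Set.mul_subset_mul_left interior_subset
      _ ⊆ closure (U (n+1) * U (n+1)) := SHaux.cl_mul_cl _ _
      _ ⊆ closure (U n) := closure_mono (hUmul n)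
  have wclU : ∀ n, closure (U (n+1)) ⊆ W n := by
    intro n
    have hopen : IsOpen (closure (U (n+1)) * W (n+1)) := (w_open (n+1)).mul_left
    have hself : closure (U (n+1)) ⊆ closure (U (n+1)) * W (n+1) := fun z hz =>
      ⟨z, hz, 1, w1 (n+1), mul_one z⟩
    exact hself.trans (interior_maximal (wUsub n) hopen)
  have wmul : ∀ n, W (n+1) * W (n+1) ⊆ W n := by
    intro n
    have hsub : W (n+1) * W (n+1) ⊆ closure (U n) :=
      (Set.mul_subset_mul_right interior_subset).trans (wUsub n)
    exact interior_maximal hsub ((w_open (n+1)).mul_left)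
  have wcl : ∀ n, closure (W (n+1)) ⊆ W n := by
    intro n
    have h : closure (W (n+1)) ⊆ closure (U (n+1)) := by
      have := closure_mono (interior_subset : W (n+1) ⊆ closure (U (n+1)))
      simpa [closure_closure] using this
    exact h.trans (wclU n)
  have wmono : ∀ n, W (n+1) ⊆ W n := fun n => (subset_closure).trans (wcl n)
  have hgW : (x⁻¹*y) ∉ W 1 := fun h => hgU0 (wmono 0 h)
  -- the dyadic machinery
  have hSne : ∀ (n : ℕ) (z : G), z ∈ closure (SHaux.V W n (2^n)) := by
    intro n z
    rw [SHaux.V_univ w1 n _ le_rfl]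
    simp
  set fN : ℕ → G → ℕ := fun n z => sInf {k | z ∈ closure (SHaux.V W n k)} with hfNdef
  have hfN_mem : ∀ n z, z ∈ closure (SHaux.V W n (fN n z)) := fun n z =>
    Nat.sInf_mem (s := {k | z ∈ closure (SHaux.V W n k)}) ⟨2^n, hSne n z⟩
  have hfN_le : ∀ n z, fN n z ≤ 2^n := fun n z =>
    Nat.sInf_le (s := {k | z ∈ closure (SHaux.V W n k)}) (hSne n z)
  have hfN_min : ∀ n z j, j < fN n z → z ∉ closure (SHaux.V W n j) := fun n z j hj =>
    Nat.notMem_of_lt_sInf (s := {k | z ∈ closure (SHaux.V W n k)}) hj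
  set D : ℕ → G → ℝ := fun n z => (fN n z : ℝ) / 2^n with hDdef0
  have hDdef : ∀ n z, D n z = (fN n z : ℝ) / 2^n := fun n z => rfl
  have hD0 : ∀ n z, 0 ≤ D n z := fun n z => by rw [hDdef]; positivity
  set f : G → ℝ := fun z => ⨅ n, D n z with hfdef
  have hBdd : ∀ z : G, BddBelow (Set.range fun n => D n z) := fun z =>
    ⟨0, by rintro _ ⟨n, rfl⟩; exact hD0 n z⟩
  have hf_le : ∀ (z : G) (n : ℕ), f z ≤ D n z := fun z n => ciInf_le (hBdd z) n
  have hf0 : ∀ z : G, 0 ≤ f z := fun z => le_ciInf fun n => hD0 n z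
  have hstep : ∀ n z, fN (n+1) z ≤ 2 * fN n z := by
    intro n z
    apply Nat.sInf_le (s := {k | z ∈ closure (SHaux.V W (n+1) k)})
    show z ∈ closure (SHaux.V W (n+1) (2 * fN n z))
    rw [SHaux.V_even]
    exact hfN_mem n z
  have hanti : ∀ z : G, Antitone (fun n => D n z) := by
    intro z
    apply antitone_nat_of_succ_le
    intro n
    rw [hDdef, hDdef]
    rw [div_le_div_iff₀ (by positivity) (by positivity)]
    have h' : (fN (n+1) z : ℝ) ≤ 2 * fN n z := by exact_mod_cast hstep n z
    have hp : (0:ℝ) < 2^n := by positivity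
    calc (fN (n+1) z : ℝ) * 2^n ≤ (2 * fN n z) * 2^n := by nlinarith
      _ = (fN n z) * 2^(n+1) := by ring
  have hA : ∀ (z : G) (n m : ℕ), D n z ≤ D (n+m) z + 1/2^n := by
    intro z n m
    set j := fN (n+m) z with hj
    have hjk : j ≤ 2^m * (j / 2^m + 1) := by
      have h := Nat.div_add_mod j (2^m)
      have h2 : j % 2^m < 2^m := Nat.mod_lt _ (by positivity)
      calc j = 2^m * (j/2^m) + j % 2^m := h.symm
        _ ≤ 2^m * (j/2^m) + 2^m := by omega
        _ = 2^m * (j/2^m + 1) := by ring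
    have hz : z ∈ closure (SHaux.V W (n+m) (2^m * (j/2^m + 1))) :=
      closure_mono (SHaux.V_mono w1 wmul (n+m) hjk) (hfN_mem (n+m) z)
    rw [SHaux.V_pow] at hz
    have hk : fN n z ≤ j / 2^m + 1 := Nat.sInf_le (s := {k | z ∈ closure (SHaux.V W n k)}) hz
    have hc1 : ((j / 2^m : ℕ) : ℝ) ≤ (j:ℝ)/(2^m : ℝ) := by
      have h := Nat.cast_div_le (α := ℝ) (m := j) (n := 2^m)
      push_cast at h
      exact h
    have hcast : (fN n z : ℝ) ≤ (j : ℝ)/2^m + 1 := by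
      calc (fN n z : ℝ) ≤ ((j / 2^m + 1 : ℕ) : ℝ) := by exact_mod_cast hk
        _ ≤ (j:ℝ)/2^m + 1 := by push_cast; linarith
    rw [hDdef, hDdef, ← hj]
    have h2n : (0:ℝ) < 2^n := by positivity
    calc (fN n z:ℝ)/2^n ≤ ((j:ℝ)/2^m + 1)/2^n := by gcongr
      _ = (j:ℝ)/2^(n+m) + 1/2^n := by rw [pow_add]; ring
  have hDf : ∀ (z : G) (n : ℕ), D n z ≤ f z + 1/2^n := by
    intro z n
    have h : D n z - 1/2^n ≤ f z := by
      apply le_ciInf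
      intro m
      rcases le_total n m with h | h
      · obtain ⟨p, rfl⟩ := Nat.exists_eq_add_of_le h
        have := hA z n p
        linarith
      · have h1 := hanti z h
        have h2 : (0:ℝ) ≤ 1/2^n := by positivity
        simp only at h1
        linarith
    linarith
  have hcont : Continuous f := by
    rw [continuous_iff_continuousAt]
    intro z
    rw [ContinuousAt, Metric.tendsto_nhds]
    intro ε hε
    obtain ⟨n, hn⟩ : ∃ n : ℕ, (1/2:ℝ)^n < ε/3 :=
      exists_pow_lt_of_lt_one (by linarith) (by norm_num)
    have hpow : ((1:ℝ)/2)^n = 1/2^n := by rw [div_pow, one_pow]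
    have hin : (1:ℝ)/2^n < ε/3 := hpow ▸ hn
    have hpos : (0:ℝ) < 1/2^n := by positivity
    have hN1 : (fun w => z⁻¹ * w) ⁻¹' (W (n+2)) ∈ 𝓝 z := by
      apply IsOpen.mem_nhds
      · exact (w_open (n+2)).preimage (continuous_const.mul continuous_id)
      · simp [w1 (n+2)]
    have hN2 : {w : G | fN n z = 0 ∨ w ∉ closure (SHaux.V W n (fN n z - 1))} ∈ 𝓝 z := by
      rcases Nat.eq_zero_or_pos (fN n z) with h0 | hposk
      · exact Filter.mem_of_superset Filter.univ_mem (fun w _ => Or.inl h0)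
      · have hzo : z ∈ (closure (SHaux.V W n (fN n z - 1)))ᶜ :=
          hfN_min n z (fN n z - 1) (by omega)
        have hmem : (closure (SHaux.V W n (fN n z - 1)))ᶜ ∈ 𝓝 z :=
          (isClosed_closure.isOpen_compl).mem_nhds hzo
        exact Filter.mem_of_superset hmem (fun w hw => Or.inr hw)
    filter_upwards [hN1, hN2] with v hv1 hv2
    have hveq : v = z * (z⁻¹ * v) := by group
    have ha : z⁻¹ * v ∈ W (n+2) := hv1
    -- upper estimate
    have hup : fN n v ≤ fN n z + 1 := by
      apply Nat.sInf_le (s := {k | v ∈ closure (SHaux.V W n k)})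
      show v ∈ closure (SHaux.V W n (fN n z + 1))
      apply closure_mono (SHaux.V_step wmul n (fN n z))
      have hm := SHaux.mem_cl_mul (hfN_mem n z) ha
      rwa [← hveq] at hm
    have hfvup : f v ≤ f z + 2 * (1/2^n) := by
      have h1 : f v ≤ D n v := hf_le v n
      have h2 : D n v ≤ ((fN n z : ℝ)+1)/2^n := by
        rw [hDdef]
        gcongr
        exact_mod_cast hup
      have h3 : D n z ≤ f z + 1/2^n := hDf z n
      have h4 : D n z = (fN n z : ℝ)/2^n := hDdef n z
      have h5 : ((fN n z : ℝ)+1)/2^n = (fN n z : ℝ)/2^n + 1/2^n := by ring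
      linarith
    -- lower estimate
    have hfvlow : f z ≤ f v + 1/2^n := by
      rcases hv2 with h0 | hnot
      · have h1 : f z ≤ D n z := hf_le z n
        have h2 : D n z = 0 := by rw [hDdef, h0]; simp
        have h3 := hf0 v
        linarith
      · have hge : fN n z ≤ fN n v := by
          by_contra hlt
          push_neg at hlt
          exact hnot (closure_mono
            (SHaux.V_mono w1 wmul n (show fN n v ≤ fN n z - 1 by omega)) (hfN_mem n v))
        have h1 : D n v ≤ f v + 1/2^n := hDf v n
        have h2 : f z ≤ D n z := hf_le z n
        have h3 : D n z ≤ D n v := by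
          rw [hDdef, hDdef]
          gcongr
        linarith
    rw [Real.dist_eq, abs_lt]
    constructor <;> linarith
  -- value at 1
  have hf1 : f 1 = 0 := by
    apply le_antisymm _ (hf0 1)
    have h0 : fN 0 (1:G) = 0 := by
      have : (0:ℕ) ∈ {k | (1:G) ∈ closure (SHaux.V W 0 k)} := by
        show (1:G) ∈ closure (SHaux.V W 0 0)
        rw [SHaux.V_zero]
        exact subset_closure rfl
      have h00 : fN 0 (1:G) ≤ 0 :=
        Nat.sInf_le (s := {k | (1:G) ∈ closure (SHaux.V W 0 k)}) this
      omega
    have h1 := hf_le 1 0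
    rw [hDdef, h0] at h1
    simpa using h1
  -- value at x⁻¹ * y
  have hfNg : ∀ n, fN n (x⁻¹*y) = 2^n := by
    intro n
    refine le_antisymm (hfN_le n _) ?_
    by_contra hlt
    push_neg at hlt
    have hmem := hfN_mem n (x⁻¹*y)
    have hsub : (x⁻¹*y) ∈ closure (W 2) :=
      closure_mono (SHaux.V_sub_W2 w1 wmul hlt) hmem
    exact hgW (wcl 1 hsub)
  have hfg : f (x⁻¹*y) = 1 := by
    apply le_antisymm
    · have h1 := hf_le (x⁻¹*y) 0
      rw [hDdef, hfNg 0] at h1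
      simpa using h1
    · apply le_ciInf
      intro n
      rw [hDdef, hfNg n]
      rw [le_div_iff₀ (by positivity)]
      push_cast
      ring_nf
      exact le_rfl
  refine ⟨fun w => f (x⁻¹ * w), hcont.comp (continuous_const.mul continuous_id), ?_⟩
  show f (x⁻¹ * x) ≠ f (x⁻¹ * y)
  rw [inv_mul_cancel, hf1, hfg]
  norm_num
end

section
/- Every Hausdorff topological monoid with open shifts is functionally Hausdorff: if S is a topological monoid with open shifts whose topology is Hausdorff (T2), then for any distinct points x, y ∈ S there is a continuous function f : S → ℝ with f x ≠ f y. -/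
open Set Topology Filter

section FHAux

variable {S : Type*} [Monoid S] [TopologicalSpace S] [ContinuousMul S]

/-- Right expansion of a set `C` by a set `V`. -/
def fhEexp (V C : Set S) : Set S := {z | ∃ v ∈ V, z * v ∈ C}

lemma fhEexp_isOpen {V C : Set S} (hC : IsOpen C) : IsOpen (fhEexp V C) := by
  have h : fhEexp V C = ⋃ v ∈ V, (fun z => z * v) ⁻¹' C := by
    ext z; simp [fhEexp]
  rw [h]
  exact isOpen_biUnion fun v _ => hC.preimage (continuous_mul_right v)

lemma fhSubset_Eexp {V C : Set S} (h1 : (1 : S) ∈ V) : C ⊆ fhEexp V C :=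
  fun z hz => ⟨1, h1, by simpa using hz⟩

lemma fhEexp_comp {V W U C : Set S} (h : ∀ v ∈ V, ∀ w ∈ W, v * w ∈ U) :
    fhEexp V (fhEexp W C) ⊆ fhEexp U C := by
  rintro z ⟨v, hv, w, hw, hzvw⟩
  refine ⟨v * w, h v hv w hw, ?_⟩
  rwa [← mul_assoc]

lemma fhClosure_subset_Eexp (hshift : ∀ a b : S, IsOpenMap fun x : S => a * x * b)
    {V : Set S} (C : Set S) (hV : IsOpen V) (h1 : (1 : S) ∈ V) :
    closure C ⊆ fhEexp V C := by
  intro z hz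
  have hopen : IsOpen ((fun w => z * w * 1) '' V) := hshift z 1 V hV
  have hmem : z ∈ (fun w => z * w * 1) '' V := ⟨1, h1, by simp⟩
  obtain ⟨t, ht, htC⟩ := mem_closure_iff.1 hz _ hopen hmem
  obtain ⟨w, hw, rfl⟩ := ht
  exact ⟨w, hw, by simpa using htC⟩

/-- The dyadic family of open sets. -/
def fhA (U : ℕ → Set S) (u : Set S) : ℕ → ℕ → Set S
  | 0, k => if k = 0 then u else fhEexp (U 0) u
  | n + 1, k =>
      if k % 2 = 0 then fhA U u n (k / 2) else fhEexp (U (n + 1)) (fhA U u n (k / 2))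

variable (U : ℕ → Set S) (u : Set S)

lemma fhA_zero : ∀ n, fhA U u n 0 = u := by
  intro n; induction n with
  | zero => simp [fhA]
  | succ n ih => simpa [fhA] using ih

lemma fhA_double (n k : ℕ) : fhA U u (n + 1) (2 * k) = fhA U u n k := by
  have h1 : (2 * k) % 2 = 0 := by omega
  have h2 : (2 * k) / 2 = k := by omega
  simp [fhA, h1, h2]

lemma fhA_isOpen (hUo : ∀ n, IsOpen (U n)) (hu : IsOpen u) :
    ∀ n k, IsOpen (fhA U u n k) := by
  intro n
  induction n with
  | zero =>
      intro k
      by_cases h : k = 0 <;> simp [fhA, h, hu, fhEexp_isOpen hu]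
  | succ n ih =>
      intro k
      by_cases h : k % 2 = 0 <;> simp [fhA, h, ih, fhEexp_isOpen (ih (k / 2))]

lemma fhA_step (hU1 : ∀ n, (1 : S) ∈ U n)
    (hUU : ∀ n, ∀ a ∈ U (n + 1), ∀ b ∈ U (n + 1), a * b ∈ U n) :
    ∀ n k, k + 1 ≤ 2 ^ n → fhEexp (U n) (fhA U u n k) ⊆ fhA U u n (k + 1) := by
  intro n
  induction n with
  | zero =>
      intro k hk
      have hk0 : k = 0 := by simpa using hk
      subst hk0
      simp [fhA]
  | succ n ih =>
      intro k hk
      rcases Nat.even_or_odd k with he | ho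
      · obtain ⟨j, rfl⟩ := he
        have hj2 : j + j = 2 * j := by omega
        rw [hj2]
        have h1 : (2 * j) % 2 = 0 := by omega
        have h2 : (2 * j + 1) % 2 ≠ 0 := by omega
        have h3 : (2 * j) / 2 = j := by omega
        have h4 : (2 * j + 1) / 2 = j := by omega
        show fhEexp (U (n + 1)) (fhA U u (n + 1) (2 * j)) ⊆ fhA U u (n + 1) (2 * j + 1)
        simp only [fhA, if_pos h1, if_neg h2, h3, h4]
        exact subset_rfl
      · obtain ⟨j, rfl⟩ := ho
        have h2 : (2 * j + 1) % 2 ≠ 0 := by omega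
        have h4 : (2 * j + 1) / 2 = j := by omega
        have h5 : 2 * j + 1 + 1 = 2 * (j + 1) := by omega
        have heq : fhA U u (n + 1) (2 * j + 1) = fhEexp (U (n + 1)) (fhA U u n j) := by
          simp [fhA, h2, h4]
        have hj1 : j + 1 ≤ 2 ^ n := by
          have h2n : 2 ^ (n + 1) = 2 * 2 ^ n := by ring
          omega
        calc fhEexp (U (n + 1)) (fhA U u (n + 1) (2 * j + 1))
            ⊆ fhEexp (U n) (fhA U u n j) := by rw [heq]; exact fhEexp_comp (hUU n)
          _ ⊆ fhA U u n (j + 1) := ih j hj1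
          _ = fhA U u (n + 1) (2 * j + 1 + 1) := by rw [h5, fhA_double]

lemma fhA_mono (hU1 : ∀ n, (1 : S) ∈ U n)
    (hUU : ∀ n, ∀ a ∈ U (n + 1), ∀ b ∈ U (n + 1), a * b ∈ U n)
    (n : ℕ) : ∀ j, j ≤ 2 ^ n → ∀ k, k ≤ j → fhA U u n k ⊆ fhA U u n j := by
  intro j
  induction j with
  | zero => intro _ k hk; simp [Nat.le_zero.1 hk]
  | succ j ih =>
      intro hj k hk
      rcases Nat.lt_or_ge k (j + 1) with h | h
      · have hk' : k ≤ j := by omega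
        have hj' : j ≤ 2 ^ n := by omega
        calc fhA U u n k ⊆ fhA U u n j := ih hj' k hk'
          _ ⊆ fhEexp (U n) (fhA U u n j) := fhSubset_Eexp (hU1 n)
          _ ⊆ fhA U u n (j + 1) := fhA_step U u hU1 hUU n j hj
      · have hkj : k = j + 1 := by omega
        subst hkj; exact subset_rfl

lemma fhA_lift : ∀ m n k, fhA U u (n + m) (k * 2 ^ m) = fhA U u n k := by
  intro m
  induction m with
  | zero => intro n k; simp
  | succ m ih =>
      intro n k
      have h1 : k * 2 ^ (m + 1) = 2 * (k * 2 ^ m) := by ring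
      have h2 : n + (m + 1) = (n + m) + 1 := by omega
      rw [h2, h1, fhA_double, ih]

lemma fhA_cross (hU1 : ∀ n, (1 : S) ∈ U n)
    (hUU : ∀ n, ∀ a ∈ U (n + 1), ∀ b ∈ U (n + 1), a * b ∈ U n)
    {m n k j : ℕ} (hkj : k * 2 ^ n ≤ j * 2 ^ m) (hj : j ≤ 2 ^ n) :
    fhA U u m k ⊆ fhA U u n j := by
  have e1 : fhA U u (m + n) (k * 2 ^ n) = fhA U u m k := fhA_lift U u n m k
  have e2 : fhA U u (n + m) (j * 2 ^ m) = fhA U u n j := fhA_lift U u m n j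
  rw [← e1, ← e2]
  have hcomm : m + n = n + m := by omega
  rw [hcomm]
  refine fhA_mono U u hU1 hUU (n + m) (j * 2 ^ m) ?_ _ hkj
  calc j * 2 ^ m ≤ 2 ^ n * 2 ^ m := Nat.mul_le_mul_right _ hj
    _ = 2 ^ (n + m) := by rw [pow_add]

lemma fhA_closure (hshift : ∀ a b : S, IsOpenMap fun x : S => a * x * b)
    (hUo : ∀ n, IsOpen (U n)) (hU1 : ∀ n, (1 : S) ∈ U n) (n k : ℕ) :
    closure (fhA U u n k) ⊆ fhA U u (n + 1) (2 * k + 1) := by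
  have h2 : (2 * k + 1) % 2 ≠ 0 := by omega
  have h4 : (2 * k + 1) / 2 = k := by omega
  have heq : fhA U u (n + 1) (2 * k + 1) = fhEexp (U (n + 1)) (fhA U u n k) := by
    simp [fhA, h2, h4]
  rw [heq]
  exact fhClosure_subset_Eexp hshift _ (hUo (n + 1)) (hU1 (n + 1))

lemma fhA_top : ∀ n, fhA U u n (2 ^ n) = fhEexp (U 0) u := by
  intro n
  induction n with
  | zero => simp [fhA]
  | succ n ih =>
      have h1 : 2 ^ (n + 1) = 2 * 2 ^ n := by ring
      rw [h1, fhA_double, ih]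

end FHAux

section FHMain

lemma fh_main_aux {S : Type*} [Monoid S] [TopologicalSpace S] [ContinuousMul S]
    (hshift : ∀ a b : S, IsOpenMap fun x : S => a * x * b)
    (U : ℕ → Set S) (u : Set S) (x y : S)
    (hUo : ∀ n, IsOpen (U n)) (hU1 : ∀ n, (1 : S) ∈ U n)
    (hUU : ∀ n, ∀ a ∈ U (n + 1), ∀ b ∈ U (n + 1), a * b ∈ U n)
    (hu : IsOpen u) (hx : x ∈ u) (hy : y ∉ fhEexp (U 0) u) :
    ∃ f : S → ℝ, Continuous f ∧ f x ≠ f y := by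
  classical
  set T : S → Set ℝ :=
    fun z => insert 1 {r | ∃ n k : ℕ, k ≤ 2 ^ n ∧ z ∈ fhA U u n k ∧ r = (k : ℝ) / 2 ^ n}
    with hT
  set f : S → ℝ := fun z => sInf (T z) with hf
  have hT1 : ∀ z, (1 : ℝ) ∈ T z := fun z => mem_insert _ _
  have hTne : ∀ z, (T z).Nonempty := fun z => ⟨1, hT1 z⟩
  have hTnonneg : ∀ z, ∀ r ∈ T z, (0 : ℝ) ≤ r := by
    intro z r hr
    rcases hr with h | ⟨n, k, _, _, rfl⟩
    · simp [h]
    · positivity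
  have hbdd : ∀ z, BddBelow (T z) := fun z => ⟨0, fun r hr => hTnonneg z r hr⟩
  have hmem_le : ∀ z, ∀ r ∈ T z, f z ≤ r := fun z r hr => csInf_le (hbdd z) hr
  have hf0 : ∀ z, 0 ≤ f z := fun z => le_csInf (hTne z) (hTnonneg z)
  have hfle1 : ∀ z, f z ≤ 1 := fun z => hmem_le z 1 (hT1 z)
  have hAle : ∀ z n k, k ≤ 2 ^ n → z ∈ fhA U u n k → f z ≤ (k : ℝ) / 2 ^ n := by
    intro z n k hk hz
    exact hmem_le z _ (Or.inr ⟨n, k, hk, hz, rfl⟩)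
  have hyA : ∀ n k, k ≤ 2 ^ n → y ∉ fhA U u n k := by
    intro n k hk hyk
    refine hy ?_
    have := fhA_mono U u hU1 hUU n (2 ^ n) le_rfl k hk hyk
    rwa [fhA_top] at this
  have hfx : f x = 0 := by
    refine le_antisymm ?_ (hf0 x)
    refine hmem_le x 0 (Or.inr ⟨0, 0, by norm_num, ?_, by norm_num⟩)
    rw [fhA_zero]; exact hx
  have hfy : f y = 1 := by
    refine le_antisymm (hfle1 y) (le_csInf (hTne y) ?_)
    intro r hr
    rcases hr with h | ⟨n, k, hk, hyk, rfl⟩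
    · simp [h]
    · exact absurd hyk (hyA n k hk)
  refine ⟨f, ?_, by rw [hfx, hfy]; norm_num⟩
  rw [continuous_iff_continuousAt]
  intro z
  have : Tendsto f (𝓝 z) (𝓝 (f z)) := by
    rw [tendsto_order]
    constructor
    · -- lower: ∀ a < f z, eventually a < f w
      intro a ha
      rcases lt_or_ge a 0 with ha0 | ha0
      · exact Eventually.of_forall fun w => lt_of_lt_of_le ha0 (hf0 w)
      · have hδ : 0 < f z - a := by linarith
        obtain ⟨n, hn⟩ := pow_unbounded_of_one_lt (2 / (f z - a)) (one_lt_two (α := ℝ))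
        have h2n : (0 : ℝ) < 2 ^ n := by positivity
        have h2lt : (2 : ℝ) < (f z - a) * 2 ^ n := by
          rw [div_lt_iff₀ hδ] at hn; linarith
        obtain ⟨j, haj, hjfz, hj1⟩ :
            ∃ j : ℕ, a < (j : ℝ) / 2 ^ n ∧ ((j : ℝ) + 1) / 2 ^ n < f z ∧ j + 1 ≤ 2 ^ n := by
          have hfl : (⌊a * 2 ^ n⌋₊ : ℝ) ≤ a * 2 ^ n := Nat.floor_le (by positivity)
          have hub : (⌊a * 2 ^ n⌋₊ : ℝ) + 2 < f z * 2 ^ n := by nlinarith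
          refine ⟨⌊a * 2 ^ n⌋₊ + 1, ?_, ?_, ?_⟩
          · rw [lt_div_iff₀ h2n]
            have := Nat.lt_floor_add_one (a * 2 ^ n)
            push_cast
            linarith
          · rw [div_lt_iff₀ h2n]
            push_cast
            linarith
          · have hle : f z * 2 ^ n ≤ 2 ^ n := by nlinarith [hfle1 z]
            have hcast : ((⌊a * 2 ^ n⌋₊ + 1 + 1 : ℕ) : ℝ) < ((2 ^ n : ℕ) : ℝ) := by
              push_cast
              linarith
            exact (Nat.cast_lt.1 hcast).le
        have hznc : z ∉ closure (fhA U u n j) := by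
          intro hc
          have h1 : z ∈ fhA U u (n + 1) (2 * j + 1) :=
            fhA_closure U u hshift hUo hU1 n j hc
          have h2 : z ∈ fhA U u (n + 1) (2 * (j + 1)) := by
            refine fhA_mono U u hU1 hUU (n + 1) (2 * (j + 1)) ?_ (2 * j + 1) (by omega) h1
            have : 2 ^ (n + 1) = 2 * 2 ^ n := by ring
            omega
          rw [fhA_double] at h2
          have h3 := hAle z n (j + 1) hj1 h2
          have h4 : ((j + 1 : ℕ) : ℝ) / 2 ^ n < f z := by push_cast; exact hjfz
          linarith
        refine eventually_iff_exists_mem.2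
          ⟨(closure (fhA U u n j))ᶜ, (isClosed_closure.isOpen_compl).mem_nhds hznc, ?_⟩
        intro w hw
        have hwge : (j : ℝ) / 2 ^ n ≤ f w := by
          refine le_csInf (hTne w) ?_
          intro r hr
          rcases hr with h | ⟨m, k, hk, hwk, rfl⟩
          · subst h
            rw [div_le_one h2n]
            have hcast : ((j : ℕ) : ℝ) ≤ ((2 ^ n : ℕ) : ℝ) :=
              Nat.cast_le.2 (by omega : j ≤ 2 ^ n)
            push_cast at hcast; linarith
          · by_contra hlt'
            push_neg at hlt'
            have h2m : (0 : ℝ) < 2 ^ m := by positivity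
            have hnat : k * 2 ^ n < j * 2 ^ m := by
              have hr := (div_lt_div_iff₀ h2m h2n).1 hlt'
              have hcast : ((k * 2 ^ n : ℕ) : ℝ) < ((j * 2 ^ m : ℕ) : ℝ) := by
                push_cast; push_cast at hr; linarith
              exact_mod_cast hcast
            have hsub := fhA_cross U u hU1 hUU (m := m) (n := n) (k := k) (j := j)
              hnat.le (by omega)
            exact hw (subset_closure (hsub hwk))
        exact lt_of_lt_of_le haj hwge
    · -- upper: ∀ a > f z, eventually f w < a
      intro a ha
      obtain ⟨r, hr, hra⟩ := exists_lt_of_csInf_lt (hTne z) ha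
      rcases hr with h | ⟨n, k, hk, hzk, rfl⟩
      · subst h
        exact Eventually.of_forall fun w => lt_of_le_of_lt (hfle1 w) hra
      · refine eventually_iff_exists_mem.2
          ⟨fhA U u n k, (fhA_isOpen U u hUo hu n k).mem_nhds hzk, ?_⟩
        intro w hw
        exact lt_of_le_of_lt (hAle w n k hk hw) hra
  exact this

end FHMain

/-- Every Hausdorff topological monoid with open shifts is
functionally Hausdorff. -/
theorem functionallyHausdorff_of_t2_monoid {S : Type*} [Monoid S]
    [TopologicalSpace S] [ContinuousMul S] [T2Space S]
    (hshift : ∀ a b : S, IsOpenMap fun x : S => a * x * b) :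
    ∀ x y : S, x ≠ y → ∃ f : S → ℝ, Continuous f ∧ f x ≠ f y := by
  intro x y hxy
  obtain ⟨u, v, hu, hv, hxu, hyv, huv⟩ := t2_separation hxy
  -- a neighborhood V0 of 1 with y * V0 ⊆ v
  have hcont : ContinuousAt (fun w : S => y * w) 1 := (continuous_mul_left y).continuousAt
  have hv1 : v ∈ 𝓝 ((fun w : S => y * w) 1) := by
    simpa using hv.mem_nhds hyv
  have hpre : (fun w : S => y * w) ⁻¹' v ∈ 𝓝 (1 : S) := hcont hv1
  obtain ⟨V0, hV0sub, hV0open, hV0mem⟩ := mem_nhds_iff.1 hpre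
  -- multiplication step
  have step : ∀ A : Set S, IsOpen A → (1 : S) ∈ A →
      ∃ B : Set S, IsOpen B ∧ (1 : S) ∈ B ∧ ∀ a ∈ B, ∀ b ∈ B, a * b ∈ A := by
    intro A hA h1
    have hmem : A ∈ 𝓝 ((1 : S) * 1) := by simpa using hA.mem_nhds h1
    have h2 := (continuous_mul (M := S)).tendsto ((1 : S), (1 : S)) hmem
    rw [nhds_prod_eq] at h2
    obtain ⟨P, hP, Q, hQ, hPQ⟩ := Filter.mem_prod_iff.1 h2
    obtain ⟨P', hP'sub, hP'o, hP'1⟩ := mem_nhds_iff.1 hP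
    obtain ⟨Q', hQ'sub, hQ'o, hQ'1⟩ := mem_nhds_iff.1 hQ
    refine ⟨P' ∩ Q', hP'o.inter hQ'o, ⟨hP'1, hQ'1⟩, ?_⟩
    intro a ha b hb
    exact hPQ (Set.mk_mem_prod (hP'sub ha.1) (hQ'sub hb.2))
  -- build the sequence of neighborhoods of 1
  have step' : ∀ t : {B : Set S // IsOpen B ∧ (1 : S) ∈ B},
      ∃ t' : {B : Set S // IsOpen B ∧ (1 : S) ∈ B},
        ∀ a ∈ t'.1, ∀ b ∈ t'.1, a * b ∈ t.1 := by
    intro t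
    obtain ⟨B, hBo, hB1, hBB⟩ := step t.1 t.2.1 t.2.2
    exact ⟨⟨B, hBo, hB1⟩, hBB⟩
  choose F hF using step'
  let Useq : ℕ → {B : Set S // IsOpen B ∧ (1 : S) ∈ B} :=
    fun n => Nat.rec ⟨V0, hV0open, hV0mem⟩ (fun _ t => F t) n
  have hy' : y ∉ fhEexp ((fun n => (Useq n).1) 0) u := by
    rintro ⟨w, hw, hyw⟩
    have : y * w ∈ v := hV0sub hw
    exact (Set.disjoint_left.1 huv hyw) this
  exact fh_main_aux hshift (fun n => (Useq n).1) u x y (fun n => (Useq n).2.1)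
    (fun n => (Useq n).2.2) (fun n => hF (Useq n)) hu hxu hy'
end

section
/- Every first-countable Hausdorff topological monoid with open shifts is submetrizable: if S is a topological monoid with open shifts whose topology is Hausdorff (T2) and first countable, then there exists a metric space structure on S whose induced topology is coarser than the topology of S. -/
/-!
For a neighbourhood `V` of `1`, relate `x` and `y` when `V * x` meets `y * V` and `V * y` meets
`x * V`. These relations are reflexive and symmetric, and the relation of `V * V` contains the
square of the relation of `V`; since every neighbourhood of `1` contains such a `V * V`, they
form a base of a uniformity, countably generated when `1` has a countable neighbourhood base.
Continuity of the translations and the Hausdorff property make it separated, and open shifts make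
`V * x ∩ x * V` a neighbourhood of `x` inside the `V`-ball around `x`, so the uniform topology is
coarser than the given one. A separated countably generated uniformity is metrizable.
-/

open Filter Topology Pointwise SetRel

section Monoid

variable {M : Type*} [Monoid M]

/-- `(x, y) ∈ shiftRel V` iff `V * x` meets `y * V`. -/
def shiftRel (V : Set M) : SetRel M M :=
  {p | ∃ a ∈ V, ∃ b ∈ V, a * p.1 = p.2 * b}

theorem shiftRel_mono : Monotone (shiftRel : Set M → SetRel M M) :=
  fun _ _ hVW _ ⟨a, ha, b, hb, h⟩ => ⟨a, hVW ha, b, hVW hb, h⟩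

theorem self_mem_shiftRel {V : Set M} (hV : (1 : M) ∈ V) (x : M) : (x, x) ∈ shiftRel V :=
  ⟨1, hV, 1, hV, by rw [one_mul, mul_one]⟩

theorem mem_shiftRel_trans {V W : Set M} {x y z : M} (hxy : (x, y) ∈ shiftRel V)
    (hyz : (y, z) ∈ shiftRel W) : (x, z) ∈ shiftRel (W * V) := by
  obtain ⟨a, ha, b, hb, hab⟩ := hxy
  obtain ⟨c, hc, d, hd, hcd⟩ := hyz
  refine ⟨c * a, Set.mul_mem_mul hc ha, d * b, Set.mul_mem_mul hd hb, ?_⟩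
  calc c * a * x = c * (y * b) := by rw [mul_assoc, hab]
    _ = z * (d * b) := by rw [← mul_assoc, hcd, mul_assoc]

def shiftEntourage (V : Set M) : SetRel M M :=
  shiftRel V ∩ Prod.swap ⁻¹' shiftRel V

theorem shiftEntourage_mono : Monotone (shiftEntourage : Set M → SetRel M M) :=
  fun _ _ hVW => Set.inter_subset_inter (shiftRel_mono hVW)
    (Set.preimage_mono (shiftRel_mono hVW))

theorem self_mem_shiftEntourage {V : Set M} (hV : (1 : M) ∈ V) (x : M) :
    (x, x) ∈ shiftEntourage V :=
  ⟨self_mem_shiftRel hV x, self_mem_shiftRel hV x⟩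

theorem swap_mem_shiftEntourage {V : Set M} {p : M × M} (hp : p ∈ shiftEntourage V) :
    p.swap ∈ shiftEntourage V :=
  ⟨hp.2, hp.1⟩

theorem shiftEntourage_comp_subset (V : Set M) :
    shiftEntourage V ○ shiftEntourage V ⊆ shiftEntourage (V * V) := by
  rintro ⟨x, z⟩ ⟨y, hxy, hyz⟩
  exact ⟨mem_shiftRel_trans hxy.1 hyz.1, mem_shiftRel_trans hyz.2 hxy.2⟩

variable [TopologicalSpace M] [ContinuousMul M]

variable (M) in
abbrev shiftUniformSpace : UniformSpace M :=
  .ofCore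
    { uniformity := (𝓝 (1 : M)).lift' shiftEntourage
      refl := le_lift'.2 fun _ hV => Filter.mem_principal.2 <| by
        rintro ⟨x, _⟩ rfl
        exact self_mem_shiftEntourage (mem_of_mem_nhds hV) x
      symm := tendsto_lift'.2 fun _ hV =>
        mem_of_superset (mem_lift' hV) fun _ => swap_mem_shiftEntourage
      comp := le_lift'.2 fun _ hV => by
        obtain ⟨W, hWo, hW1, hWV⟩ := exists_open_nhds_one_mul_subset hV
        refine mem_of_superset (mem_lift' (mem_lift' (hWo.mem_nhds hW1))) ?_
        exact (shiftEntourage_comp_subset W).trans (shiftEntourage_mono hWV) }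

theorem shiftUniformSpace_uniformity :
    @uniformity M (shiftUniformSpace M) = (𝓝 (1 : M)).lift' shiftEntourage :=
  rfl

theorem shiftUniformSpace_isCountablyGenerated [FirstCountableTopology M] :
    IsCountablyGenerated (@uniformity M (shiftUniformSpace M)) := by
  obtain ⟨u, hu⟩ := (𝓝 (1 : M)).exists_antitone_basis
  exact (hu.toHasBasis.lift' shiftEntourage_mono).isCountablyGenerated

theorem shiftUniformSpace_t0Space [T2Space M] :
    @T0Space M (shiftUniformSpace M).toTopologicalSpace := by
  let := shiftUniformSpace M
  refine t0Space_iff_uniformity'.2 fun x y hxy => ?_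
  obtain ⟨A, B, hA, hB, hAB⟩ := t2_separation_nhds hxy
  have hAx : (· * x) ⁻¹' A ∈ 𝓝 (1 : M) :=
    (continuous_mul_const x).tendsto' 1 x (one_mul x) hA
  have hBy : (y * ·) ⁻¹' B ∈ 𝓝 (1 : M) :=
    (continuous_const_mul y).tendsto' 1 y (mul_one y) hB
  refine ⟨shiftEntourage _, mem_lift' (inter_mem hAx hBy), fun ⟨⟨a, ha, b, hb, hab⟩, _⟩ => ?_⟩
  exact hAB.ne_of_mem ha.1 hb.2 hab

theorem le_shiftUniformSpace_toTopologicalSpace (hleft : ∀ a : M, IsOpenMap (a * ·))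
    (hright : ∀ a : M, IsOpenMap (· * a)) :
    ‹TopologicalSpace M› ≤ (shiftUniformSpace M).toTopologicalSpace := by
  refine (le_iff_nhds _ _).2 fun x => ?_
  rw [@nhds_eq_comap_uniformity M (shiftUniformSpace M), shiftUniformSpace_uniformity,
    comap_lift'_eq]
  refine le_lift'.2 fun V hV => ?_
  have hVx : (· * x) '' V ∈ 𝓝 x := by simpa using (hright x).image_mem_nhds hV
  have hxV : (x * ·) '' V ∈ 𝓝 x := by simpa using (hleft x).image_mem_nhds hV
  refine mem_of_superset (inter_mem hVx hxV) ?_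
  rintro _ ⟨⟨a, ha, rfl⟩, ⟨b, hb, hba⟩⟩
  refine ⟨⟨a, ha, 1, mem_of_mem_nhds hV, (mul_one _).symm⟩, ⟨1, mem_of_mem_nhds hV, b, hb, ?_⟩⟩
  simp only [Prod.swap_prod_mk, one_mul, hba]

end Monoid

/-- Corollary `last` for monoids. Every first-countable
Hausdorff topological monoid with open shifts is submetrizable: there is a
metric on `S` whose induced topology is coarser than the topology of `S`. -/
theorem submetrizable_of_firstCountable_t2_monoid {S : Type*} [Monoid S]
    [TopologicalSpace S] [ContinuousMul S] [T2Space S]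
    [FirstCountableTopology S]
    (hshift : ∀ a b : S, IsOpenMap fun x : S => a * x * b) :
    ∃ m : MetricSpace S,
      ∀ t : Set S, IsOpen[m.toUniformSpace.toTopologicalSpace] t → IsOpen t := by
  have hleft (a : S) : IsOpenMap (a * ·) := by simpa using hshift a 1
  have hright (a : S) : IsOpenMap (· * a) := by simpa using hshift 1 a
  have := shiftUniformSpace_isCountablyGenerated (M := S)
  exact ⟨@UniformSpace.metricSpace S (shiftUniformSpace S) _ shiftUniformSpace_t0Space,
    le_shiftUniformSpace_toTopologicalSpace hleft hright⟩
end

section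
/- Every Hausdorff paratopological group is functionally Hausdorff, and every first-countable Hausdorff paratopological group is submetrizable. That is, if G is a group equipped with a Hausdorff (T2) topology for which multiplication (x,y) ↦ x*y is jointly continuous, then for any distinct points x, y ∈ G there is a continuous function f : G → ℝ with f x ≠ f y; and if moreover the topology of G is first countable, then there exists a metric space structure on G whose induced topology is coarser than the topology of G. -/
open Pointwise Topology Set

set_option linter.unusedSectionVars false

namespace ParatopAux

variable {G : Type*} [Group G] [TopologicalSpace G] [ContinuousMul G]

/-- In a paratopological group, `closure S ⊆ S * W⁻¹` for every open `W ∋ 1`. -/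
theorem closure_subset_mul_inv (S : Set G) {W : Set G} (hW : IsOpen W) (h1 : (1:G) ∈ W) :
    closure S ⊆ S * W⁻¹ := by
  intro x hx
  have hxW : x ∈ (fun y => x * y) '' W := ⟨1, h1, by simp⟩
  have hopen : IsOpen ((fun y => x * y) '' W) := (isOpenMap_mul_left x) W hW
  rcases mem_closure_iff.1 hx _ hopen hxW with ⟨a, ⟨w, hwW, haw⟩, haS⟩
  refine ⟨a, haS, w⁻¹, inv_mem_inv.2 hwW, ?_⟩
  subst haw; group

/-- Existence of a sequence of open neighborhoods of `1` with `V (n+1) * V (n+1) ⊆ V n`. -/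
theorem exists_sq_seq (U₀ : Set G) (hO : IsOpen U₀) (h1 : (1:G) ∈ U₀) :
    ∃ V : ℕ → Set G, V 0 = U₀ ∧ (∀ n, IsOpen (V n)) ∧ (∀ n, (1:G) ∈ V n) ∧
      ∀ n, V (n+1) * V (n+1) ⊆ V n := by
  have step : ∀ t : {s : Set G // IsOpen s ∧ (1:G) ∈ s},
      ∃ t' : {s : Set G // IsOpen s ∧ (1:G) ∈ s}, t'.1 * t'.1 ⊆ t.1 := by
    rintro ⟨s, hs, h1s⟩
    rcases exists_open_nhds_one_mul_subset (hs.mem_nhds h1s) with ⟨V, hV, h1V, hVV⟩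
    exact ⟨⟨V, hV, h1V⟩, hVV⟩
  choose F hF using step
  refine ⟨fun n => (F^[n] ⟨U₀, hO, h1⟩).1, rfl, fun n => (F^[n] ⟨U₀, hO, h1⟩).2.1,
    fun n => (F^[n] ⟨U₀, hO, h1⟩).2.2, fun n => ?_⟩
  show (F^[n+1] ⟨U₀, hO, h1⟩).1 * (F^[n+1] ⟨U₀, hO, h1⟩).1 ⊆ (F^[n] ⟨U₀, hO, h1⟩).1
  rw [Function.iterate_succ_apply']
  exact hF _

/-- Dyadic chain of sets: `Eset V n k` corresponds to the dyadic number `k / 2^n`. -/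
def Eset (V : ℕ → Set G) : ℕ → ℕ → Set G
  | 0, k => if k = 0 then {1} else if k = 1 then V 0 else Set.univ
  | (n+1), k =>
      if k = 0 then {1} else if 2^(n+1) < k then Set.univ
      else if k % 2 = 0 then Eset V n (k / 2) else V (n+1) * Eset V n (k / 2)

variable {V : ℕ → Set G}

theorem Eset_zero (n : ℕ) : Eset V n 0 = {1} := by cases n <;> simp [Eset]

theorem Eset_univ : ∀ n k, 2^n < k → Eset V n k = Set.univ := by
  intro n
  induction n with
  | zero =>
      intro k hk
      have h0 : k ≠ 0 := by omega
      have h1 : k ≠ 1 := by simp at hk; omega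
      simp [Eset, h0, h1]
  | succ n ih =>
      intro k hk
      have hp : 0 < 2^(n+1) := Nat.two_pow_pos _
      have h0 : k ≠ 0 := by omega
      simp [Eset, h0, hk]

theorem Eset_one (n : ℕ) : Eset V n 1 = V n := by
  cases n with
  | zero => simp [Eset]
  | succ n =>
      have h : ¬ (2^(n+1) < 1) := by have := Nat.two_pow_pos (n+1); omega
      simp [Eset, h, Eset_zero]

theorem Eset_double (n k : ℕ) : Eset V (n+1) (2*k) = Eset V n k := by
  rcases Nat.eq_zero_or_pos k with rfl | hk
  · simp [Eset_zero]
  by_cases hbig : 2^n < k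
  · rw [Eset_univ n k hbig, Eset_univ (n+1) (2*k) (by rw [pow_succ]; omega)]
  · have h0 : 2*k ≠ 0 := by omega
    have h1 : ¬ (2^(n+1) < 2*k) := by rw [pow_succ]; omega
    have h2 : (2*k) % 2 = 0 := by omega
    have h3 : (2*k) / 2 = k := by omega
    simp [Eset, h0, h1, h2, h3]

theorem Eset_absorb (hVsq : ∀ n, V (n+1) * V (n+1) ⊆ V n) :
    ∀ n k, V n * Eset V n k ⊆ Eset V n (k+1) := by
  intro n
  induction n with
  | zero =>
      intro k
      rcases Nat.eq_zero_or_pos k with rfl | hk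
      · rw [Eset_zero, Eset_one]; simp [Set.mul_singleton]
      · rw [Eset_univ 0 (k+1) (by omega)]; exact subset_univ _
  | succ n ih =>
      intro k
      rcases Nat.eq_zero_or_pos k with rfl | hk
      · rw [Eset_zero, Eset_one]; simp [Set.mul_singleton]
      by_cases hbig : 2^(n+1) < k + 1
      · rw [Eset_univ (n+1) (k+1) hbig]; exact subset_univ _
      -- k + 1 ≤ 2^(n+1), k ≥ 1
      have hkb : ¬ (2^(n+1) < k) := by omega
      have hk0 : k ≠ 0 := by omega
      have hk10 : k + 1 ≠ 0 := by omega
      rcases Nat.even_or_odd k with ⟨j, hj⟩ | ⟨j, hj⟩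
      · -- k = 2j, target: E (n+1) (2j+1) = V(n+1) * E n j
        subst hj
        have hmod : (j + j) % 2 = 0 := by omega
        have hmod1 : (j + j + 1) % 2 ≠ 0 := by omega
        have hdiv : (j + j) / 2 = j := by omega
        have hdiv1 : (j + j + 1) / 2 = j := by omega
        simp only [Eset, hk0, if_neg hk0, if_neg hk10, if_neg hbig, if_neg hkb,
          if_pos hmod, hdiv, hdiv1]
        rw [if_neg hmod1]
        exact subset_rfl
      · -- k = 2j+1, target: V(n+1) * (V(n+1) * E n j) ⊆ E n (j+1) = E (n+1) (2j+2)
        subst hj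
        have hmod : (2*j + 1) % 2 ≠ 0 := by omega
        have hdiv : (2*j + 1) / 2 = j := by omega
        have hmod2 : (2*j + 1 + 1) % 2 = 0 := by omega
        have hdiv2 : (2*j + 1 + 1) / 2 = j + 1 := by omega
        simp only [Eset, if_neg hk0, if_neg hk10, if_neg hbig, if_neg hkb,
          if_neg hmod, if_pos hmod2, hdiv, hdiv2]
        calc V (n+1) * (V (n+1) * Eset V n j) = (V (n+1) * V (n+1)) * Eset V n j := by
              rw [mul_assoc]
          _ ⊆ V n * Eset V n j := mul_subset_mul_right (hVsq n)
          _ ⊆ Eset V n (j+1) := ih j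

theorem one_mem_Eset (hV1 : ∀ n, (1:G) ∈ V n) : ∀ n k, (1:G) ∈ Eset V n k := by
  intro n
  induction n with
  | zero =>
      intro k
      rcases k with _ | _ | k <;> simp [Eset, hV1 0]
  | succ n ih =>
      intro k
      rcases Nat.eq_zero_or_pos k with rfl | hk
      · simp [Eset_zero]
      by_cases hbig : 2^(n+1) < k
      · simp [Eset_univ _ _ hbig]
      have hk0 : k ≠ 0 := by omega
      by_cases hmod : k % 2 = 0
      · simp only [Eset, if_neg hk0, if_neg hbig, if_pos hmod]; exact ih _
      · simp only [Eset, if_neg hk0, if_neg hbig, if_neg hmod]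
        exact ⟨1, hV1 (n+1), 1, ih _, by simp⟩

theorem Eset_mono_succ (hVsq : ∀ n, V (n+1) * V (n+1) ⊆ V n) (hV1 : ∀ n, (1:G) ∈ V n)
    (n k : ℕ) : Eset V n k ⊆ Eset V n (k+1) := by
  intro x hx
  have : (1:G) * x ∈ V n * Eset V n k := mul_mem_mul (hV1 n) hx
  rw [one_mul] at this
  exact Eset_absorb hVsq n k this

theorem Eset_mono (hVsq : ∀ n, V (n+1) * V (n+1) ⊆ V n) (hV1 : ∀ n, (1:G) ∈ V n)
    {n k k' : ℕ} (h : k ≤ k') : Eset V n k ⊆ Eset V n k' := by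
  induction h with
  | refl => exact subset_rfl
  | step h ih => exact ih.trans (Eset_mono_succ hVsq hV1 _ _)

theorem Eset_pow_double (m n k : ℕ) : Eset V (n+m) (2^m * k) = Eset V n k := by
  induction m with
  | zero => simp
  | succ m ih =>
      have : 2^(m+1)*k = 2*(2^m*k) := by ring
      rw [this]
      have hh : n + (m+1) = (n+m) + 1 := by omega
      rw [hh, Eset_double, ih]

theorem Eset_top (n : ℕ) : Eset V n (2^n) = V 0 := by
  have := Eset_pow_double (V := V) n 0 1
  simpa [Eset] using this

theorem isOpen_Eset (hVo : ∀ n, IsOpen (V n)) : ∀ n k, 1 ≤ k → IsOpen (Eset V n k) := by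
  intro n
  induction n with
  | zero =>
      intro k hk
      rcases k with _ | _ | k <;> simp [Eset, hVo 0] <;> omega
  | succ n ih =>
      intro k hk
      by_cases hbig : 2^(n+1) < k
      · simp [Eset_univ _ _ hbig]
      have hk0 : k ≠ 0 := by omega
      by_cases hmod : k % 2 = 0
      · simp only [Eset, if_neg hk0, if_neg hbig, if_pos hmod]
        exact ih _ (by omega)
      · simp only [Eset, if_neg hk0, if_neg hbig, if_neg hmod]
        exact (hVo (n+1)).mul_right

end ParatopAux

namespace Chain

variable {G : Type*} [Group G] [TopologicalSpace G] [ContinuousMul G]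
variable (O : Set G) (V : ℕ → Set G)

open ParatopAux

/-- The Urysohn-type chain of open sets `W n k = O * (E n k)⁻¹`. -/
def Wset (n k : ℕ) : Set G := O * (Eset V n k)⁻¹

/-- The set of dyadic "levels" of a point. -/
def dyadics (x : G) : Set ℝ :=
  {1} ∪ {q : ℝ | ∃ n k : ℕ, 0 < k ∧ q = (k:ℝ)/2^n ∧ x ∈ Wset O V n k}

/-- The separating function. -/
noncomputable def chainFun (x : G) : ℝ := sInf (dyadics O V x)

variable {O V}

theorem isOpen_Wset (hO : IsOpen O) (n k : ℕ) : IsOpen (Wset O V n k) := hO.mul_right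

theorem one_mem_Wset (h1O : (1:G) ∈ O) (hV1 : ∀ n, (1:G) ∈ V n) (n k : ℕ) :
    (1:G) ∈ Wset O V n k :=
  ⟨1, h1O, 1, by rw [Set.mem_inv, inv_one]; exact one_mem_Eset hV1 n k, by simp⟩

theorem Wset_mono (hVsq : ∀ n, V (n+1) * V (n+1) ⊆ V n) (hV1 : ∀ n, (1:G) ∈ V n)
    {a b n k : ℕ} (h : b * 2^n ≤ k * 2^a) :
    Wset O V a b ⊆ Wset O V n k := by
  have e1 : Eset V a b = Eset V (a+n) (2^n * b) := (Eset_pow_double n a b).symm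
  have e2 : Eset V n k = Eset V (n+a) (2^a * k) := (Eset_pow_double a n k).symm
  have h' : 2^n * b ≤ 2^a * k := by
    rw [Nat.mul_comm, Nat.mul_comm (2^a) k]; exact h
  have hsub : Eset V a b ⊆ Eset V n k := by
    rw [e1, e2, Nat.add_comm n a]
    exact Eset_mono hVsq hV1 h'
  exact mul_subset_mul_left (inv_subset_inv.2 hsub)

theorem Wset_closure (hVo : ∀ n, IsOpen (V n)) (hV1 : ∀ n, (1:G) ∈ V n)
    (hVsq : ∀ n, V (n+1) * V (n+1) ⊆ V n) (n k : ℕ) :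
    closure (Wset O V n k) ⊆ Wset O V (n+1) (2*k+1) := by
  have h1 : closure (Wset O V n k) ⊆ (O * (Eset V n k)⁻¹) * (V (n+1))⁻¹ :=
    closure_subset_mul_inv _ (hVo (n+1)) (hV1 (n+1))
  have h2 : (O * (Eset V n k)⁻¹) * (V (n+1))⁻¹ = O * (V (n+1) * Eset V n k)⁻¹ := by
    rw [mul_assoc, ← mul_inv_rev]
  have h3 : V (n+1) * Eset V n k ⊆ Eset V (n+1) (2*k+1) := by
    rw [← Eset_double n k]
    exact Eset_absorb hVsq (n+1) (2*k)
  refine h1.trans ?_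
  rw [h2]
  exact mul_subset_mul_left (inv_subset_inv.2 h3)

theorem dyadics_nonempty (x : G) : (dyadics O V x).Nonempty := ⟨1, Or.inl rfl⟩

theorem dyadics_bddBelow (x : G) : BddBelow (dyadics O V x) := by
  refine ⟨0, ?_⟩
  rintro q (rfl | ⟨n, k, hk, rfl, _⟩)
  · norm_num
  · positivity

theorem chainFun_le_one (x : G) : chainFun O V x ≤ 1 :=
  csInf_le (dyadics_bddBelow x) (Or.inl rfl)

theorem chainFun_nonneg (x : G) : 0 ≤ chainFun O V x := by
  refine le_csInf (dyadics_nonempty x) ?_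
  rintro q (rfl | ⟨n, k, hk, rfl, _⟩)
  · norm_num
  · positivity

theorem chainFun_le {x : G} {n k : ℕ} (hk : 0 < k) (hx : x ∈ Wset O V n k) :
    chainFun O V x ≤ (k:ℝ)/2^n :=
  csInf_le (dyadics_bddBelow x) (Or.inr ⟨n, k, hk, rfl, hx⟩)

theorem chainFun_lt {x : G} {q : ℝ} (h : chainFun O V x < q) (hq : q ≤ 1) :
    ∃ n k : ℕ, 0 < k ∧ (k:ℝ)/2^n < q ∧ x ∈ Wset O V n k := by
  obtain ⟨r, hr, hrq⟩ := exists_lt_of_csInf_lt (dyadics_nonempty x) h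
  rcases hr with rfl | ⟨n, k, hk, rfl, hx⟩
  · linarith
  · exact ⟨n, k, hk, hrq, hx⟩

theorem dyadic_le_dyadic {a b n k : ℕ} (h : (b:ℝ)/2^a ≤ (k:ℝ)/2^n) :
    b * 2^n ≤ k * 2^a := by
  have h2a : (0:ℝ) < 2^a := by positivity
  have h2n : (0:ℝ) < 2^n := by positivity
  have := (div_le_div_iff₀ h2a h2n).1 h
  exact_mod_cast this

theorem le_chainFun_of_notMem (hVsq : ∀ n, V (n+1) * V (n+1) ⊆ V n)
    (hV1 : ∀ n, (1:G) ∈ V n) {x : G} {n k : ℕ}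
    (hk1 : (k:ℝ)/2^n ≤ 1) (h : x ∉ Wset O V n k) :
    (k:ℝ)/2^n ≤ chainFun O V x := by
  refine le_csInf (dyadics_nonempty x) ?_
  rintro q (rfl | ⟨a, b, hb, rfl, hx⟩)
  · exact hk1
  · by_contra hlt
    push_neg at hlt
    exact h (Wset_mono hVsq hV1 (dyadic_le_dyadic hlt.le) hx)

theorem exists_dyadic_btwn {a b : ℝ} (ha : 0 ≤ a) (hab : a < b) :
    ∃ n k : ℕ, 0 < k ∧ a < (k:ℝ)/2^n ∧ (k:ℝ)/2^n < b := by
  obtain ⟨n, hn⟩ : ∃ n : ℕ, ((1:ℝ)/2)^n < b - a :=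
    exists_pow_lt_of_lt_one (by linarith) (by norm_num)
  have hn' : (1:ℝ)/2^n < b - a := by
    rwa [div_pow, one_pow] at hn
  have h2 : (0:ℝ) < 2^n := by positivity
  refine ⟨n, ⌊a * 2^n⌋₊ + 1, Nat.succ_pos _, ?_, ?_⟩
  · rw [lt_div_iff₀ h2]
    have := Nat.lt_floor_add_one (a * 2^n)
    push_cast
    linarith
  · rw [div_lt_iff₀ h2]
    have hfl : (⌊a * 2^n⌋₊ : ℝ) ≤ a * 2^n := Nat.floor_le (by positivity)
    have h1 : (1:ℝ) < (b - a) * 2^n := (div_lt_iff₀ h2).1 hn'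
    push_cast
    nlinarith

theorem continuous_chainFun (hO : IsOpen O) (hVo : ∀ n, IsOpen (V n))
    (hV1 : ∀ n, (1:G) ∈ V n) (hVsq : ∀ n, V (n+1) * V (n+1) ⊆ V n) :
    Continuous (chainFun O V) := by
  rw [continuous_iff_continuousAt]
  intro x
  rw [ContinuousAt, Metric.tendsto_nhds]
  intro ε hε
  have husc : ∀ᶠ y in 𝓝 x, chainFun O V y < chainFun O V x + ε := by
    by_cases h1 : 1 < chainFun O V x + ε
    · exact Filter.Eventually.of_forall fun y => lt_of_le_of_lt (chainFun_le_one y) h1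
    · push_neg at h1
      obtain ⟨n, k, hk, hlt, hx⟩ :=
        chainFun_lt (x := x) (q := chainFun O V x + ε) (by linarith) h1
      have : ∀ᶠ y in 𝓝 x, y ∈ Wset O V n k :=
        (isOpen_Wset hO n k).eventually_mem hx
      exact this.mono fun y hy => lt_of_le_of_lt (chainFun_le hk hy) hlt
  have hlsc : ∀ᶠ y in 𝓝 x, chainFun O V x - ε < chainFun O V y := by
    by_cases h0 : chainFun O V x - ε < 0
    · exact Filter.Eventually.of_forall fun y => lt_of_lt_of_le h0 (chainFun_nonneg y)
    · push_neg at h0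
      obtain ⟨n₀, k₀, hk₀, hgt, hlt⟩ :=
        exists_dyadic_btwn h0 (by linarith : chainFun O V x - ε < chainFun O V x)
      obtain ⟨m, hm⟩ : ∃ m : ℕ, ((1:ℝ)/2)^m < chainFun O V x - (k₀:ℝ)/2^n₀ :=
        exists_pow_lt_of_lt_one (by linarith) (by norm_num)
      set n := n₀ + m with hn
      set k := 2^m * k₀ with hkdef
      have hkpos : 0 < k := by positivity
      have hkval : (k:ℝ)/2^n = (k₀:ℝ)/2^n₀ := by
        rw [hn, hkdef]
        push_cast
        rw [pow_add]
        field_simp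
      have hWeq : Wset O V n k = Wset O V n₀ k₀ := by
        rw [hn, hkdef]
        unfold Wset
        rw [Eset_pow_double]
      have hsmall : (1:ℝ)/2^(n+1) < chainFun O V x - (k:ℝ)/2^n := by
        rw [hkval]
        have hmm : ((1:ℝ)/2)^m = 1/2^m := by rw [div_pow, one_pow]
        rw [hmm] at hm
        have hle : (1:ℝ)/2^(n+1) ≤ 1/2^m := by
          apply one_div_le_one_div_of_le (by positivity)
          apply pow_le_pow_right₀ (by norm_num)
          omega
        linarith
      have hxnot : x ∉ Wset O V (n+1) (2*k+1) := by
        intro hxmem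
        have hle := chainFun_le (x := x) (n := n+1) (k := 2*k+1) (by omega) hxmem
        have hval : ((2*k+1 : ℕ):ℝ)/2^(n+1) = (k:ℝ)/2^n + 1/2^(n+1) := by
          push_cast
          rw [pow_succ]
          field_simp
        rw [hval] at hle
        linarith
      have hxcl : x ∉ closure (Wset O V n k) :=
        fun hmem => hxnot (Wset_closure hVo hV1 hVsq n k hmem)
      have hev : ∀ᶠ y in 𝓝 x, y ∉ Wset O V n k := by
        have : ∀ᶠ y in 𝓝 x, y ∈ (closure (Wset O V n k))ᶜ :=
          isClosed_closure.isOpen_compl.eventually_mem hxcl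
        exact this.mono fun y hy => fun hyW => hy (subset_closure hyW)
      refine hev.mono fun y hy => ?_
      have hk1 : (k:ℝ)/2^n ≤ 1 := by
        rw [hkval]
        have := chainFun_le_one (O := O) (V := V) x
        linarith
      have hge : (k:ℝ)/2^n ≤ chainFun O V y :=
        le_chainFun_of_notMem hVsq hV1 hk1 hy
      rw [hkval] at hge
      linarith
  refine (husc.and hlsc).mono fun y ⟨hy1, hy2⟩ => ?_
  rw [Real.dist_eq, abs_sub_lt_iff]
  constructor <;> linarith

theorem chainFun_one_eq_zero (h1O : (1:G) ∈ O) (hV1 : ∀ n, (1:G) ∈ V n) :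
    chainFun O V 1 = 0 := by
  have hle : ∀ n : ℕ, chainFun O V 1 ≤ 1/2^n := by
    intro n
    have h1W : (1:G) ∈ Wset O V n 1 := one_mem_Wset h1O hV1 n 1
    have := chainFun_le (x := (1:G)) (n := n) (k := 1) one_pos h1W
    simpa using this
  have h0 : chainFun O V 1 ≤ 0 := by
    by_contra h
    push_neg at h
    obtain ⟨n, hn⟩ : ∃ n : ℕ, ((1:ℝ)/2)^n < chainFun O V 1 :=
      exists_pow_lt_of_lt_one h (by norm_num)
    rw [div_pow, one_pow] at hn
    exact absurd (hle n) (by linarith)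
  exact le_antisymm h0 (chainFun_nonneg 1)

theorem chainFun_eq_one (hVsq : ∀ n, V (n+1) * V (n+1) ⊆ V n)
    (hV1 : ∀ n, (1:G) ∈ V n) {z : G} (hz : z ∉ O * (V 0)⁻¹) :
    chainFun O V z = 1 := by
  have hnot : ∀ n k : ℕ, 0 < k → (k:ℝ)/2^n ≤ 1 → z ∉ Wset O V n k := by
    intro n k hk hk1 hmem
    apply hz
    have h2n : (k:ℝ) ≤ 2^n := by
      rw [div_le_one (by positivity)] at hk1
      exact hk1
    have hkn : k ≤ 2^n := by exact_mod_cast h2n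
    have hsub : Wset O V n k ⊆ Wset O V n (2^n) :=
      mul_subset_mul_left (inv_subset_inv.2 (Eset_mono hVsq hV1 hkn))
    have := hsub hmem
    rwa [Wset, Eset_top] at this
  refine le_antisymm (chainFun_le_one z) ?_
  refine le_csInf (dyadics_nonempty z) ?_
  rintro q (rfl | ⟨n, k, hk, rfl, hx⟩)
  · exact le_refl 1
  · by_contra hlt
    push_neg at hlt
    exact hnot n k hk hlt.le hx

end Chain

section Main

variable {G : Type*} [Group G] [TopologicalSpace G] [ContinuousMul G] [T2Space G]

open ParatopAux Chain

/-- Key separation lemma: a continuous function separating `1` from `z ≠ 1`. -/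
theorem exists_chain_sep {z : G} (hz : z ≠ 1) :
    ∃ f : G → ℝ, Continuous f ∧ f 1 = 0 ∧ f z = 1 := by
  obtain ⟨A, B, hA, hB, hzA, h1B, hAB⟩ := t2_separation hz
  set U₀ := B ∩ (fun g => z * g) ⁻¹' A with hU₀def
  have hU₀o : IsOpen U₀ := hB.inter (hA.preimage (continuous_mul_left z))
  have h1U₀ : (1:G) ∈ U₀ := ⟨h1B, by simpa using hzA⟩
  obtain ⟨V, hV0, hVo, hV1, hVsq⟩ := exists_sq_seq U₀ hU₀o h1U₀
  have hzavoid : z ∉ B * (V 0)⁻¹ := by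
    rintro ⟨o, hoB, v, hv, hov⟩
    rw [Set.mem_inv] at hv
    have hvU : v⁻¹ ∈ U₀ := by rw [← hV0]; exact hv
    have hzvA : z * v⁻¹ ∈ A := hvU.2
    have hoA : o ∈ A := by
      have : o = z * v⁻¹ := by rw [← hov]; group
      rwa [this]
    exact (Set.disjoint_left.1 hAB hoA) hoB
  refine ⟨chainFun B V, continuous_chainFun hB hVo hV1 hVsq,
    chainFun_one_eq_zero h1B hV1, chainFun_eq_one hVsq hV1 hzavoid⟩

/-- Part 1: every Hausdorff paratopological group is functionally Hausdorff. -/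
theorem functionally_hausdorff (x y : G) (hxy : x ≠ y) :
    ∃ f : G → ℝ, Continuous f ∧ f x ≠ f y := by
  have hz : x⁻¹ * y ≠ 1 := by
    intro h
    apply hxy
    have : x * (x⁻¹ * y) = x * 1 := by rw [h]
    simpa [mul_assoc] using this.symm
  obtain ⟨f, hf, hf1, hfz⟩ := exists_chain_sep hz
  refine ⟨fun g => f (x⁻¹ * g), hf.comp (continuous_mul_left x⁻¹), ?_⟩
  simp only [inv_mul_cancel, hf1, hfz]
  norm_num

end Main

namespace Sandwich

open ParatopAux

variable {G : Type*} [Group G] [TopologicalSpace G] [ContinuousMul G]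
variable (V : ℕ → Set G)

/-- Prepending one letter to a dyadic chain set. -/
theorem Eset_prepend (hVsq : ∀ n, V (n+1) * V (n+1) ⊆ V n) (hV1 : ∀ n, (1:G) ∈ V n) :
    ∀ g a K, V a * Eset V (a+g) K ⊆ Eset V (a+g) (K + (2^(g+2) - 2)) := by
  intro g
  induction g with
  | zero =>
      intro a K
      have h1 : V a * Eset V (a+0) K ⊆ Eset V (a+0) (K+1) := by
        simpa using Eset_absorb hVsq a K
      exact h1.trans (Eset_mono hVsq hV1 (by omega))
  | succ g ih =>
      intro a K
      have h2 : (2:ℕ) ≤ 2^(g+2) := by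
        have : (2:ℕ)^1 ≤ 2^(g+2) := Nat.pow_le_pow_right (by norm_num) (by omega)
        simpa using this
      have h3 : (2:ℕ)^(g+3) = 2*2^(g+2) := by ring
      have hmono : Eset V (a+(g+1)) K ⊆ Eset V (a+(g+1)) (2*(K/2+1)) :=
        Eset_mono hVsq hV1 (by omega)
      have hdd : Eset V (a+(g+1)) (2*(K/2+1)) = Eset V (a+g) (K/2+1) := by
        have h : a + (g+1) = (a+g) + 1 := by omega
        rw [h, Eset_double]
      calc V a * Eset V (a+(g+1)) K
          ⊆ V a * Eset V (a+g) (K/2+1) := by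
            rw [← hdd]; exact mul_subset_mul_left hmono
        _ ⊆ Eset V (a+g) ((K/2+1) + (2^(g+2) - 2)) := ih a (K/2+1)
        _ = Eset V ((a+g)+1) (2*((K/2+1) + (2^(g+2) - 2))) := (Eset_double _ _).symm
        _ ⊆ Eset V ((a+g)+1) (K + (2^(g+3) - 2)) := Eset_mono hVsq hV1 (by omega)
        _ = Eset V (a+(g+1)) (K + (2^(g+3) - 2)) := by
            rw [show (a+g)+1 = a+(g+1) by omega]

/-- The set of costs of sandwich chains from `x` to `y`. -/
def chainCost (x y : G) : Set ℝ :=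
  {q : ℝ | ∃ (n : ℕ) (p : ℕ → G) (s : ℕ → ℕ),
     p 0 = x ∧ p n = y ∧
     (∀ i, i < n → ∃ b e, b ∈ V (s i) ∧ e ∈ V (s i) ∧ p (i+1) = b * p i * e⁻¹) ∧
     q = ∑ i ∈ Finset.range n, ((1:ℝ)/2^(s i))}

/-- One-sided sandwich-chain distance. -/
noncomputable def dzero (x y : G) : ℝ := sInf ({1} ∪ chainCost V x y)

/-- The symmetrized distance. -/
noncomputable def dd (x y : G) : ℝ := max (dzero V x y) (dzero V y x)

variable {V}

theorem chainCost_nonneg {x y : G} {q : ℝ} (h : q ∈ chainCost V x y) : 0 ≤ q := by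
  obtain ⟨n, p, s, -, -, -, rfl⟩ := h
  positivity

theorem dzero_bddBelow (x y : G) : BddBelow ({1} ∪ chainCost V x y) := by
  refine ⟨0, ?_⟩
  rintro q (rfl | h)
  · norm_num
  · exact chainCost_nonneg h

theorem dzero_nonneg (x y : G) : 0 ≤ dzero V x y := by
  refine le_csInf ⟨1, Or.inl rfl⟩ ?_
  rintro q (rfl | h)
  · norm_num
  · exact chainCost_nonneg h

theorem dzero_le_one (x y : G) : dzero V x y ≤ 1 :=
  csInf_le (dzero_bddBelow x y) (Or.inl rfl)

theorem dzero_le_cost {x y : G} {q : ℝ} (h : q ∈ chainCost V x y) : dzero V x y ≤ q :=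
  csInf_le (dzero_bddBelow x y) (Or.inr h)

theorem zero_mem_chainCost (x : G) : (0:ℝ) ∈ chainCost V x x :=
  ⟨0, fun _ => x, fun _ => 0, rfl, rfl, fun i hi => by omega, by simp⟩

theorem dzero_self (x : G) : dzero V x x = 0 :=
  le_antisymm (dzero_le_cost (zero_mem_chainCost x)) (dzero_nonneg x x)

theorem chainCost_single {x : G} {b e : G} {j : ℕ} (hb : b ∈ V j) (he : e ∈ V j) :
    (1:ℝ)/2^j ∈ chainCost V x (b * x * e⁻¹) := by
  refine ⟨1, fun i => if i = 0 then x else b * x * e⁻¹, fun _ => j, by simp, by simp, ?_, by simp⟩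
  intro i hi
  have : i = 0 := by omega
  subst this
  exact ⟨b, e, hb, he, by simp⟩

theorem chainCost_concat {x y z : G} {q₁ q₂ : ℝ}
    (h₁ : q₁ ∈ chainCost V x y) (h₂ : q₂ ∈ chainCost V y z) :
    q₁ + q₂ ∈ chainCost V x z := by
  obtain ⟨n₁, p₁, s₁, hp₁0, hp₁n, hstep₁, rfl⟩ := h₁
  obtain ⟨n₂, p₂, s₂, hp₂0, hp₂n, hstep₂, rfl⟩ := h₂
  refine ⟨n₁ + n₂, fun i => if i < n₁ then p₁ i else p₂ (i - n₁),
    fun i => if i < n₁ then s₁ i else s₂ (i - n₁), ?_, ?_, ?_, ?_⟩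
  · by_cases h : 0 < n₁
    · simpa [h] using hp₁0
    · have hn₁ : n₁ = 0 := by omega
      have : y = x := by rw [← hp₁n, hn₁, hp₁0]
      simp [hn₁, hp₂0, this]
  · have h : ¬ (n₁ + n₂ < n₁) := by omega
    simp only [h, if_false]
    rw [show n₁ + n₂ - n₁ = n₂ by omega, hp₂n]
  · intro i hi
    by_cases h1 : i + 1 < n₁
    · have h0 : i < n₁ := by omega
      obtain ⟨b, e, hb, he, hstep⟩ := hstep₁ i (by omega)
      exact ⟨b, e, by simpa [h0] using hb, by simpa [h0] using he, by simpa [h1, h0] using hstep⟩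
    · by_cases h0 : i < n₁
      · -- i + 1 = n₁
        have hin : i + 1 = n₁ := by omega
        obtain ⟨b, e, hb, he, hstep⟩ := hstep₁ i h0
        refine ⟨b, e, by simpa [h0] using hb, by simpa [h0] using he, ?_⟩
        have : p₂ (i + 1 - n₁) = p₁ (i+1) := by
          rw [hin]
          simp [hp₂0, ← hp₁n]
        simp only [h1, if_false, h0, if_pos, this]
        exact hstep
      · -- i ≥ n₁
        push_neg at h0
        obtain ⟨b, e, hb, he, hstep⟩ := hstep₂ (i - n₁) (by omega)
        refine ⟨b, e, by simpa [h0, not_lt.2 h0] using hb, by simpa [not_lt.2 h0] using he, ?_⟩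
        have h2 : ¬ (i + 1 < n₁) := by omega
        have h3 : i + 1 - n₁ = (i - n₁) + 1 := by omega
        simp only [h2, if_false, not_lt.2 h0, h3]
        exact hstep
  · rw [Finset.sum_range_add]
    congr 1
    · refine Finset.sum_congr rfl fun i hi => ?_
      have h := Finset.mem_range.1 hi
      simp [h]
    · refine Finset.sum_congr rfl fun i hi => ?_
      have h : ¬ (n₁ + i < n₁) := by omega
      have h2 : n₁ + i - n₁ = i := by omega
      simp [h, h2]

theorem exists_cost_lt {x y : G} {c : ℝ} (h : dzero V x y < c) (hc : c ≤ 1) :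
    ∃ q ∈ chainCost V x y, q < c := by
  obtain ⟨q, hq, hql⟩ :=
    exists_lt_of_csInf_lt (s := {1} ∪ chainCost V x y) ⟨1, Or.inl rfl⟩ h
  rcases hq with rfl | hq
  · exfalso; linarith
  · exact ⟨q, hq, hql⟩

theorem dzero_triangle (x y z : G) : dzero V x z ≤ dzero V x y + dzero V y z := by
  by_cases hbig : 1 ≤ dzero V x y + dzero V y z
  · exact (dzero_le_one x z).trans hbig
  · push_neg at hbig
    have hxy1 : dzero V x y < 1 := by
      have := dzero_nonneg (V := V) y z; linarith
    have hyz1 : dzero V y z < 1 := by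
      have := dzero_nonneg (V := V) x y; linarith
    refine le_of_forall_pos_le_add ?_
    intro ε hε
    set δ := min (ε/2) (min ((1 - dzero V x y)/2) ((1 - dzero V y z)/2)) with hδ
    have hδ0 : 0 < δ := by
      apply lt_min (by linarith)
      exact lt_min (by linarith) (by linarith)
    have hδ1 : δ ≤ (1 - dzero V x y)/2 := (min_le_right _ _).trans (min_le_left _ _)
    have hδ2 : δ ≤ (1 - dzero V y z)/2 := (min_le_right _ _).trans (min_le_right _ _)
    obtain ⟨q₁, hq₁, hq₁lt⟩ :=
      exists_cost_lt (show dzero V x y < dzero V x y + δ by linarith) (by linarith)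
    obtain ⟨q₂, hq₂, hq₂lt⟩ :=
      exists_cost_lt (show dzero V y z < dzero V y z + δ by linarith) (by linarith)
    have := dzero_le_cost (chainCost_concat hq₁ hq₂)
    have hδε : δ ≤ ε/2 := min_le_left _ _
    linarith

theorem dd_comm (x y : G) : dd V x y = dd V y x := max_comm _ _

theorem dd_self (x : G) : dd V x x = 0 := by
  simp [dd, dzero_self]

theorem dd_nonneg (x y : G) : 0 ≤ dd V x y :=
  le_max_of_le_left (dzero_nonneg x y)

theorem dd_triangle (x y z : G) : dd V x z ≤ dd V x y + dd V y z := by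
  refine max_le ?_ ?_
  · calc dzero V x z ≤ dzero V x y + dzero V y z := dzero_triangle x y z
      _ ≤ dd V x y + dd V y z := add_le_add (le_max_left _ _) (le_max_left _ _)
  · calc dzero V z x ≤ dzero V z y + dzero V y x := dzero_triangle z y x
      _ ≤ dd V y z + dd V x y := add_le_add (le_max_right _ _) (le_max_right _ _)
      _ = dd V x y + dd V y z := add_comm _ _

/-- Collapsing a cheap sandwich chain into a single `V m`-sandwich. -/
theorem chain_collapse (hVsq : ∀ n, V (n+1) * V (n+1) ⊆ V n) (hV1 : ∀ n, (1:G) ∈ V n)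
    {m n : ℕ} {x y : G} {p : ℕ → G} {s : ℕ → ℕ}
    (hp0 : p 0 = x) (hpn : p n = y)
    (hstep : ∀ i, i < n → ∃ b e, b ∈ V (s i) ∧ e ∈ V (s i) ∧ p (i+1) = b * p i * e⁻¹)
    (hcost : ∑ i ∈ Finset.range n, ((1:ℝ)/2^(s i)) < 1/2^(m+2)) :
    ∃ b e, b ∈ V m ∧ e ∈ V m ∧ y = b * x * e⁻¹ := by
  classical
  set N := m + 2 + Finset.sup (Finset.range n) s with hN
  have hsN : ∀ i, i < n → s i ≤ N := by
    intro i hi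
    have := Finset.le_sup (f := s) (Finset.mem_range.2 hi)
    omega
  have hmN : m ≤ N := by omega
  have claim : ∀ k, k ≤ n → ∃ (l r : G) (K₁ K₂ : ℕ),
      l ∈ Eset V N K₁ ∧ r ∈ Eset V N K₂ ∧ p k = l * x * r⁻¹ ∧
      (K₁:ℝ) ≤ (∑ i ∈ Finset.range k, (1:ℝ)/2^(s i)) * 2^(N+2) ∧
      (K₂:ℝ) ≤ (∑ i ∈ Finset.range k, (1:ℝ)/2^(s i)) * 2^(N+2) := by
    intro k
    induction k with
    | zero =>
        intro _
        refine ⟨1, 1, 0, 0, ?_, ?_, ?_, by simp, by simp⟩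
        · rw [Eset_zero]; rfl
        · rw [Eset_zero]; rfl
        · rw [hp0]; group
    | succ k ih =>
        intro hk
        obtain ⟨l, r, K₁, K₂, hl, hr, hpk, hK₁, hK₂⟩ := ih (by omega)
        obtain ⟨b, e, hb, he, hstepk⟩ := hstep k (by omega)
        have hskN : s k ≤ N := hsN k (by omega)
        set g := N - s k with hgdef
        have hg : s k + g = N := by omega
        have hpre₁ : b * l ∈ Eset V N (K₁ + (2^(g+2) - 2)) := by
          have := Eset_prepend (V := V) hVsq hV1 g (s k) K₁
          rw [hg] at this
          exact this (mul_mem_mul hb hl)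
        have hpre₂ : e * r ∈ Eset V N (K₂ + (2^(g+2) - 2)) := by
          have := Eset_prepend (V := V) hVsq hV1 g (s k) K₂
          rw [hg] at this
          exact this (mul_mem_mul he hr)
        have h2le : (2:ℕ) ≤ 2^(g+2) := by
          have : (2:ℕ)^1 ≤ 2^(g+2) := Nat.pow_le_pow_right (by norm_num) (by omega)
          simpa using this
        have hgpow : (2:ℝ)^(s k) * 2^(g+2) = 2^(N+2) := by
          rw [← pow_add]
          congr 1
          omega
        have hsk0 : (0:ℝ) < 2^(s k) := by positivity
        have h5 : (1:ℝ)/2^(s k) * 2^(N+2) = 2^(g+2) := by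
          rw [← hgpow]
          field_simp
        have hbound : ∀ K : ℕ, (K:ℝ) ≤ (∑ i ∈ Finset.range k, (1:ℝ)/2^(s i)) * 2^(N+2) →
            ((K + (2^(g+2) - 2) : ℕ) : ℝ) ≤
              (∑ i ∈ Finset.range (k+1), (1:ℝ)/2^(s i)) * 2^(N+2) := by
          intro K hK
          have hcast : ((K + (2^(g+2) - 2) : ℕ) : ℝ) = (K:ℝ) + ((2:ℝ)^(g+2) - 2) := by
            have : ((2^(g+2) - 2 : ℕ) : ℝ) = (2:ℝ)^(g+2) - 2 := by
              rw [Nat.cast_sub h2le]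
              push_cast
              ring
            push_cast [Nat.cast_sub h2le]
            ring
          rw [hcast, Finset.sum_range_succ, add_mul, h5]
          linarith
        refine ⟨b * l, e * r, K₁ + (2^(g+2) - 2), K₂ + (2^(g+2) - 2),
          hpre₁, hpre₂, ?_, hbound K₁ hK₁, hbound K₂ hK₂⟩
        rw [hstepk, hpk]
        group
  obtain ⟨l, r, K₁, K₂, hl, hr, hpn', hK₁, hK₂⟩ := claim n le_rfl
  have htot : (∑ i ∈ Finset.range n, (1:ℝ)/2^(s i)) * 2^(N+2) < (2:ℝ)^(N-m) := by
    have hpos : (0:ℝ) < 2^(N+2) := by positivity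
    have h1 : (∑ i ∈ Finset.range n, (1:ℝ)/2^(s i)) * 2^(N+2) < (1/2^(m+2)) * 2^(N+2) :=
      mul_lt_mul_of_pos_right hcost hpos
    have h2 : (1/2^(m+2) : ℝ) * 2^(N+2) = 2^(N-m) := by
      have hc : (2:ℝ)^(m+2) * 2^(N-m) = 2^(N+2) := by
        rw [← pow_add]
        congr 1
        omega
      have hm2 : (0:ℝ) < 2^(m+2) := by positivity
      field_simp
      linarith
    rw [h2] at h1
    exact h1
  have hKle : ∀ K : ℕ, (K:ℝ) ≤ (∑ i ∈ Finset.range n, (1:ℝ)/2^(s i)) * 2^(N+2) →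
      K ≤ 2^(N-m) := by
    intro K hK
    have : (K:ℝ) < ((2^(N-m) : ℕ) : ℝ) := by
      push_cast
      linarith
    exact_mod_cast this.le
  have hVm : Eset V N (2^(N-m)) = V m := by
    have h3 : m + (N - m) = N := by omega
    have h4 := Eset_pow_double (V := V) (N-m) m 1
    rw [h3, mul_one] at h4
    rw [h4, Eset_one]
  have hlm : l ∈ V m := by
    rw [← hVm]
    exact Eset_mono hVsq hV1 (hKle K₁ hK₁) hl
  have hrm : r ∈ V m := by
    rw [← hVm]
    exact Eset_mono hVsq hV1 (hKle K₂ hK₂) hr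
  exact ⟨l, r, hlm, hrm, by rw [← hpn, hpn']⟩

/-- A countable decreasing base at `1` with the square property. -/
theorem exists_good_base [FirstCountableTopology G] :
    ∃ V : ℕ → Set G, (∀ n, IsOpen (V n)) ∧ (∀ n, (1:G) ∈ V n) ∧
      (∀ n, V (n+1) * V (n+1) ⊆ V n) ∧ (∀ n k, n ≤ k → V k ⊆ V n) ∧
      (∀ N ∈ 𝓝 (1:G), ∃ n, V n ⊆ N) := by
  obtain ⟨B, hB⟩ := (𝓝 (1:G)).exists_antitone_basis
  obtain ⟨U₀, hU₀B, hU₀o, hU₀1⟩ := mem_nhds_iff.1 (hB.mem 0)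
  have step : ∀ (n : ℕ) (t : {s : Set G // IsOpen s ∧ (1:G) ∈ s}),
      ∃ t' : {s : Set G // IsOpen s ∧ (1:G) ∈ s}, t'.1 * t'.1 ⊆ t.1 ∩ B (n+1) := by
    rintro n ⟨s, hs, h1s⟩
    have hmem : s ∩ B (n+1) ∈ 𝓝 (1:G) :=
      Filter.inter_mem (hs.mem_nhds h1s) (hB.mem (n+1))
    rcases exists_open_nhds_one_mul_subset hmem with ⟨W, hW, h1W, hWW⟩
    exact ⟨⟨W, hW, h1W⟩, hWW⟩
  choose F hF using step
  set Vs : ℕ → {s : Set G // IsOpen s ∧ (1:G) ∈ s} :=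
    fun n => Nat.rec ⟨U₀, hU₀o, hU₀1⟩ F n with hVs
  refine ⟨fun n => (Vs n).1, fun n => (Vs n).2.1, fun n => (Vs n).2.2, ?_, ?_, ?_⟩
  · intro n
    show (Vs (n+1)).1 * (Vs (n+1)).1 ⊆ (Vs n).1
    have h : Vs (n+1) = F n (Vs n) := rfl
    rw [h]
    exact (hF n (Vs n)).trans inter_subset_left
  · -- antitone
    have hstep : ∀ n, (Vs (n+1)).1 ⊆ (Vs n).1 := by
      intro n
      have h1 : (Vs (n+1)).1 ⊆ (Vs (n+1)).1 * (Vs (n+1)).1 := by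
        intro w hw
        have : w * 1 ∈ (Vs (n+1)).1 * (Vs (n+1)).1 := mul_mem_mul hw (Vs (n+1)).2.2
        simpa using this
      have : Vs (n+1) = F n (Vs n) := rfl
      rw [this] at h1 ⊢
      exact h1.trans ((hF n (Vs n)).trans inter_subset_left)
    intro n k hnk
    show (Vs k).1 ⊆ (Vs n).1
    induction hnk with
    | refl => exact subset_rfl
    | step h ih => exact (hstep _).trans ih
  · -- base property
    have hsubB : ∀ n, (Vs n).1 ⊆ B n := by
      intro n
      cases n with
      | zero => exact hU₀B
      | succ n =>
          have h1 : (Vs (n+1)).1 ⊆ (Vs (n+1)).1 * (Vs (n+1)).1 := by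
            intro w hw
            have : w * 1 ∈ (Vs (n+1)).1 * (Vs (n+1)).1 := mul_mem_mul hw (Vs (n+1)).2.2
            simpa using this
          have heq : Vs (n+1) = F n (Vs n) := rfl
          rw [heq] at h1 ⊢
          exact h1.trans ((hF n (Vs n)).trans inter_subset_right)
    intro N hN
    rcases hB.toHasBasis.mem_iff.1 hN with ⟨i, -, hiN⟩
    exact ⟨i, show (Vs i).1 ⊆ N from (hsubB i).trans hiN⟩

theorem tendsto_of_mem_base
    (hbase : ∀ N ∈ 𝓝 (1:G), ∃ n, V n ⊆ N) (hanti : ∀ n k, n ≤ k → V k ⊆ V n)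
    {b : ℕ → G} (hb : ∀ n, b n ∈ V n) : Filter.Tendsto b Filter.atTop (𝓝 1) := by
  intro N hN
  rcases hbase N hN with ⟨n₀, hn₀⟩
  rw [Filter.mem_map]
  refine Filter.mem_of_superset (Filter.Ici_mem_atTop n₀) ?_
  intro k hk
  exact hn₀ (hanti n₀ k hk (hb k))

theorem exists_conj_index (hVo : ∀ n, IsOpen (V n)) (hV1 : ∀ n, (1:G) ∈ V n)
    (hbase : ∀ N ∈ 𝓝 (1:G), ∃ n, V n ⊆ N) (x : G) (n : ℕ) :
    ∃ j, ∀ v ∈ V j, x * v * x⁻¹ ∈ V n := by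
  have hc : Continuous fun v : G => x * v * x⁻¹ :=
    (continuous_mul_right x⁻¹).comp (continuous_mul_left x)
  have hmem : (fun v : G => x * v * x⁻¹) ⁻¹' (V n) ∈ 𝓝 (1:G) := by
    have h2 : Filter.Tendsto (fun v : G => x * v * x⁻¹) (𝓝 1) (𝓝 1) := by
      have := hc.continuousAt (x := (1:G))
      simpa [ContinuousAt] using this
    exact h2 ((hVo n).mem_nhds (hV1 n))
  rcases hbase _ hmem with ⟨j, hj⟩
  exact ⟨j, fun v hv => hj hv⟩

theorem eq_of_dzero_eq_zero [T2Space G]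
    (hVsq : ∀ n, V (n+1) * V (n+1) ⊆ V n) (hV1 : ∀ n, (1:G) ∈ V n)
    (hbase : ∀ N ∈ 𝓝 (1:G), ∃ n, V n ⊆ N) (hanti : ∀ n k, n ≤ k → V k ⊆ V n)
    {x y : G} (h : dzero V x y = 0) : x = y := by
  have key : ∀ m : ℕ, ∃ b e, b ∈ V m ∧ e ∈ V m ∧ y = b * x * e⁻¹ := by
    intro m
    have hlt : dzero V x y < 1/2^(m+2) := by rw [h]; positivity
    have hle1 : (1:ℝ)/2^(m+2) ≤ 1 := by
      rw [div_le_one (by positivity)]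
      exact one_le_pow₀ (by norm_num)
    obtain ⟨q, hq, hqlt⟩ := exists_cost_lt hlt hle1
    obtain ⟨n, p, s, hp0, hpn, hstep, rfl⟩ := hq
    exact chain_collapse hVsq hV1 hp0 hpn hstep hqlt
  choose b e hb he hxy using key
  have hbt := tendsto_of_mem_base hbase hanti hb
  have het := tendsto_of_mem_base hbase hanti he
  have h1 : Filter.Tendsto (fun m => y * e m) Filter.atTop (𝓝 y) := by
    simpa using het.const_mul y
  have h2 : Filter.Tendsto (fun m => b m * x) Filter.atTop (𝓝 x) := by
    simpa using hbt.mul_const x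
  have heq : (fun m => y * e m) = fun m => b m * x := by
    funext m
    rw [hxy m]
    group
  rw [heq] at h1
  exact (tendsto_nhds_unique h1 h2).symm

lemma metric_open_char {X : Type*} (m' : PseudoMetricSpace X) (t : Set X)
    (h : IsOpen[m'.toUniformSpace.toTopologicalSpace] t) (x : X) (hx : x ∈ t) :
    ∃ ε > 0, ∀ y, @dist X m'.toDist y x < ε → y ∈ t := by
  letI := m'
  rcases Metric.isOpen_iff.1 h x hx with ⟨ε, hε, hball⟩
  exact ⟨ε, hε, fun y hy => hball (Metric.mem_ball.2 hy)⟩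

end Sandwich

open Topology

/-- Corollary `last`. Every Hausdorff paratopological group
is functionally Hausdorff; and if moreover it is first countable, then it is
submetrizable (there is a metric whose induced topology is coarser than that
of `G`). -/
theorem functionallyHausdorff_and_submetrizable_paratopologicalGroup {G : Type*}
    [Group G] [TopologicalSpace G] [ContinuousMul G] [T2Space G] :
    (∀ x y : G, x ≠ y → ∃ f : G → ℝ, Continuous f ∧ f x ≠ f y) ∧
      (FirstCountableTopology G →
        ∃ m : MetricSpace G,
          ∀ t : Set G, IsOpen[m.toUniformSpace.toTopologicalSpace] t →
            IsOpen t) := by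
  constructor
  · exact fun x y hxy => functionally_hausdorff x y hxy
  · intro hfc
    obtain ⟨V, hVo, hV1, hVsq, hanti, hbase⟩ := Sandwich.exists_good_base (G := G)
    refine ⟨{ dist := Sandwich.dd V
              dist_self := Sandwich.dd_self
              dist_comm := Sandwich.dd_comm
              dist_triangle := Sandwich.dd_triangle
              eq_of_dist_eq_zero := ?_ }, ?_⟩
    · intro x y hxy
      have hdd : Sandwich.dd V x y = 0 := hxy
      have h0 : Sandwich.dzero V x y = 0 := by
        have h1 := Sandwich.dzero_nonneg (V := V) x y
        have h2 : Sandwich.dzero V x y ≤ Sandwich.dd V x y := le_max_left _ _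
        rw [hdd] at h2
        linarith
      exact Sandwich.eq_of_dzero_eq_zero hVsq hV1 hbase hanti h0
    · intro t ht
      rw [isOpen_iff_mem_nhds]
      intro x hx
      obtain ⟨ε, hε, hball⟩ := Sandwich.metric_open_char _ t ht x hx
      obtain ⟨n, hn⟩ : ∃ n : ℕ, (1:ℝ)/2^n < ε := by
        obtain ⟨n, hn⟩ := exists_pow_lt_of_lt_one hε (by norm_num : (1:ℝ)/2 < 1)
        exact ⟨n, by rwa [div_pow, one_pow] at hn⟩
      obtain ⟨j₀, hj₀⟩ := Sandwich.exists_conj_index hVo hV1 hbase x n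
      set j := max j₀ n with hj
      have hsubt : ∀ v ∈ V j, x * v ∈ t := by
        intro v hv
        have hvj₀ : v ∈ V j₀ := hanti _ _ (le_max_left _ _) hv
        have hvb : x*v*x⁻¹ ∈ V n := hj₀ v hvj₀
        have h1 : Sandwich.dzero V x (x*v) ≤ 1/2^n := by
          apply Sandwich.dzero_le_cost
          have hmem := Sandwich.chainCost_single (V := V) (x := x) (j := n) hvb (hV1 n)
          have heq : (x*v*x⁻¹) * x * (1:G)⁻¹ = x * v := by group
          rwa [heq] at hmem
        have h2 : Sandwich.dzero V (x*v) x ≤ 1/2^j := by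
          apply Sandwich.dzero_le_cost
          have hmem := Sandwich.chainCost_single (V := V) (x := x*v) (j := j) (hV1 j) hv
          have heq : (1:G) * (x*v) * v⁻¹ = x := by group
          rwa [heq] at hmem
        have hjn : (1:ℝ)/2^j ≤ 1/2^n := by
          apply div_le_div_of_nonneg_left (by norm_num) (by positivity)
          apply pow_le_pow_right₀ (by norm_num)
          exact le_max_right _ _
        have hlt : Sandwich.dd V (x*v) x < ε := by
          have : Sandwich.dd V (x*v) x ≤ 1/2^n := max_le (h2.trans hjn) h1
          linarith
        exact hball (x*v) hlt
      have himg : (fun g => x * g) '' (V j) ∈ 𝓝 x := by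
        have hopen : IsOpen ((fun g => x * g) '' (V j)) := (isOpenMap_mul_left x) _ (hVo j)
        exact hopen.mem_nhds ⟨1, hV1 j, by simp⟩
      refine Filter.mem_of_superset himg ?_
      rintro _ ⟨v, hv, rfl⟩
      exact hsubt v hv
end
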